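/- arXiv:1807.11347 — 15 statements merged into one kernel-verified Lean document; each statement's English description precedes it below -/
import Mathlib

section
/- Let p be an odd prime, e ≥ 1, q = p^e, l ≥ 1, and f : F_q^2 → F_q^l. Then the map φ from F_q × F_q^l to itself given by φ(x, y) = (x, y - (1/2)·f(0,0)) is an isomorphism from the digraph D(q;f) to the digraph D(q;f₀), where f₀(x,y) = f(x,y) - f(0,0); that is, φ is a bijection and ((x₁,x),(y₁,y)) is an arc of D(q;f) if and only if (φ(x₁,x), φ(y₁,y)) is an arc of D(q;f₀). -/
/-- For odd `q = p^e`, the map `φ(x, y) = (x, y - (1/2)·f(0,0))` is an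
isomorphism from the digraph `D(q;f)` to `D(q;f₀)`, where `f₀(x,y) = f(x,y) - f(0,0)`:
it is a bijection, and `(x₁,x) → (y₁,y)` is an arc of `D(q;f)` iff the images form
an arc of `D(q;f₀)`. -/
theorem stmt_0 {p e l : ℕ} (hp : p.Prime) (hodd : Odd p) (he : 1 ≤ e) (hl : 1 ≤ l)
    {F : Type*} [Field F] [Fintype F] (hF : Fintype.card F = p ^ e)
    (f : F × F → Fin l → F) :
    Function.Bijective
      (fun z : F × (Fin l → F) => (z.1, z.2 - (2 : F)⁻¹ • f (0, 0))) ∧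
    ∀ (x₁ y₁ : F) (x y : Fin l → F),
      x + y = f (x₁, y₁) ↔
        (x - (2 : F)⁻¹ • f (0, 0)) + (y - (2 : F)⁻¹ • f (0, 0))
          = f (x₁, y₁) - f (0, 0) := by
  have h2 : (2 : F) ≠ 0 := by
    apply Ring.two_ne_zero
    intro hchar
    obtain ⟨n, hn, hcard⟩ := FiniteField.card F (ringChar F)
    rw [hchar] at hcard
    have hodd' : Odd (Fintype.card F) := hF ▸ hodd.pow
    rw [hcard] at hodd'
    exact (Nat.not_even_iff_odd.mpr hodd') (Nat.even_pow.mpr ⟨even_two, n.ne_zero⟩)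
  constructor
  · constructor
    · intro a b hab
      simp only [Prod.mk.injEq] at hab
      exact Prod.ext hab.1 (by have := hab.2; linear_combination (norm := abel) this)
    · intro z
      exact ⟨(z.1, z.2 + (2 : F)⁻¹ • f (0, 0)), by simp⟩
  · intro x₁ y₁ x y
    have key : (2 : F)⁻¹ • f (0, 0) + (2 : F)⁻¹ • f (0, 0) = f (0, 0) := by
      rw [← add_smul]
      norm_num
      rw [← two_mul, mul_inv_cancel₀ h2, one_smul]
    constructor
    · intro h
      rw [sub_add_sub_comm, h, key]
    · intro h
      rw [sub_add_sub_comm, key] at h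
      exact sub_left_injective h
end

section
/- Let p be an odd prime, e ≥ 1, q = p^e, l ≥ 1, and f₀ : F_q^2 → F_q^l with f₀(0,0) = 0. Then for every vertex (u, v) of D(q;f₀), every a ∈ F_q, and every y ∈ h(a) - g(u) + W₀, the vertex (a, v + y) is reachable from (u, v) in D(q;f₀). -/
open Relation

section Aux

variable {V M : Type*} [AddCommGroup M] [Zero V] (f : V × V → M)

private theorem reach2 (u a : V) (v : M) :
    ReflTransGen (fun z w : V × M => z.2 + w.2 = f (z.1, w.1))
      (u, v) (a, v + f (0, a) - f (u, 0)) := by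
  refine ReflTransGen.head (b := (0, f (u, 0) - v)) ?_ (ReflTransGen.single ?_) <;>
    · dsimp only
      abel

private theorem reach6 (h00 : f (0, 0) = 0) (a x y : V) (v : M) :
    ReflTransGen (fun z w : V × M => z.2 + w.2 = f (z.1, w.1))
      (a, v) (a, v + (f (0, a) - f (a, 0)) - (f (x, y) - f (y, 0) - f (0, x))) := by
  refine ReflTransGen.head (b := (0, f (a, 0) - v)) ?_
    (ReflTransGen.head (b := (x, f (0, x) - (f (a, 0) - v))) ?_
    (ReflTransGen.head (b := (y, f (x, y) - (f (0, x) - (f (a, 0) - v)))) ?_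
    (ReflTransGen.head (b := (0, f (y, 0) - (f (x, y) - (f (0, x) - (f (a, 0) - v))))) ?_
    (ReflTransGen.head (b := (0, f (0, 0) - (f (y, 0) - (f (x, y) - (f (0, x) - (f (a, 0) - v)))))) ?_
    (ReflTransGen.single ?_))))) <;>
    · dsimp only
      try rw [h00]
      abel

omit [Zero V] in
private theorem reach_nsmul (a : V) (w : M)
    (hw : ∀ v : M, ReflTransGen (fun z w : V × M => z.2 + w.2 = f (z.1, w.1)) (a, v) (a, v + w)) :
    ∀ (n : ℕ) (v : M),
      ReflTransGen (fun z w : V × M => z.2 + w.2 = f (z.1, w.1)) (a, v) (a, v + n • w) := by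
  intro n
  induction n with
  | zero => intro v; simpa using ReflTransGen.refl
  | succ n ih =>
    intro v
    have h1 := (hw v).trans (ih (v + w))
    have heq : v + w + n • w = v + (n + 1) • w := by rw [succ_nsmul]; abel
    rwa [heq] at h1

end Aux

/-- For odd `q = p^e` and `f₀` with `f₀(0,0) = 0`, every vertex
`(a, v + y)` with `y ∈ h(a) - g(u) + W₀` is reachable from `(u, v)` in `D(q;f₀)`. -/
theorem stmt_1 {p e l : ℕ} (hp : p.Prime) (hodd : Odd p) (he : 1 ≤ e) (hl : 1 ≤ l)
    {F : Type*} [Field F] [Fintype F] [Algebra (ZMod p) F]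
    (hF : Fintype.card F = p ^ e)
    (f₀ : F × F → Fin l → F) (hf₀ : f₀ (0, 0) = 0)
    (g h : F → Fin l → F) (hg : ∀ t, g t = f₀ (t, 0)) (hh : ∀ t, h t = f₀ (0, t))
    (W₀ : Submodule (ZMod p) (Fin l → F))
    (hW₀ : W₀ = Submodule.span (ZMod p)
      (Set.range fun xy : F × F => f₀ xy - g xy.2 - h xy.1))
    (u : F) (v : Fin l → F) (a : F) (y : Fin l → F)
    (hy : ∃ w ∈ W₀, y = h a - g u + w) :
    ReflTransGen (fun z w : F × (Fin l → F) => z.2 + w.2 = f₀ (z.1, w.1))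
      (u, v) (a, v + y) := by
  haveI : Fact p.Prime := ⟨hp⟩
  haveI hchar : CharP F p :=
    charP_of_injective_algebraMap (algebraMap (ZMod p) F).injective p
  obtain ⟨w, hwW, rfl⟩ := hy
  have hp0 : ∀ z : Fin l → F, p • z = 0 := by
    intro z
    funext i
    simp only [Pi.smul_apply, nsmul_eq_mul, Pi.zero_apply]
    rw [CharP.cast_eq_zero, zero_mul]
  have hpred : p - 1 + 1 = p := Nat.succ_pred_eq_of_pos hp.pos
  -- key loop lemma
  have hloop : ∀ w' ∈ W₀, ∀ (b : F) (v' : Fin l → F),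
      ReflTransGen (fun z w : F × (Fin l → F) => z.2 + w.2 = f₀ (z.1, w.1))
        (b, v') (b, v' + w') := by
    rw [hW₀]
    intro w' hw'
    induction hw' using Submodule.span_induction with
    | mem s hs =>
      obtain ⟨⟨x, yy⟩, rfl⟩ := hs
      intro b v'
      set δ : Fin l → F := f₀ (0, b) - f₀ (b, 0) with hδ
      set s : Fin l → F := f₀ (x, yy) - g yy - h x with hsdef
      have hδmem : ∀ v₀ : Fin l → F,
          ReflTransGen (fun z w : F × (Fin l → F) => z.2 + w.2 = f₀ (z.1, w.1))
            (b, v₀) (b, v₀ + δ) := by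
        intro v₀
        have h1 := reach2 f₀ b b v₀
        have heq : v₀ + f₀ (0, b) - f₀ (b, 0) = v₀ + δ := by rw [hδ]; abel
        rwa [heq] at h1
      have hδsmem : ∀ v₀ : Fin l → F,
          ReflTransGen (fun z w : F × (Fin l → F) => z.2 + w.2 = f₀ (z.1, w.1))
            (b, v₀) (b, v₀ + (δ - s)) := by
        intro v₀
        have h1 := reach6 f₀ hf₀ b x yy v₀
        have heq : v₀ + (f₀ (0, b) - f₀ (b, 0)) - (f₀ (x, yy) - f₀ (yy, 0) - f₀ (0, x))
            = v₀ + (δ - s) := by rw [hδ, hsdef, hg, hh]; abel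
        rwa [heq] at h1
      have hneg : ∀ v₀ : Fin l → F,
          ReflTransGen (fun z w : F × (Fin l → F) => z.2 + w.2 = f₀ (z.1, w.1))
            (b, v₀) (b, v₀ + (-s)) := by
        intro v₀
        have h1 := (reach_nsmul f₀ b δ hδmem (p - 1) v₀).trans
          (hδsmem (v₀ + (p - 1) • δ))
        have hps : (p - 1) • δ + (δ - s) = p • δ - s := by
          have h2 : (p - 1) • δ + δ = p • δ := by
            rw [← hpred, succ_nsmul, hpred]
          rw [← h2]; abel
        have heq : v₀ + (p - 1) • δ + (δ - s) = v₀ + (-s) := by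
          rw [add_assoc, hps, hp0 δ]; abel
        rwa [heq] at h1
      have h3 := reach_nsmul f₀ b (-s) hneg (p - 1) v'
      have heq : v' + (p - 1) • (-s) = v' + s := by
        have h2 : (p - 1) • (-s) + (-s) = p • (-s) := by
          rw [← hpred, succ_nsmul, hpred]
        have h4 : (p - 1) • (-s) = p • (-s) + s := by rw [← h2]; abel
        rw [h4, hp0 (-s)]
        abel
      rwa [heq] at h3
    | zero => intro b v'; simpa using ReflTransGen.refl
    | add x y' hx hy' ihx ihy =>
      intro b v'
      have h1 := (ihx b v').trans (ihy b (v' + x))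
      rwa [add_assoc] at h1
    | smul c x hx ihx =>
      intro b v'
      have hcs : c • x = c.val • x := by
        conv_lhs => rw [← ZMod.natCast_rightInverse c]
        exact Nat.cast_smul_eq_nsmul _ _ _
      rw [hcs]
      exact reach_nsmul f₀ b x (fun v₀ => ihx b v₀) c.val v'
  -- main
  have h1 := reach2 f₀ u a v
  have h2 := hloop w hwW a (v + f₀ (0, a) - f₀ (u, 0))
  have h3 := h1.trans h2
  have heq : v + f₀ (0, a) - f₀ (u, 0) + w = v + (h a - g u + w) := by
    rw [hg, hh]; abel
  rwa [heq] at h3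
end

section
/- Let p be an odd prime, e ≥ 1, q = p^e, l ≥ 1, and f₀ : F_q^2 → F_q^l with f₀(0,0) = 0. Then for every vertex (u, v) of D(q;f₀), every b ∈ F_q, and every y ∈ h(b) + g(u) + W₀, the vertex (b, -v + y) is reachable from (u, v) in D(q;f₀). -/
open Relation

/-- For odd `q = p^e` and `f₀` with `f₀(0,0) = 0`, every vertex
`(b, -v + y)` with `y ∈ h(b) + g(u) + W₀` is reachable from `(u, v)` in `D(q;f₀)`. -/
theorem stmt_2 {p e l : ℕ} (hp : p.Prime) (hodd : Odd p) (he : 1 ≤ e) (hl : 1 ≤ l)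
    {F : Type*} [Field F] [Fintype F] [Algebra (ZMod p) F]
    (hF : Fintype.card F = p ^ e)
    (f₀ : F × F → Fin l → F) (hf₀ : f₀ (0, 0) = 0)
    (g h : F → Fin l → F) (hg : ∀ t, g t = f₀ (t, 0)) (hh : ∀ t, h t = f₀ (0, t))
    (W₀ : Submodule (ZMod p) (Fin l → F))
    (hW₀ : W₀ = Submodule.span (ZMod p)
      (Set.range fun xy : F × F => f₀ xy - g xy.2 - h xy.1))
    (u : F) (v : Fin l → F) (b : F) (y : Fin l → F)
    (hy : ∃ w ∈ W₀, y = h b + g u + w) :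
    ReflTransGen (fun z w : F × (Fin l → F) => z.2 + w.2 = f₀ (z.1, w.1))
      (u, v) (b, -v + y) := by
  classical
  obtain ⟨w, hwW, hyeq⟩ := hy
  set R : (F × (Fin l → F)) → (F × (Fin l → F)) → Prop :=
    fun z w => z.2 + w.2 = f₀ (z.1, w.1) with hR
  -- characteristic p
  have hpF : (p : F) = 0 := by
    have h2 : (p : F) = algebraMap (ZMod p) F (p : ZMod p) := by
      rw [map_natCast]
    rw [h2, ZMod.natCast_self, map_zero]
  have hsmul0 : ∀ a : Fin l → F, p • a = 0 := by
    intro a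
    funext i
    show p • a i = 0
    rw [nsmul_eq_mul, hpF, zero_mul]
  -- one step of the walk
  have step : ∀ (a : F) (s : Fin l → F) (c : F), R (a, s) (c, -s + f₀ (a, c)) := by
    intro a s c
    show s + (-s + f₀ (a, c)) = f₀ (a, c)
    abel
  -- the key predicate: loops at b that shift the second coordinate by w
  set P : (Fin l → F) → Prop := fun z => ∀ s : Fin l → F,
    ReflTransGen R (b, s) (b, s + z) with hPdef
  have hP0 : P 0 := by
    intro s
    simpa using ReflTransGen.refl (r := R) (a := (b, s))
  have hPadd : ∀ z₁ z₂, P z₁ → P z₂ → P (z₁ + z₂) := by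
    intro z₁ z₂ h1 h2 s
    have := (h1 s).trans (h2 (s + z₁))
    rwa [add_assoc] at this
  have hPnsmul : ∀ (n : ℕ) z, P z → P (n • z) := by
    intro n z hz
    induction n with
    | zero => simpa using hP0
    | succ k ih =>
      have := hPadd _ _ ih hz
      rwa [← succ_nsmul] at this
  -- the fundamental 6-step loop
  have hgen : ∀ x y' : F,
      P (-(f₀ (x, y') - g y' - h x) + (f₀ (0, b) - g b - h 0)) := by
    intro x y' s
    have chain : ReflTransGen R (b, s)
        (b, -(-(-(-(-(-s + f₀ (b, 0)) + f₀ (0, x)) + f₀ (x, y')) + f₀ (y', 0))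
            + f₀ (0, 0)) + f₀ (0, b)) :=
      ReflTransGen.head (step b s 0) <|
      ReflTransGen.head (step 0 _ x) <|
      ReflTransGen.head (step x _ y') <|
      ReflTransGen.head (step y' _ 0) <|
      ReflTransGen.head (step 0 _ 0) <|
      ReflTransGen.single (step 0 _ b)
    have hcoord : -(-(-(-(-(-s + f₀ (b, 0)) + f₀ (0, x)) + f₀ (x, y')) + f₀ (y', 0))
            + f₀ (0, 0)) + f₀ (0, b)
        = s + (-(f₀ (x, y') - g y' - h x) + (f₀ (0, b) - g b - h 0)) := by
      rw [hg, hg, hh, hh, hf₀]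
      abel
    rwa [hcoord] at chain
  have hgenb : P (f₀ (0, b) - g b - h 0) := by
    have h00 := hgen 0 0
    have : -(f₀ (0, 0) - g 0 - h 0) + (f₀ (0, b) - g b - h 0)
        = f₀ (0, b) - g b - h 0 := by
      rw [hg, hh, hf₀]
      abel
    rwa [this] at h00
  have hp1 : p - 1 + 1 = p := Nat.succ_pred_eq_of_pos hp.pos
  -- negatives of generators
  have hgneg : ∀ x y' : F, P (-(f₀ (x, y') - g y' - h x)) := by
    intro x y'
    have := hPadd _ _ (hgen x y') (hPnsmul (p - 1) _ hgenb)
    have heq : -(f₀ (x, y') - g y' - h x) + (f₀ (0, b) - g b - h 0)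
        + (p - 1) • (f₀ (0, b) - g b - h 0)
        = -(f₀ (x, y') - g y' - h x) := by
      rw [add_assoc, add_comm (f₀ (0, b) - g b - h 0), ← succ_nsmul, hp1, hsmul0,
        add_zero]
    rwa [heq] at this
  -- generators themselves
  have hgpos : ∀ x y' : F, P (f₀ (x, y') - g y' - h x) := by
    intro x y'
    have := hPnsmul (p - 1) _ (hgneg x y')
    have heq : (p - 1) • (-(f₀ (x, y') - g y' - h x)) = f₀ (x, y') - g y' - h x := by
      have h2 : (p - 1) • (-(f₀ (x, y') - g y' - h x))
          + (-(f₀ (x, y') - g y' - h x)) = 0 := by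
        rw [← succ_nsmul, hp1, hsmul0]
      have := add_eq_zero_iff_eq_neg.mp h2
      rwa [neg_neg] at this
    rwa [heq] at this
  -- all of W₀
  have hW : ∀ z ∈ W₀, P z := by
    rw [hW₀]
    intro z hz
    induction hz using Submodule.span_induction with
    | mem z hzmem =>
      obtain ⟨⟨x, y'⟩, rfl⟩ := hzmem
      exact hgpos x y'
    | zero => exact hP0
    | add z₁ z₂ _ _ h1 h2 => exact hPadd _ _ h1 h2
    | smul c z hzm hz' =>
      haveI : NeZero p := ⟨hp.pos.ne'⟩
      have hcv : ((c.val : ZMod p)) = c := (ZMod.natCast_val c).trans (ZMod.cast_id p c)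
      have hc : c • z = c.val • z := by
        conv_lhs => rw [← hcv]
        rw [Nat.cast_smul_eq_nsmul]
      rw [hc]
      exact hPnsmul _ _ hz'
  -- assemble
  have first : R (u, v) (b, -v + f₀ (u, b)) := step u v b
  have Pbig : P (w + (-(f₀ (u, b) - g b - h u)) + (f₀ (u, 0) - g 0 - h u)
      + (f₀ (0, b) - g b - h 0)) :=
    hPadd _ _ (hPadd _ _ (hPadd _ _ (hW w hwW) (hgneg u b)) (hgpos u 0)) hgenb
  have rest := Pbig (-v + f₀ (u, b))
  have hfin : -v + f₀ (u, b) + (w + (-(f₀ (u, b) - g b - h u)) + (f₀ (u, 0) - g 0 - h u)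
      + (f₀ (0, b) - g b - h 0)) = -v + y := by
    rw [hyeq, hg u, hg 0, hh b, hh 0, hf₀]
    abel
  rw [hfin] at rest
  exact ReflTransGen.head first rest
end

section
/- Let p be a prime, e ≥ 1, q = p^e, l ≥ 1, and f₀ : F_q^2 → F_q^l with f₀(0,0) = 0. Suppose (u,v) = (x₀, w₀) → (x₁, w₁) → ⋯ → (x_k, w_k) = (a, v + y) is a directed walk in D(q;f₀) with k ≥ 1 even. Then y ∈ -g(u) + h(a) + W₀. -/
/-- If `(u,v) = (x₀,w₀) → ⋯ → (x_k,w_k) = (a, v + y)` is a directed walk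
in `D(q;f₀)` with `k ≥ 1` even, then `y ∈ -g(u) + h(a) + W₀`. -/
theorem stmt_4 {p e l : ℕ} (hp : p.Prime) (he : 1 ≤ e) (hl : 1 ≤ l)
    {F : Type*} [Field F] [Fintype F] [Algebra (ZMod p) F]
    (hF : Fintype.card F = p ^ e)
    (f₀ : F × F → Fin l → F) (hf₀ : f₀ (0, 0) = 0)
    (g h : F → Fin l → F) (hg : ∀ t, g t = f₀ (t, 0)) (hh : ∀ t, h t = f₀ (0, t))
    (W₀ : Submodule (ZMod p) (Fin l → F))
    (hW₀ : W₀ = Submodule.span (ZMod p)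
      (Set.range fun xy : F × F => f₀ xy - g xy.2 - h xy.1))
    (k : ℕ) (hk1 : 1 ≤ k) (hkeven : Even k)
    (c : ℕ → F × (Fin l → F)) (u a : F) (v y : Fin l → F)
    (hc0 : c 0 = (u, v)) (hck : c k = (a, v + y))
    (hstep : ∀ i < k, (c i).2 + (c (i + 1)).2 = f₀ ((c i).1, (c (i + 1)).1)) :
    ∃ w ∈ W₀, y = -g u + h a + w := by
  have hmem : ∀ x z : F, f₀ (x, z) - g z - h x ∈ W₀ := by
    intro x z; rw [hW₀]; exact Submodule.subset_span ⟨(x, z), rfl⟩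
  have hg0 : g 0 = 0 := by rw [hg, hf₀]
  have hgh : ∀ t : F, g t - h t ∈ W₀ := by
    intro t
    have := hmem t 0
    rwa [← hg t, hg0, sub_zero] at this
  have key : ∀ m : ℕ, 2 * m ≤ k →
      (c (2 * m)).2 - v + g u - h (c (2 * m)).1 ∈ W₀ := by
    intro m
    induction m with
    | zero =>
      intro _
      simp only [Nat.mul_zero, hc0]
      have : v - v + g u - h u = g u - h u := by abel
      rw [this]; exact hgh u
    | succ n ih =>
      intro hle
      have hn : 2 * n ≤ k := by omega
      have h1 := hstep (2 * n) (by omega)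
      have h2 := hstep (2 * n + 1) (by omega)
      have base := ih hn
      have e : (c (2 * (n + 1))).2 - v + g u - h (c (2 * (n + 1))).1 =
          ((c (2 * n)).2 - v + g u - h (c (2 * n)).1)
          + (f₀ ((c (2 * n + 1)).1, (c (2 * n + 1 + 1)).1)
              - g (c (2 * n + 1 + 1)).1 - h (c (2 * n + 1)).1)
          - (f₀ ((c (2 * n)).1, (c (2 * n + 1)).1)
              - g (c (2 * n + 1)).1 - h (c (2 * n)).1)
          + (g (c (2 * n + 1 + 1)).1 - h (c (2 * n + 1 + 1)).1)
          - (g (c (2 * n + 1)).1 - h (c (2 * n + 1)).1) := by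
        rw [show 2 * (n + 1) = 2 * n + 1 + 1 from by ring]
        linear_combination h2 - h1
      rw [e]
      exact W₀.sub_mem (W₀.add_mem (W₀.sub_mem (W₀.add_mem base (hmem _ _))
        (hmem _ _)) (hgh _)) (hgh _)
  obtain ⟨m, hm⟩ := hkeven
  have hmk : 2 * m = k := by omega
  have hk2 := key m (by omega)
  rw [hmk, hck] at hk2
  refine ⟨y + g u - h a, ?_, by abel⟩
  have : (v + y) - v + g u - h a = y + g u - h a := by abel
  rwa [this] at hk2
end

section
/- Let p be a prime, e ≥ 1, q = p^e, l ≥ 1, and f₀ : F_q^2 → F_q^l with f₀(0,0) = 0. Suppose (u,v) = (x₀, w₀) → (x₁, w₁) → ⋯ → (x_k, w_k) = (a, -v + y) is a directed walk in D(q;f₀) with k ≥ 1 odd. Then y ∈ g(u) + h(a) + W₀. -/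
/-!
Modulo `W₀` we have `h ≡ g` (put `z = 0` in `f̃₀`, using `g 0 = f₀ (0, 0) = 0`), hence
`f₀ (x, z) ≡ g x + g z`. Along an arc `(x, w) → (x', w')` this says that the defects
`d = w - g x` satisfy `d + d' ≡ 0`, so they alternate in sign and after an odd number of steps
`-v + y - g a ≡ -(v - g u)`, that is `y ≡ g u + g a ≡ g u + h a`.
-/

section

variable {M S : Type*} [AddCommGroup M] [SetLike S M] [AddSubgroupClass S M] {W : S}

theorem sub_neg_one_pow_zsmul_mem_of_add_succ_mem {d : ℕ → M} {k : ℕ}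
    (hd : ∀ i < k, d i + d (i + 1) ∈ W) : d k - (-1 : ℤ) ^ k • d 0 ∈ W := by
  induction k with
  | zero => simp [zero_mem]
  | succ k ih =>
    have hk : d k - (-1 : ℤ) ^ k • d 0 ∈ W := ih fun i hi => hd i (by omega)
    convert sub_mem (hd k k.lt_succ_self) hk using 1
    rw [pow_succ, mul_neg_one, neg_zsmul]
    abel

theorem add_mem_of_add_succ_mem_of_odd {d : ℕ → M} {k : ℕ}
    (hd : ∀ i < k, d i + d (i + 1) ∈ W) (hk : Odd k) : d k + d 0 ∈ W := by
  simpa [hk.neg_one_pow] using sub_neg_one_pow_zsmul_mem_of_add_succ_mem hd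

theorem add_sub_sub_mem_of_odd_walk {X : Type*} {f : X × X → M} {φ : X → M}
    (hf : ∀ x z, f (x, z) - φ x - φ z ∈ W) {c : ℕ → X × M} {k : ℕ} (hk : Odd k)
    (hstep : ∀ i < k, (c i).2 + (c (i + 1)).2 = f ((c i).1, (c (i + 1)).1)) :
    (c k).2 + (c 0).2 - φ (c k).1 - φ (c 0).1 ∈ W := by
  have hd : ∀ i < k, ((c i).2 - φ (c i).1) + ((c (i + 1)).2 - φ (c (i + 1)).1) ∈ W := by
    intro i hi
    convert hf (c i).1 (c (i + 1)).1 using 1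
    rw [← hstep i hi]
    abel
  convert add_mem_of_add_succ_mem_of_odd hd hk using 1
  abel

end

theorem stmt_5_general {p l : ℕ}
    {F : Type*} [Field F] [Algebra (ZMod p) F]
    (f₀ : F × F → Fin l → F) (hf₀ : f₀ (0, 0) = 0)
    (g h : F → Fin l → F) (hg : ∀ t, g t = f₀ (t, 0))
    (W₀ : Submodule (ZMod p) (Fin l → F))
    (hW₀ : W₀ = Submodule.span (ZMod p)
      (Set.range fun xy : F × F => f₀ xy - g xy.2 - h xy.1))
    (k : ℕ) (hkodd : Odd k)
    (c : ℕ → F × (Fin l → F)) (u a : F) (v y : Fin l → F)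
    (hc0 : c 0 = (u, v)) (hck : c k = (a, -v + y))
    (hstep : ∀ i < k, (c i).2 + (c (i + 1)).2 = f₀ ((c i).1, (c (i + 1)).1)) :
    ∃ w ∈ W₀, y = g u + h a + w := by
  have hW : ∀ x z, f₀ (x, z) - g z - h x ∈ W₀ :=
    fun x z => hW₀ ▸ Submodule.subset_span ⟨(x, z), rfl⟩
  have hg0 : g 0 = 0 := (hg 0).trans hf₀
  have hgh : ∀ t, g t - h t ∈ W₀ := fun t => by simpa [← hg, hg0] using hW t 0
  have hsymm : ∀ x z, f₀ (x, z) - g x - g z ∈ W₀ := fun x z => by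
    convert sub_mem (hW x z) (hgh x) using 1
    abel
  have hwalk := add_sub_sub_mem_of_odd_walk hsymm hkodd hstep
  rw [hc0, hck] at hwalk
  refine ⟨y - g u - h a, ?_, by abel⟩
  convert add_mem hwalk (hgh a) using 1
  simp only
  abel

/-- If `(u,v) = (x₀,w₀) → ⋯ → (x_k,w_k) = (a, -v + y)` is a directed walk
in `D(q;f₀)` with `k ≥ 1` odd, then `y ∈ g(u) + h(a) + W₀`. -/
theorem stmt_5 {p e l : ℕ} (hp : p.Prime) (he : 1 ≤ e) (hl : 1 ≤ l)
    {F : Type*} [Field F] [Fintype F] [Algebra (ZMod p) F]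
    (hF : Fintype.card F = p ^ e)
    (f₀ : F × F → Fin l → F) (hf₀ : f₀ (0, 0) = 0)
    (g h : F → Fin l → F) (hg : ∀ t, g t = f₀ (t, 0)) (hh : ∀ t, h t = f₀ (0, t))
    (W₀ : Submodule (ZMod p) (Fin l → F))
    (hW₀ : W₀ = Submodule.span (ZMod p)
      (Set.range fun xy : F × F => f₀ xy - g xy.2 - h xy.1))
    (k : ℕ) (hk1 : 1 ≤ k) (hkodd : Odd k)
    (c : ℕ → F × (Fin l → F)) (u a : F) (v y : Fin l → F)
    (hc0 : c 0 = (u, v)) (hck : c k = (a, -v + y))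
    (hstep : ∀ i < k, (c i).2 + (c (i + 1)).2 = f₀ ((c i).1, (c (i + 1)).1)) :
    ∃ w ∈ W₀, y = g u + h a + w :=
  stmt_5_general f₀ hf₀ g h hg W₀ hW₀ k hkodd c u a v y hc0 hck hstep
end

section
/- Let p be an odd prime, e ≥ 1, q = p^e, l ≥ 1, and f₀ : F_q^2 → F_q^l with f₀(0,0) = 0. Then for every vertex (u, v) of D(q;f₀), the vertex set of the strong component of D(q;f₀) containing (u, v) — that is, the set of vertices mutually reachable with (u,v) — equals { (a, v + h(a) - g(u) + W₀) : a ∈ F_q } ∪ { (b, -v + h(b) + g(u) + W₀) : b ∈ F_q }. -/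
open Relation

/-- For odd `q = p^e` and `f₀` with `f₀(0,0) = 0`, the vertex set of the
strong component of `D(q;f₀)` containing `(u,v)` equals
`{(a, v + h(a) - g(u) + W₀) : a ∈ F_q} ∪ {(b, -v + h(b) + g(u) + W₀) : b ∈ F_q}`. -/
theorem stmt_6 {p e l : ℕ} (hp : p.Prime) (hodd : Odd p) (he : 1 ≤ e) (hl : 1 ≤ l)
    {F : Type*} [Field F] [Fintype F] [Algebra (ZMod p) F]
    (hF : Fintype.card F = p ^ e)
    (f₀ : F × F → Fin l → F) (hf₀ : f₀ (0, 0) = 0)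
    (g h : F → Fin l → F) (hg : ∀ t, g t = f₀ (t, 0)) (hh : ∀ t, h t = f₀ (0, t))
    (W₀ : Submodule (ZMod p) (Fin l → F))
    (hW₀ : W₀ = Submodule.span (ZMod p)
      (Set.range fun xy : F × F => f₀ xy - g xy.2 - h xy.1))
    (u : F) (v : Fin l → F) :
    {z : F × (Fin l → F) |
        ReflTransGen (fun z w : F × (Fin l → F) => z.2 + w.2 = f₀ (z.1, w.1)) (u, v) z ∧
        ReflTransGen (fun z w : F × (Fin l → F) => z.2 + w.2 = f₀ (z.1, w.1)) z (u, v)} =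
      {z : F × (Fin l → F) | ∃ a : F, ∃ w ∈ W₀, z = (a, v + h a - g u + w)} ∪
      {z : F × (Fin l → F) | ∃ b : F, ∃ w ∈ W₀, z = (b, -v + h b + g u + w)} := by
  haveI : NeZero p := ⟨hp.pos.ne'⟩
  set R : F × (Fin l → F) → F × (Fin l → F) → Prop :=
    fun z w => z.2 + w.2 = f₀ (z.1, w.1) with hR
  have hg0 : g 0 = 0 := by rw [hg]; exact hf₀
  have hh0 : h 0 = 0 := by rw [hh]; exact hf₀
  have gen : ∀ s t : F, f₀ (s, t) - g t - h s ∈ W₀ := fun s t => by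
    rw [hW₀]; exact Submodule.subset_span ⟨(s, t), rfl⟩
  have ghmem : ∀ t : F, g t - h t ∈ W₀ := fun t => by
    have h1 := gen t 0
    rwa [← hg t, hg0, sub_zero] at h1
  have step : ∀ (x₁ : F) (x : Fin l → F) (y₁ : F),
      R (x₁, x) (y₁, f₀ (x₁, y₁) - x) := fun x₁ x y₁ => by
    show x + (f₀ (x₁, y₁) - x) = f₀ (x₁, y₁); abel
  -- shifts at first coordinate 0
  have shift0 : ∀ w ∈ W₀, ∀ x : Fin l → F, ReflTransGen R (0, x) (0, x + w) := by
    intro w hw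
    rw [hW₀] at hw
    induction hw using Submodule.span_induction with
    | mem wg hwg =>
        obtain ⟨⟨s, t⟩, rfl⟩ := hwg
        intro x
        refine ReflTransGen.head (step 0 x s) ?_
        refine ReflTransGen.head (step s _ t) ?_
        refine ReflTransGen.head (step t _ 0) ?_
        have key : f₀ (0, 0) - (f₀ (t, 0) - (f₀ (s, t) - (f₀ (0, s) - x)))
            = x + (f₀ (s, t) - g t - h s) := by
          rw [hf₀, hg, hh]; abel
        exact key ▸ ReflTransGen.single (step 0 _ 0)
    | zero => intro x; simpa using ReflTransGen.refl
    | add a b ha hb iha ihb =>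
        intro x
        have h2 := ihb (x + a)
        rw [← add_assoc]
        exact (iha x).trans h2
    | smul c a ha iha =>
        have key : ∀ n : ℕ, ∀ x : Fin l → F, ReflTransGen R (0, x) (0, x + n • a) := by
          intro n
          induction n with
          | zero => intro x; simpa using ReflTransGen.refl
          | succ n ih =>
              intro x
              have h2 := iha (x + n • a)
              rw [succ_nsmul, ← add_assoc]
              exact (ih x).trans h2
        intro x
        have hc : c • a = c.val • a := by
          conv_lhs => rw [← ZMod.natCast_rightInverse (n := p) c]
          rw [Nat.cast_smul_eq_nsmul]
        rw [hc]; exact key c.val x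
  -- main reachability: even case
  have mainA : ∀ (u₀ : F) (v₀ : Fin l → F) (a : F), ∀ w ∈ W₀,
      ReflTransGen R (u₀, v₀) (a, v₀ + h a - g u₀ + w) := by
    intro u₀ v₀ a w hw
    refine ReflTransGen.head (step u₀ v₀ 0) ?_
    refine (shift0 (-w) (neg_mem hw) (f₀ (u₀, 0) - v₀)).trans ?_
    have key : f₀ (0, a) - (f₀ (u₀, 0) - v₀ + -w) = v₀ + h a - g u₀ + w := by
      rw [hh, hg]; abel
    exact key ▸ ReflTransGen.single (step 0 _ a)
  -- odd case
  have mainB : ∀ (u₀ : F) (v₀ : Fin l → F) (b : F), ∀ w ∈ W₀,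
      ReflTransGen R (u₀, v₀) (b, -v₀ + h b + g u₀ + w) := by
    intro u₀ v₀ b w hw
    refine ReflTransGen.head (step u₀ v₀ 0) ?_
    have h1 := mainA 0 (f₀ (u₀, 0) - v₀) b w hw
    have key : f₀ (u₀, 0) - v₀ + h b - g 0 + w = -v₀ + h b + g u₀ + w := by
      rw [hg0, hg]; abel
    rwa [key] at h1
  -- forward closure
  have forward : ∀ z, ReflTransGen R (u, v) z →
      (∃ a : F, ∃ w ∈ W₀, z = (a, v + h a - g u + w)) ∨
      (∃ b : F, ∃ w ∈ W₀, z = (b, -v + h b + g u + w)) := by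
    intro z hz
    induction hz with
    | refl =>
        left
        exact ⟨u, g u - h u, ghmem u, by rw [Prod.mk.injEq]; exact ⟨rfl, by abel⟩⟩
    | tail hzy hstep ih =>
        rename_i y z' 
        have hz2 : z'.2 = f₀ (y.1, z'.1) - y.2 := by
          rw [← hstep]; abel
        rcases ih with ⟨a, w, hw, hy⟩ | ⟨b, w, hw, hy⟩
        · right
          refine ⟨z'.1, f₀ (a, z'.1) - g z'.1 - h a + (g z'.1 - h z'.1) + -w,
            add_mem (add_mem (gen a z'.1) (ghmem z'.1)) (neg_mem hw), ?_⟩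
          have : y.1 = a := by rw [hy]
          rw [Prod.mk.injEq]
          refine ⟨rfl, ?_⟩
          rw [hz2, hy]
          simp only
          abel
        · left
          refine ⟨z'.1, f₀ (b, z'.1) - g z'.1 - h b + (g z'.1 - h z'.1) + -w,
            add_mem (add_mem (gen b z'.1) (ghmem z'.1)) (neg_mem hw), ?_⟩
          rw [Prod.mk.injEq]
          refine ⟨rfl, ?_⟩
          rw [hz2, hy]
          simp only
          abel
  ext z
  simp only [Set.mem_setOf_eq, Set.mem_union]
  constructor
  · rintro ⟨h1, _⟩
    exact forward z h1
  · rintro (⟨a, w, hw, rfl⟩ | ⟨b, w, hw, rfl⟩)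
    · refine ⟨mainA u v a w hw, ?_⟩
      have h1 := mainA a (v + h a - g u + w) u
        (-w + (g u - h u) + (g a - h a))
        (add_mem (add_mem (neg_mem hw) (ghmem u)) (ghmem a))
      have key : v + h a - g u + w + h u - g a + (-w + (g u - h u) + (g a - h a)) = v := by
        abel
      rwa [key] at h1
    · refine ⟨mainB u v b w hw, ?_⟩
      have h1 := mainB b (-v + h b + g u + w) u
        (w + -(g b - h b) + (g u - h u))
        (add_mem (add_mem hw (neg_mem (ghmem b))) (ghmem u))
      have key : -(-v + h b + g u + w) + h u + g b + (w + -(g b - h b) + (g u - h u)) = v := by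
        abel
      rwa [key] at h1
end

section
/- Let p be an odd prime, e ≥ 1, q = p^e, l ≥ 1, and f : F_q^2 → F_q^l. Then for every vertex (u, v) of D(q;f), the vertex set of the strong component of D(q;f) containing (u, v) equals { (a, v + h(a) - g(u) + W₀) : a ∈ F_q } ∪ { (b, -v + h(b) + g(u) + f(0,0) + W₀) : b ∈ F_q }. -/
open Relation

/-- For odd `q = p^e` and arbitrary `f`, the vertex set of the strong
component of `D(q;f)` containing `(u,v)` equals
`{(a, v + h(a) - g(u) + W₀) : a} ∪ {(b, -v + h(b) + g(u) + f(0,0) + W₀) : b}`. -/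
theorem stmt_7 {p e l : ℕ} (hp : p.Prime) (hodd : Odd p) (he : 1 ≤ e) (hl : 1 ≤ l)
    {F : Type*} [Field F] [Fintype F] [Algebra (ZMod p) F]
    (hF : Fintype.card F = p ^ e)
    (f : F × F → Fin l → F)
    (f₀ : F × F → Fin l → F) (hf₀ : ∀ xy, f₀ xy = f xy - f (0, 0))
    (g h : F → Fin l → F) (hg : ∀ t, g t = f (t, 0) - f (0, 0))
    (hh : ∀ t, h t = f (0, t) - f (0, 0))
    (W₀ : Submodule (ZMod p) (Fin l → F))
    (hW₀ : W₀ = Submodule.span (ZMod p)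
      (Set.range fun xy : F × F => f₀ xy - g xy.2 - h xy.1))
    (u : F) (v : Fin l → F) :
    {z : F × (Fin l → F) |
        ReflTransGen (fun z w : F × (Fin l → F) => z.2 + w.2 = f (z.1, w.1)) (u, v) z ∧
        ReflTransGen (fun z w : F × (Fin l → F) => z.2 + w.2 = f (z.1, w.1)) z (u, v)} =
      {z : F × (Fin l → F) | ∃ a : F, ∃ w ∈ W₀, z = (a, v + h a - g u + w)} ∪
      {z : F × (Fin l → F) |
        ∃ b : F, ∃ w ∈ W₀, z = (b, -v + h b + g u + f (0, 0) + w)} := by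
  haveI : Fact p.Prime := ⟨hp⟩
  haveI : CharP F p := charP_of_injective_algebraMap (algebraMap (ZMod p) F).injective p
  let R : F × (Fin l → F) → F × (Fin l → F) → Prop :=
    fun z w => z.2 + w.2 = f (z.1, w.1)
  -- single arc step
  have step : ∀ (a b : F) (x : Fin l → F), R (a, x) (b, f (a, b) - x) := by
    intro a b x
    show x + (f (a, b) - x) = f (a, b)
    abel
  -- generators are in W₀
  have hGen : ∀ x y : F, f₀ (x, y) - g y - h x ∈ W₀ := by
    intro x y
    rw [hW₀]
    exact Submodule.subset_span ⟨(x, y), rfl⟩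
  have hGH : ∀ t : F, g t - h t ∈ W₀ := by
    intro t
    have he : g t - h t = -(f₀ (0, t) - g t - h 0) := by
      rw [hf₀ (0, t), hg t, hh t, hh 0]; abel
    rw [he]
    exact W₀.neg_mem (hGen 0 t)
  have hHG : ∀ t : F, h t - g t ∈ W₀ := by
    intro t
    have he : h t - g t = -(g t - h t) := by abel
    rw [he]; exact W₀.neg_mem (hGH t)
  -- multiplication by p kills everything
  have hpsmul : ∀ w : Fin l → F, (p : ℕ) • w = 0 := by
    intro w; funext i
    simp [Pi.smul_apply, nsmul_eq_mul, CharP.cast_eq_zero]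
  -- the six-step move
  have move6 : ∀ (u' x y : F) (v' : Fin l → F),
      ReflTransGen R (u', v')
        (u', v' + ((f₀ (x, y) - g y - h x) + (h u' - g u'))) := by
    intro u' x y v'
    have t1 := ReflTransGen.single (step u' 0 v')
    have t2 := t1.tail (step 0 0 _)
    have t3 := t2.tail (step 0 x _)
    have t4 := t3.tail (step x y _)
    have t5 := t4.tail (step y 0 _)
    have t6 := t5.tail (step 0 u' _)
    have hEq : f (0, u') - (f (y, 0) - (f (x, y) - (f (0, x) - (f (0, 0) - (f (u', 0) - v')))))
        = v' + ((f₀ (x, y) - g y - h x) + (h u' - g u')) := by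
      rw [hf₀ (x, y), hg y, hh x, hh u', hg u']; abel
    exact hEq ▸ t6
  -- iterate the d-move
  have dmove : ∀ (u' : F) (n : ℕ) (v' : Fin l → F),
      ReflTransGen R (u', v') (u', v' + n • (h u' - g u')) := by
    intro u' n
    induction n with
    | zero => intro v'; simpa using ReflTransGen.refl (r := R) (a := (u', v'))
    | succ n ih =>
      intro v'
      have t1 := ih v'
      have t2 := move6 u' 0 0 (v' + n • (h u' - g u'))
      have hz : f₀ (0, 0) - g 0 - h 0 = (0 : Fin l → F) := by
        rw [hf₀ (0, 0), hg 0, hh 0]; abel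
      have hEq : v' + n • (h u' - g u') + ((f₀ (0, 0) - g 0 - h 0) + (h u' - g u'))
          = v' + (n + 1) • (h u' - g u') := by
        rw [hz, succ_nsmul]; abel
      exact hEq ▸ (t1.trans t2)
  -- add a single generator
  have genmove : ∀ (u' x y : F) (v' : Fin l → F),
      ReflTransGen R (u', v') (u', v' + (f₀ (x, y) - g y - h x)) := by
    intro u' x y v'
    have t1 := move6 u' x y v'
    have t2 := dmove u' (p - 1) (v' + ((f₀ (x, y) - g y - h x) + (h u' - g u')))
    have h3 : (h u' - g u') + (p - 1) • (h u' - g u') = 0 := by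
      rw [add_comm, ← succ_nsmul, Nat.sub_add_cancel hp.one_lt.le, hpsmul]
    have hEq : v' + ((f₀ (x, y) - g y - h x) + (h u' - g u')) + (p - 1) • (h u' - g u')
        = v' + (f₀ (x, y) - g y - h x) := by
      have h4 : ∀ A B C : Fin l → F, v' + (A + B) + C = v' + A + (B + C) := by
        intro A B C; abel
      rw [h4, h3, add_zero]
    exact hEq ▸ (t1.trans t2)
  -- add an arbitrary element of W₀
  have cosetmove : ∀ w ∈ W₀, ∀ (u' : F) (v' : Fin l → F),
      ReflTransGen R (u', v') (u', v' + w) := by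
    intro w hw
    rw [hW₀] at hw
    induction hw using Submodule.span_induction with
    | mem x hx =>
      obtain ⟨⟨a, b⟩, rfl⟩ := hx
      exact fun u' v' => genmove u' a b v'
    | zero =>
      intro u' v'
      simpa using ReflTransGen.refl (r := R) (a := (u', v'))
    | add x y hx hy ihx ihy =>
      intro u' v'
      have t := (ihx u' v').trans (ihy u' (v' + x))
      rw [← add_assoc]
      exact t
    | smul c x hx ihx =>
      have hcx : c • x = c.val • x := by
        conv_lhs => rw [← ZMod.natCast_rightInverse c]
        rw [Nat.cast_smul_eq_nsmul]
      rw [hcx]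
      intro u' v'
      induction c.val with
      | zero => simpa using ReflTransGen.refl (r := R) (a := (u', v'))
      | succ n ihn =>
        have t := ihn.trans (ihx u' (v' + n • x))
        have hEq : v' + n • x + x = v' + (n + 1) • x := by
          rw [succ_nsmul]; abel
        exact hEq ▸ t
  -- reach any "even" vertex
  have reachA : ∀ (u' a : F) (v' w : Fin l → F), w ∈ W₀ →
      ReflTransGen R (u', v') (a, v' + h a - g u' + w) := by
    intro u' a v' w hw
    have t1 := cosetmove w hw u' v'
    have t2 := (t1.tail (step u' 0 _)).tail (step 0 a _)
    have hEq : f (0, a) - (f (u', 0) - (v' + w)) = v' + h a - g u' + w := by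
      rw [hh a, hg u']; abel
    exact hEq ▸ t2
  -- reach any "odd" vertex
  have reachB : ∀ (u' b : F) (v' w : Fin l → F), w ∈ W₀ →
      ReflTransGen R (u', v') (b, -v' + h b + g u' + f (0, 0) + w) := by
    intro u' b v' w hw
    have t1 := reachA u' 0 v' (-w) (W₀.neg_mem hw)
    have t2 := t1.tail (step 0 b _)
    have hEq : f (0, b) - (v' + h 0 - g u' + -w) = -v' + h b + g u' + f (0, 0) + w := by
      rw [hh 0, hh b, hg u']; abel
    exact hEq ▸ t2
  -- forward invariance of the candidate set
  have fwd : ∀ z z' : F × (Fin l → F),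
      ((∃ a : F, ∃ w ∈ W₀, z = (a, v + h a - g u + w)) ∨
        (∃ b : F, ∃ w ∈ W₀, z = (b, -v + h b + g u + f (0, 0) + w))) → R z z' →
      ((∃ a : F, ∃ w ∈ W₀, z' = (a, v + h a - g u + w)) ∨
        (∃ b : F, ∃ w ∈ W₀, z' = (b, -v + h b + g u + f (0, 0) + w))) := by
    rintro ⟨a, x⟩ ⟨b, y⟩ (⟨a', w, hw, hpair⟩ | ⟨a', w, hw, hpair⟩) hr
    · rw [Prod.mk.injEq] at hpair
      obtain ⟨rfl, rfl⟩ := hpair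
      have hy : y = f (a, b) - (v + h a - g u + w) := eq_sub_of_add_eq' hr
      right
      refine ⟨b, (f₀ (a, b) - g b - h a) + (g b - h b) - w,
        W₀.sub_mem (W₀.add_mem (hGen a b) (hGH b)) hw, ?_⟩
      refine congrArg (Prod.mk b) ?_
      rw [hy, hf₀ (a, b), hg b, hh a, hh b, hg u]
      abel
    · rw [Prod.mk.injEq] at hpair
      obtain ⟨rfl, rfl⟩ := hpair
      have hy : y = f (a, b) - (-v + h a + g u + f (0, 0) + w) := eq_sub_of_add_eq' hr
      left
      refine ⟨b, (f₀ (a, b) - g b - h a) + (g b - h b) - w,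
        W₀.sub_mem (W₀.add_mem (hGen a b) (hGH b)) hw, ?_⟩
      refine congrArg (Prod.mk b) ?_
      rw [hy, hf₀ (a, b), hg b, hh a, hh b, hg u]
      abel
  have base : (u, v) = (u, v + h u - g u + (g u - h u)) := by
    refine congrArg (Prod.mk u) ?_
    abel
  -- everything in the candidate set reaches back to (u, v)
  have back : ∀ z : F × (Fin l → F),
      ((∃ a : F, ∃ w ∈ W₀, z = (a, v + h a - g u + w)) ∨
        (∃ b : F, ∃ w ∈ W₀, z = (b, -v + h b + g u + f (0, 0) + w))) →
      ReflTransGen R z (u, v) := by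
    rintro ⟨a, x⟩ (⟨a', w, hw, hpair⟩ | ⟨a', w, hw, hpair⟩)
    · rw [Prod.mk.injEq] at hpair
      obtain ⟨rfl, rfl⟩ := hpair
      have t := reachA a u (v + h a - g u + w) ((g u - h u) + (g a - h a) - w)
        (W₀.sub_mem (W₀.add_mem (hGH u) (hGH a)) hw)
      have hEq : v + h a - g u + w + h u - g a + ((g u - h u) + (g a - h a) - w) = v := by
        abel
      rw [hEq] at t
      exact t
    · rw [Prod.mk.injEq] at hpair
      obtain ⟨rfl, rfl⟩ := hpair
      have t := reachB a u (-v + h a + g u + f (0, 0) + w)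
        ((g u - h u) + (h a - g a) + w)
        (W₀.add_mem (W₀.add_mem (hGH u) (hHG a)) hw)
      have hEq : -(-v + h a + g u + f (0, 0) + w) + h u + g a + f (0, 0) +
          ((g u - h u) + (h a - g a) + w) = v := by
        abel
      rw [hEq] at t
      exact t
  -- everything in the candidate set is reached from (u, v)
  have fwd_reach : ∀ z : F × (Fin l → F),
      ((∃ a : F, ∃ w ∈ W₀, z = (a, v + h a - g u + w)) ∨
        (∃ b : F, ∃ w ∈ W₀, z = (b, -v + h b + g u + f (0, 0) + w))) →
      ReflTransGen R (u, v) z := by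
    rintro ⟨a, x⟩ (⟨a', w, hw, hpair⟩ | ⟨a', w, hw, hpair⟩)
    · rw [Prod.mk.injEq] at hpair
      obtain ⟨rfl, rfl⟩ := hpair
      exact reachA u a v w hw
    · rw [Prod.mk.injEq] at hpair
      obtain ⟨rfl, rfl⟩ := hpair
      exact reachB u a v w hw
  ext z
  simp only [Set.mem_setOf_eq, Set.mem_union]
  constructor
  · rintro ⟨h1, -⟩
    induction h1 with
    | refl => exact Or.inl ⟨u, g u - h u, hGH u, base⟩
    | @tail b c hab hbc ih => exact fwd b c ih hbc
  · intro hz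
    exact ⟨fwd_reach z hz, back z hz⟩
end

section
/- Let p be an odd prime, e ≥ 1, q = p^e, l ≥ 1, and f : F_q^2 → F_q^l. Then the digraph D(q;f) is strongly connected if and only if W₀ = F_q^l (equivalently, dim_{F_p} W₀ = e·l). -/
open Relation

/-- For odd `q = p^e`, the digraph `D(q;f)` is strongly connected iff
`W₀ = F_q^l`, equivalently `dim_{F_p} W₀ = e·l`. -/
theorem stmt_8 {p e l : ℕ} (hp : p.Prime) (hodd : Odd p) (he : 1 ≤ e) (hl : 1 ≤ l)
    {F : Type*} [Field F] [Fintype F] [Algebra (ZMod p) F]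
    (hF : Fintype.card F = p ^ e)
    (f : F × F → Fin l → F)
    (f₀ : F × F → Fin l → F) (hf₀ : ∀ xy, f₀ xy = f xy - f (0, 0))
    (g h : F → Fin l → F) (hg : ∀ t, g t = f (t, 0) - f (0, 0))
    (hh : ∀ t, h t = f (0, t) - f (0, 0))
    (W₀ : Submodule (ZMod p) (Fin l → F))
    (hW₀ : W₀ = Submodule.span (ZMod p)
      (Set.range fun xy : F × F => f₀ xy - g xy.2 - h xy.1)) :
    ((∀ z w : F × (Fin l → F),
        ReflTransGen (fun z w : F × (Fin l → F) => z.2 + w.2 = f (z.1, w.1)) z w) ↔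
      W₀ = ⊤) ∧
    (W₀ = ⊤ ↔ Module.finrank (ZMod p) W₀ = e * l) := by
  haveI : Fact p.Prime := ⟨hp⟩
  haveI : CharP F p := charP_of_injective_algebraMap (algebraMap (ZMod p) F).injective p
  have hp2 : p ≠ 2 := by rintro rfl; exact (by decide : ¬ Odd 2) hodd
  have two_ne : (2 : F) ≠ 0 := by
    intro h2
    have : ((2 : ℕ) : F) = 0 := by exact_mod_cast h2
    have hdvd : p ∣ 2 := (CharP.cast_eq_zero_iff F p 2).mp this
    exact hp2 ((Nat.prime_dvd_prime_iff_eq hp Nat.prime_two).mp hdvd)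
  set R : (F × (Fin l → F)) → (F × (Fin l → F)) → Prop :=
    fun z w => z.2 + w.2 = f (z.1, w.1) with hR
  have hmem : ∀ x y : F, f₀ (x, y) - g y - h x ∈ W₀ := by
    intro x y
    rw [hW₀]
    exact Submodule.subset_span ⟨(x, y), rfl⟩
  have hK : ∀ a b : F, f (a, b) - g b - g a - f (0, 0) ∈ W₀ := by
    intro a b
    have heq : f (a, b) - g b - g a - f (0, 0)
        = (f₀ (a, b) - g b - h a) + (f₀ (0, a) - g a - h 0) := by
      simp only [hf₀, hg, hh]
      abel
    rw [heq]
    exact add_mem (hmem a b) (hmem 0 a)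
  constructor
  · constructor
    · -- strong connectivity → W₀ = ⊤
      intro hconn
      by_contra hne
      obtain ⟨m₀, hm₀⟩ : ∃ m₀, m₀ ∉ W₀ := by
        by_contra hc
        push_neg at hc
        exact hne (Submodule.eq_top_iff'.mpr hc)
      set half : Fin l → F := (2 : F)⁻¹ • f (0, 0) with hhalfdef
      have hhalf : half + half = f (0, 0) := by
        rw [hhalfdef, ← add_smul]
        rw [show (2:F)⁻¹ + (2:F)⁻¹ = 1 by field_simp; ring]
        simp
      have hinv : ∀ w, ReflTransGen R (0, g 0 + half) w → w.2 - g w.1 - half ∈ W₀ := by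
        intro w hw
        induction hw with
        | refl =>
          have h0 : (g 0 + half) - g 0 - half = (0 : Fin l → F) := by abel
          show (g 0 + half) - g 0 - half ∈ W₀
          rw [h0]; exact W₀.zero_mem
        | @tail b c hrb hstep ih =>
          have hw2 : c.2 = f (b.1, c.1) - b.2 := by
            rw [← hstep]; abel
          have key : c.2 - g c.1 - half
              = (f (b.1, c.1) - g c.1 - g b.1 - f (0, 0)) - (b.2 - g b.1 - half) := by
            rw [hw2, ← hhalf]; abel
          rw [key]
          exact sub_mem (hK b.1 c.1) ih
      have hbad := hinv (0, g 0 + half + m₀) (hconn _ _)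
      have h2 : (g 0 + half + m₀) - g 0 - half = m₀ := by abel
      have : m₀ ∈ W₀ := by
        have := hbad
        simp only at this
        rwa [h2] at this
      exact hm₀ this
    · -- W₀ = ⊤ → strong connectivity
      intro htop z w
      have reach4 : ∀ (u : Fin l → F) (x y : F),
          ReflTransGen R (0, u) (0, u + (f₀ (x, y) - g y - h x)) := by
        intro u x y
        have h1 : R (0, u) (x, f (0, x) - u) := by
          show u + (f (0, x) - u) = f (0, x); abel
        have h2 : R (x, f (0, x) - u) (y, f (x, y) - (f (0, x) - u)) := by
          show (f (0, x) - u) + (f (x, y) - (f (0, x) - u)) = f (x, y); abel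
        have h3 : R (y, f (x, y) - (f (0, x) - u))
            (0, f (y, 0) - (f (x, y) - (f (0, x) - u))) := by
          show (f (x, y) - (f (0, x) - u))
              + (f (y, 0) - (f (x, y) - (f (0, x) - u))) = f (y, 0)
          abel
        have h4 : R (0, f (y, 0) - (f (x, y) - (f (0, x) - u)))
            (0, u + (f₀ (x, y) - g y - h x)) := by
          show (f (y, 0) - (f (x, y) - (f (0, x) - u)))
              + (u + (f₀ (x, y) - g y - h x)) = f (0, 0)
          simp only [hf₀, hg, hh]
          abel
        exact (((ReflTransGen.single h1).tail h2).tail h3).tail h4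
      have hS : ∀ s : Fin l → F, ∀ u, ReflTransGen R (0, u) (0, u + s) := by
        set S : Submodule (ZMod p) (Fin l → F) :=
          { carrier := {s | ∀ u, ReflTransGen R (0, u) (0, u + s)}
            zero_mem' := by
              intro u
              simpa using (ReflTransGen.refl : ReflTransGen R (0, u) (0, u))
            add_mem' := by
              intro s t hs ht u
              have := (hs u).trans (ht (u + s))
              rwa [add_assoc] at this
            smul_mem' := by
              intro c s hs
              have hn : ∀ n : ℕ, ∀ u, ReflTransGen R (0, u) (0, u + n • s) := by
                intro n
                induction n with
                | zero =>
                  intro u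
                  simpa using (ReflTransGen.refl : ReflTransGen R (0, u) (0, u))
                | succ n ih =>
                  intro u
                  have := (ih u).trans (hs (u + n • s))
                  rw [succ_nsmul, ← add_assoc]
                  exact this
              intro u
              have hc : c • s = c.val • s := by
                rw [← Nat.cast_smul_eq_nsmul (ZMod p), ZMod.natCast_val, ZMod.cast_id]
              rw [hc]
              exact hn c.val u } with hSdef
        have hle : W₀ ≤ S := by
          rw [hW₀]
          apply Submodule.span_le.mpr
          rintro _ ⟨⟨x, y⟩, rfl⟩
          exact fun u => reach4 u x y
        intro s u
        have hsW : s ∈ W₀ := by rw [htop]; exact Submodule.mem_top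
        exact hle hsW u
      have h1 : R z (0, f (z.1, 0) - z.2) := by
        show z.2 + (f (z.1, 0) - z.2) = f (z.1, 0); abel
      have h2 : R (0, f (0, w.1) - w.2) w := by
        show (f (0, w.1) - w.2) + w.2 = f (0, w.1); abel
      have hmid := hS ((f (0, w.1) - w.2) - (f (z.1, 0) - z.2)) (f (z.1, 0) - z.2)
      rw [show (f (z.1, 0) - z.2) + ((f (0, w.1) - w.2) - (f (z.1, 0) - z.2))
          = f (0, w.1) - w.2 from by abel] at hmid
      exact (ReflTransGen.head h1 hmid).tail h2
  · -- finrank part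
    have hrF : Module.finrank (ZMod p) F = e := by
      have hcard : Fintype.card F = Fintype.card (ZMod p) ^ Module.finrank (ZMod p) F :=
        Module.card_eq_pow_finrank
      rw [ZMod.card, hF] at hcard
      exact (Nat.pow_right_injective hp.two_le hcard).symm
    have hrPi : Module.finrank (ZMod p) (Fin l → F) = e * l := by
      rw [Module.finrank_pi_fintype, Finset.sum_const, Finset.card_univ, Fintype.card_fin,
        hrF, smul_eq_mul, mul_comm]
    constructor
    · intro htop
      rw [htop, finrank_top, hrPi]
    · intro hr
      apply Submodule.eq_top_of_finrank_eq
      rw [hr, hrPi]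
end

section
/- Let p be an odd prime, e ≥ 1, q = p^e, l ≥ 1, and f : F_q^2 → F_q^l, with d = dim_{F_p} W₀. Then the digraph D(q;f) has exactly (p^{el-d} + 1)/2 strong components; exactly one of them has order p^{e+d}, and each of the remaining (p^{el-d} - 1)/2 strong components has order 2·p^{e+d}. -/
open Relation



namespace Stmt9Aux

variable {l : ℕ} {F : Type*} [Field F]

/-- The arc relation of the digraph `D(q;f)`. -/
def Rl (f : F × F → Fin l → F) (z w : F × (Fin l → F)) : Prop :=
  z.2 + w.2 = f (z.1, w.1)

lemma step (f : F × F → Fin l → F) (a b : F) (x : Fin l → F) :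
    Rl f (a, x) (b, f (a, b) - x) := by
  show x + (f (a, b) - x) = f (a, b)
  abel

lemma loop (f : F × F → Fin l → F) (s t : F) (x : Fin l → F) :
    ReflTransGen (Rl f) (0, x) (0, x + (f (s, t) - f (t, 0) - f (0, s) + f (0, 0))) := by
  have h1 := step f 0 s x
  have h2 := step f s t (f (0, s) - x)
  have h3 := step f t 0 (f (s, t) - (f (0, s) - x))
  have h4 := step f 0 0 (f (t, 0) - (f (s, t) - (f (0, s) - x)))
  have w := (((ReflTransGen.single h1).tail h2).tail h3).tail h4
  have e : f (0, 0) - (f (t, 0) - (f (s, t) - (f (0, s) - x)))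
      = x + (f (s, t) - f (t, 0) - f (0, s) + f (0, 0)) := by abel
  rwa [e] at w

variable {p : ℕ} [Fact p.Prime] [Algebra (ZMod p) F]

lemma reach_nsmul (f : F × F → Fin l → F) {v : Fin l → F}
    (hv : ∀ x : Fin l → F, ReflTransGen (Rl f) (0, x) (0, x + v)) :
    ∀ (m : ℕ) (x : Fin l → F), ReflTransGen (Rl f) (0, x) (0, x + m • v) := by
  intro m
  induction m with
  | zero => intro x; simpa using ReflTransGen.refl
  | succ m ih =>
    intro x
    have h := (hv x).trans (ih (x + v))
    have e : x + v + m • v = x + (m + 1) • v := by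
      rw [succ_nsmul]; abel
    rwa [e] at h

lemma reach_of_mem (f : F × F → Fin l → F) (W₀ : Submodule (ZMod p) (Fin l → F))
    (hW₀ : W₀ = Submodule.span (ZMod p)
      (Set.range fun xy : F × F => f (xy.1, xy.2) - f (xy.2, 0) - f (0, xy.1) + f (0, 0)))
    {δ : Fin l → F} (hδ : δ ∈ W₀) (x : Fin l → F) :
    ReflTransGen (Rl f) (0, x) (0, x + δ) := by
  rw [hW₀] at hδ
  induction hδ using Submodule.span_induction generalizing x with
  | mem v hv =>
    obtain ⟨⟨s, t⟩, rfl⟩ := hv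
    exact loop f s t x
  | zero => simpa using ReflTransGen.refl
  | add v w _ _ ihv ihw =>
    have h := (ihv x).trans (ihw (x + v))
    have e : x + v + w = x + (v + w) := by abel
    rwa [e] at h
  | smul a v _ ih =>
    have h := reach_nsmul f (fun y => ih y) a.val x
    have e : (a.val : ℕ) • v = a • v := by
      rw [← Nat.cast_smul_eq_nsmul (ZMod p), ZMod.natCast_rightInverse a]
    rwa [e] at h

lemma forward (f : F × F → Fin l → F) (W₀ : Submodule (ZMod p) (Fin l → F))
    (hmem : ∀ x y : F, f (x, y) - f (y, 0) - f (0, x) + f (0, 0) ∈ W₀)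
    {z w : F × (Fin l → F)} (hzw : ReflTransGen (Rl f) z w) :
    (w.2 - f (w.1, 0)) - (z.2 - f (z.1, 0)) ∈ W₀ ∨
      (w.2 - f (w.1, 0)) + (z.2 - f (z.1, 0)) + f (0, 0) ∈ W₀ := by
  induction hzw with
  | refl => left; simpa using W₀.zero_mem
  | @tail b c _ hbc ih =>
    have hA : (c.2 - f (c.1, 0)) + (b.2 - f (b.1, 0)) + f (0, 0) ∈ W₀ := by
      have h1 := hmem b.1 c.1
      have h2 := hmem b.1 0
      have e : (c.2 - f (c.1, 0)) + (b.2 - f (b.1, 0)) + f (0, 0)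
          = (f (b.1, c.1) - f (c.1, 0) - f (0, b.1) + f (0, 0))
            - (f (b.1, 0) - f (0, 0) - f (0, b.1) + f (0, 0)) := by
        rw [← hbc]; abel
      rw [e]; exact sub_mem h1 h2
    rcases ih with ih | ih
    · right
      have e : (c.2 - f (c.1, 0)) + (z.2 - f (z.1, 0)) + f (0, 0)
          = ((c.2 - f (c.1, 0)) + (b.2 - f (b.1, 0)) + f (0, 0))
            - ((b.2 - f (b.1, 0)) - (z.2 - f (z.1, 0))) := by abel
      rw [e]; exact sub_mem hA ih
    · left
      have e : (c.2 - f (c.1, 0)) - (z.2 - f (z.1, 0))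
          = ((c.2 - f (c.1, 0)) + (b.2 - f (b.1, 0)) + f (0, 0))
            - ((b.2 - f (b.1, 0)) + (z.2 - f (z.1, 0)) + f (0, 0)) := by abel
      rw [e]; exact sub_mem hA ih

lemma backward (f : F × F → Fin l → F) (W₀ : Submodule (ZMod p) (Fin l → F))
    (hW₀ : W₀ = Submodule.span (ZMod p)
      (Set.range fun xy : F × F => f (xy.1, xy.2) - f (xy.2, 0) - f (0, xy.1) + f (0, 0)))
    {z w : F × (Fin l → F)}
    (hc : (w.2 - f (w.1, 0)) - (z.2 - f (z.1, 0)) ∈ W₀ ∨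
      (w.2 - f (w.1, 0)) + (z.2 - f (z.1, 0)) + f (0, 0) ∈ W₀) :
    ReflTransGen (Rl f) z w := by
  obtain ⟨a, x⟩ := z
  obtain ⟨b, y⟩ := w
  simp only at hc
  have hmem : ∀ x y : F, f (x, y) - f (y, 0) - f (0, x) + f (0, 0) ∈ W₀ := by
    intro x y
    rw [hW₀]
    exact Submodule.subset_span ⟨(x, y), rfl⟩
  have h1 : ReflTransGen (Rl f) (a, x) (0, f (a, 0) - x) := ReflTransGen.single (step f a 0 x)
  rcases hc with hc | hc
  · -- even case
    set δ' : Fin l → F := f (0, b) - f (a, 0) + x - y with hδ'def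
    have hδ' : δ' ∈ W₀ := by
      have hg := hmem b 0
      have e : δ' = -(f (b, 0) - f (0, 0) - f (0, b) + f (0, 0))
          - ((y - f (b, 0)) - (x - f (a, 0))) := by rw [hδ'def]; abel
      rw [e]; exact sub_mem (neg_mem hg) hc
    have h2 := reach_of_mem f W₀ hW₀ hδ' (f (a, 0) - x)
    have h3 := step f 0 b (f (a, 0) - x + δ')
    have e : f (0, b) - (f (a, 0) - x + δ') = y := by rw [hδ'def]; abel
    rw [e] at h3
    exact (h1.trans h2).tail h3
  · -- odd case
    set δ' : Fin l → F := y - f (0, b) + f (0, 0) - f (a, 0) + x with hδ'def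
    have hδ' : δ' ∈ W₀ := by
      have hg := hmem b 0
      have e : δ' = ((y - f (b, 0)) + (x - f (a, 0)) + f (0, 0))
          + (f (b, 0) - f (0, 0) - f (0, b) + f (0, 0)) := by rw [hδ'def]; abel
      rw [e]; exact add_mem hc hg
    have h2 := reach_of_mem f W₀ hW₀ hδ' (f (a, 0) - x)
    have h3 := step f 0 0 (f (a, 0) - x + δ')
    have h4 := step f 0 b (f (0, 0) - (f (a, 0) - x + δ'))
    have e : f (0, b) - (f (0, 0) - (f (a, 0) - x + δ')) = y := by rw [hδ'def]; abel
    rw [e] at h4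
    exact (((h1.trans h2).tail h3)).tail h4

end Stmt9Aux

namespace Stmt9Aux2

lemma swap_eq {G : Type*} [AddCommGroup G] (c u v : G) : u = -v - c ↔ v = -u - c := by
  constructor <;> (intro h; rw [h]; abel)

variable {l : ℕ} {F : Type*} [Field F] {p : ℕ} [Fact p.Prime] [Algebra (ZMod p) F]

def κ (f : F × F → Fin l → F) (W₀ : Submodule (ZMod p) (Fin l → F))
    (z : F × (Fin l → F)) : (Fin l → F) ⧸ W₀ :=
  W₀.mkQ (z.2 - f (z.1, 0))

def cb (f : F × F → Fin l → F) (W₀ : Submodule (ZMod p) (Fin l → F)) :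
    (Fin l → F) ⧸ W₀ :=
  W₀.mkQ (f (0, 0))

lemma kappa_surjective (f : F × F → Fin l → F) (W₀ : Submodule (ZMod p) (Fin l → F)) :
    Function.Surjective (κ f W₀) := by
  intro u
  obtain ⟨v, hv⟩ := W₀.mkQ_surjective u
  refine ⟨(0, v + f (0, 0)), ?_⟩
  show W₀.mkQ (v + f (0, 0) - f (0, 0)) = u
  rwa [add_sub_cancel_right]

/-- the fiber of `κ` over any point is in bijection with `F × W₀`. -/
noncomputable def fiberEquiv (f : F × F → Fin l → F) (W₀ : Submodule (ZMod p) (Fin l → F))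
    (u : (Fin l → F) ⧸ W₀) : {w : F × (Fin l → F) // κ f W₀ w = u} ≃ F × W₀ := by
  classical
  have hx₀ := (W₀.mkQ_surjective u).choose_spec
  set x₀ := (W₀.mkQ_surjective u).choose with hx₀def
  have hfib : ∀ (a : F) (xv : Fin l → F), κ f W₀ (a, xv) = u ↔ xv - f (a, 0) - x₀ ∈ W₀ := by
    intro a xv
    rw [show κ f W₀ (a, xv) = W₀.mkQ (xv - f (a, 0)) from rfl, ← hx₀, Submodule.mkQ_apply,
      Submodule.mkQ_apply, Submodule.Quotient.eq]
  exact
  { toFun := fun w => (w.1.1, ⟨w.1.2 - f (w.1.1, 0) - x₀, (hfib w.1.1 w.1.2).1 w.2⟩)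
    invFun := fun av => ⟨(av.1, x₀ + f (av.1, 0) + av.2), (hfib av.1 _).2 (by
      have e : x₀ + f (av.1, 0) + (av.2 : Fin l → F) - f (av.1, 0) - x₀ = (av.2 : Fin l → F) := by
        abel
      rw [e]; exact av.2.2)⟩
    left_inv := by
      rintro ⟨⟨a, x⟩, hw⟩
      apply Subtype.ext
      simp only
      congr 1
      abel
    right_inv := by
      rintro ⟨a, v⟩
      simp only
      congr 1
      apply Subtype.ext
      simp only
      abel }

def θf (f : F × F → Fin l → F) (W₀ : Submodule (ZMod p) (Fin l → F))
    (u : (Fin l → F) ⧸ W₀) : Set (F × (Fin l → F)) :=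
  {w | κ f W₀ w = u ∨ κ f W₀ w = -u - cb f W₀}

lemma key (f : F × F → Fin l → F) (W₀ : Submodule (ZMod p) (Fin l → F))
    (hW₀ : W₀ = Submodule.span (ZMod p)
      (Set.range fun xy : F × F => f (xy.1, xy.2) - f (xy.2, 0) - f (0, xy.1) + f (0, 0)))
    (z w : F × (Fin l → F)) :
    ReflTransGen (Stmt9Aux.Rl f) z w ↔ (κ f W₀ w = κ f W₀ z ∨ κ f W₀ w = -κ f W₀ z - cb f W₀) := by
  have hmemW : ∀ x y : F, f (x, y) - f (y, 0) - f (0, x) + f (0, 0) ∈ W₀ := by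
    intro x y
    rw [hW₀]
    exact Submodule.subset_span ⟨(x, y), rfl⟩
  constructor
  · intro hzw
    rcases Stmt9Aux.forward f W₀ hmemW hzw with hcase | hcase
    · left
      show W₀.mkQ _ = W₀.mkQ _
      rw [Submodule.mkQ_apply, Submodule.mkQ_apply]
      exact (Submodule.Quotient.eq W₀).2 hcase
    · right
      have h0 : W₀.mkQ ((w.2 - f (w.1, 0)) + (z.2 - f (z.1, 0)) + f (0, 0)) = 0 := by
        rw [Submodule.mkQ_apply]
        exact (Submodule.Quotient.mk_eq_zero W₀).2 hcase
      rw [map_add, map_add] at h0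
      apply eq_of_sub_eq_zero
      have e : κ f W₀ w - (-κ f W₀ z - cb f W₀)
          = W₀.mkQ (w.2 - f (w.1, 0)) + W₀.mkQ (z.2 - f (z.1, 0)) + W₀.mkQ (f (0, 0)) := by
        show W₀.mkQ (w.2 - f (w.1, 0)) - (-W₀.mkQ (z.2 - f (z.1, 0)) - W₀.mkQ (f (0, 0))) = _
        abel
      rw [e, h0]
  · intro hc
    apply Stmt9Aux.backward f W₀ hW₀
    rcases hc with hc | hc
    · left
      have hc' : W₀.mkQ (w.2 - f (w.1, 0)) = W₀.mkQ (z.2 - f (z.1, 0)) := hc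
      rw [Submodule.mkQ_apply, Submodule.mkQ_apply] at hc'
      exact (Submodule.Quotient.eq W₀).1 hc'
    · right
      have h0 : κ f W₀ w + κ f W₀ z + cb f W₀ = 0 := by
        rw [hc]; abel
      have h1 : W₀.mkQ ((w.2 - f (w.1, 0)) + (z.2 - f (z.1, 0)) + f (0, 0)) = 0 := by
        rw [map_add, map_add]; exact h0
      rw [Submodule.mkQ_apply] at h1
      exact (Submodule.Quotient.mk_eq_zero W₀).1 h1

lemma comp_eq (f : F × F → Fin l → F) (W₀ : Submodule (ZMod p) (Fin l → F))
    (hW₀ : W₀ = Submodule.span (ZMod p)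
      (Set.range fun xy : F × F => f (xy.1, xy.2) - f (xy.2, 0) - f (0, xy.1) + f (0, 0)))
    (z : F × (Fin l → F)) :
    {w | ReflTransGen (Stmt9Aux.Rl f) z w ∧ ReflTransGen (Stmt9Aux.Rl f) w z}
      = θf f W₀ (κ f W₀ z) := by
  ext w
  simp only [Set.mem_setOf_eq, θf, key f W₀ hW₀]
  constructor
  · exact fun hh => hh.1
  · intro hh
    refine ⟨hh, ?_⟩
    rcases hh with hh | hh
    · exact Or.inl hh.symm
    · exact Or.inr ((swap_eq _ _ _).1 hh)

lemma theta_eq (f : F × F → Fin l → F) (W₀ : Submodule (ZMod p) (Fin l → F))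
    (u v : (Fin l → F) ⧸ W₀) :
    θf f W₀ u = θf f W₀ v ↔ (v = u ∨ v = -u - cb f W₀) := by
  constructor
  · intro hh
    obtain ⟨w, hw⟩ := kappa_surjective f W₀ u
    have hwu : w ∈ θf f W₀ u := Or.inl hw
    rw [hh] at hwu
    rcases hwu with h1 | h1
    · exact Or.inl (h1.symm.trans hw)
    · exact Or.inr ((swap_eq _ _ _).1 (hw.symm.trans h1))
  · rintro (rfl | rfl)
    · rfl
    · ext w
      simp only [θf, Set.mem_setOf_eq]
      have e : -(-u - cb f W₀) - cb f W₀ = u := by abel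
      rw [e]
      exact or_comm

end Stmt9Aux2

/-- For odd `q = p^e` and `d = dim_{F_p} W₀`, the digraph `D(q;f)` has
exactly `(p^{el-d}+1)/2` strong components; exactly one has order `p^{e+d}`, the
remaining `(p^{el-d}-1)/2` have order `2·p^{e+d}`. -/
theorem stmt_9 {p e l : ℕ} (hp : p.Prime) (hodd : Odd p) (he : 1 ≤ e) (hl : 1 ≤ l)
    {F : Type*} [Field F] [Fintype F] [Algebra (ZMod p) F]
    (hF : Fintype.card F = p ^ e)
    (f : F × F → Fin l → F)
    (f₀ : F × F → Fin l → F) (hf₀ : ∀ xy, f₀ xy = f xy - f (0, 0))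
    (g h : F → Fin l → F) (hg : ∀ t, g t = f (t, 0) - f (0, 0))
    (hh : ∀ t, h t = f (0, t) - f (0, 0))
    (W₀ : Submodule (ZMod p) (Fin l → F))
    (hW₀ : W₀ = Submodule.span (ZMod p)
      (Set.range fun xy : F × F => f₀ xy - g xy.2 - h xy.1))
    (d : ℕ) (hd : d = Module.finrank (ZMod p) W₀)
    (comps : Set (Set (F × (Fin l → F))))
    (hcomps : comps = {S | ∃ z : F × (Fin l → F),
      S = {w | ReflTransGen (fun z w : F × (Fin l → F) => z.2 + w.2 = f (z.1, w.1)) z w ∧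
               ReflTransGen (fun z w : F × (Fin l → F) => z.2 + w.2 = f (z.1, w.1)) w z}}) :
    comps.ncard = (p ^ (e * l - d) + 1) / 2 ∧
    {S ∈ comps | S.ncard = p ^ (e + d)}.ncard = 1 ∧
    {S ∈ comps | S.ncard = 2 * p ^ (e + d)}.ncard = (p ^ (e * l - d) - 1) / 2 ∧
    ∀ S ∈ comps, S.ncard = p ^ (e + d) ∨ S.ncard = 2 * p ^ (e + d) := by
  classical
  haveI : Fact p.Prime := ⟨hp⟩
  have hfun : (fun xy : F × F => f₀ xy - g xy.2 - h xy.1)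
      = fun xy : F × F => f (xy.1, xy.2) - f (xy.2, 0) - f (0, xy.1) + f (0, 0) := by
    funext xy
    obtain ⟨x, y⟩ := xy
    show f₀ (x, y) - g y - h x = f (x, y) - f (y, 0) - f (0, x) + f (0, 0)
    rw [hf₀, hg, hh]
    abel
  have hW₀' : W₀ = Submodule.span (ZMod p)
      (Set.range fun xy : F × F => f (xy.1, xy.2) - f (xy.2, 0) - f (0, xy.1) + f (0, 0)) := by
    rw [hW₀, hfun]
  haveI : Fintype ((Fin l → F) ⧸ W₀) := Fintype.ofFinite _
  haveI : Fintype W₀ := Fintype.ofFinite _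
  -- cardinalities
  have hcardF : Nat.card F = p ^ e := by rw [Nat.card_eq_fintype_card, hF]
  have hcardM : Fintype.card (Fin l → F) = p ^ (e * l) := by
    rw [Fintype.card_fun, hF, Fintype.card_fin, ← pow_mul]
  have hfrM : Module.finrank (ZMod p) (Fin l → F) = e * l := by
    have h2 : Fintype.card (Fin l → F) = p ^ Module.finrank (ZMod p) (Fin l → F) := by
      have h3 := Module.card_eq_pow_finrank (K := ZMod p) (V := Fin l → F)
      rwa [ZMod.card] at h3
    exact Nat.pow_right_injective hp.two_le (h2.symm.trans hcardM)
  have hfrW : Module.finrank (ZMod p) W₀ = d := hd.symm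
  have hsumr := Submodule.finrank_quotient_add_finrank W₀
  have hdle : d ≤ e * l := by omega
  have hfrQ : Module.finrank (ZMod p) ((Fin l → F) ⧸ W₀) = e * l - d := by omega
  have hcardQ : Fintype.card ((Fin l → F) ⧸ W₀) = p ^ (e * l - d) := by
    have h3 := Module.card_eq_pow_finrank (K := ZMod p) (V := (Fin l → F) ⧸ W₀)
    rwa [ZMod.card, hfrQ] at h3
  have hcardW : Nat.card W₀ = p ^ d := by
    rw [Nat.card_eq_fintype_card]
    have h3 := Module.card_eq_pow_finrank (K := ZMod p) (V := W₀)
    rwa [ZMod.card, hfrW] at h3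
  -- fibers of κ
  have hfiber : ∀ u : (Fin l → F) ⧸ W₀,
      {w : F × (Fin l → F) | Stmt9Aux2.κ f W₀ w = u}.ncard = p ^ (e + d) := by
    intro u
    rw [← Nat.card_coe_set_eq, Set.coe_setOf,
      Nat.card_congr (Stmt9Aux2.fiberEquiv f W₀ u), Nat.card_prod, hcardF, hcardW, ← pow_add]
  -- the special class u₀
  have h2ne : (2 : ZMod p) ≠ 0 := by
    have h2 : ((2 : ℕ) : ZMod p) ≠ 0 := by
      rw [Ne, ZMod.natCast_eq_zero_iff]
      intro hdvd
      have hp2 := (Nat.prime_dvd_prime_iff_eq hp Nat.prime_two).1 hdvd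
      rw [hp2] at hodd
      revert hodd; decide
    simpa using h2
  set u₀ : (Fin l → F) ⧸ W₀ := (2 : ZMod p)⁻¹ • (-(Stmt9Aux2.cb f W₀)) with hu₀
  have h2smul : ∀ u : (Fin l → F) ⧸ W₀, (2 : ZMod p) • u = u + u := fun u => two_smul _ u
  have hfix : ∀ u : (Fin l → F) ⧸ W₀, (-u - Stmt9Aux2.cb f W₀ = u) ↔ u = u₀ := by
    intro u
    constructor
    · intro hu
      have h0 : -u - Stmt9Aux2.cb f W₀ - u = 0 := sub_eq_zero_of_eq hu
      have h1 : u + u - -(Stmt9Aux2.cb f W₀) = -(-u - Stmt9Aux2.cb f W₀ - u) := by abel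
      have h2' : u + u = -(Stmt9Aux2.cb f W₀) := by
        apply eq_of_sub_eq_zero; rw [h1, h0, neg_zero]
      have h3 : (2 : ZMod p) • u = -(Stmt9Aux2.cb f W₀) := by rw [h2smul, h2']
      rw [hu₀, ← h3, inv_smul_smul₀ h2ne]
    · rintro rfl
      have h3 : (2 : ZMod p) • u₀ = -(Stmt9Aux2.cb f W₀) := by
        rw [hu₀, smul_inv_smul₀ h2ne]
      have hcbe : u₀ + u₀ = -(Stmt9Aux2.cb f W₀) := by rw [← h2smul, h3]
      apply eq_of_sub_eq_zero
      have h4 : -u₀ - Stmt9Aux2.cb f W₀ - u₀ = -(u₀ + u₀ - -(Stmt9Aux2.cb f W₀)) := by abel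
      rw [h4, sub_eq_zero_of_eq hcbe, neg_zero]
  have hfixu₀ : -u₀ - Stmt9Aux2.cb f W₀ = u₀ := (hfix u₀).2 rfl
  have hθu₀ : ∀ u, Stmt9Aux2.θf f W₀ u = Stmt9Aux2.θf f W₀ u₀ ↔ u = u₀ := by
    intro u
    rw [Stmt9Aux2.theta_eq]
    constructor
    · rintro (h1 | h1)
      · exact h1.symm
      · have h2' := (Stmt9Aux2.swap_eq (Stmt9Aux2.cb f W₀) u₀ u).1 h1
        rwa [hfixu₀] at h2'
    · rintro rfl; exact Or.inl rfl
  have hθcard : ∀ u, (Stmt9Aux2.θf f W₀ u).ncard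
      = if u = u₀ then p ^ (e + d) else 2 * p ^ (e + d) := by
    intro u
    by_cases hu : u = u₀
    · rw [if_pos hu, hu]
      have hset : Stmt9Aux2.θf f W₀ u₀ = {w | Stmt9Aux2.κ f W₀ w = u₀} := by
        ext w; simp only [Stmt9Aux2.θf, Set.mem_setOf_eq, hfixu₀, or_self]
      rw [hset]; exact hfiber u₀
    · rw [if_neg hu]
      have hne : -u - Stmt9Aux2.cb f W₀ ≠ u := fun hcon => hu ((hfix u).1 hcon)
      have hsplit : Stmt9Aux2.θf f W₀ u
          = {w | Stmt9Aux2.κ f W₀ w = u}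
            ∪ {w | Stmt9Aux2.κ f W₀ w = -u - Stmt9Aux2.cb f W₀} := by
        ext w; simp [Stmt9Aux2.θf]
      have hdisj : Disjoint {w : F × (Fin l → F) | Stmt9Aux2.κ f W₀ w = u}
          {w | Stmt9Aux2.κ f W₀ w = -u - Stmt9Aux2.cb f W₀} := by
        rw [Set.disjoint_left]
        rintro w hw1 hw2
        exact hne (hw2.symm.trans hw1)
      rw [hsplit, Set.ncard_union_eq hdisj (Set.toFinite _) (Set.toFinite _), hfiber, hfiber]
      omega
  -- description of the components
  have hcomps2 : comps = Set.range (Stmt9Aux2.θf f W₀) := by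
    rw [hcomps]
    ext S
    simp only [Set.mem_setOf_eq, Set.mem_range]
    constructor
    · rintro ⟨z, rfl⟩
      exact ⟨Stmt9Aux2.κ f W₀ z, (Stmt9Aux2.comp_eq f W₀ hW₀' z).symm⟩
    · rintro ⟨u, rfl⟩
      obtain ⟨z, hz⟩ := Stmt9Aux2.kappa_surjective f W₀ u
      exact ⟨z, by rw [← hz]; exact (Stmt9Aux2.comp_eq f W₀ hW₀' z).symm⟩
  -- counting the components
  set T : Finset (Set (F × (Fin l → F))) := Finset.univ.image (Stmt9Aux2.θf f W₀) with hT
  have hcT : comps = ↑T := by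
    rw [hcomps2, hT, Finset.coe_image, Finset.coe_univ, Set.image_univ]
  have hmemT : Stmt9Aux2.θf f W₀ u₀ ∈ T := by
    rw [hT]; exact Finset.mem_image_of_mem _ (Finset.mem_univ u₀)
  have hT1 : 1 ≤ T.card := Finset.card_pos.2 ⟨_, hmemT⟩
  have hcount := Finset.card_eq_sum_card_image (Stmt9Aux2.θf f W₀)
    (Finset.univ : Finset ((Fin l → F) ⧸ W₀))
  rw [← hT] at hcount
  have hfilter : ∀ S ∈ T,
      (Finset.univ.filter (fun u => Stmt9Aux2.θf f W₀ u = S)).card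
        = if S = Stmt9Aux2.θf f W₀ u₀ then 1 else 2 := by
    intro S hS
    rw [hT, Finset.mem_image] at hS
    obtain ⟨v, -, rfl⟩ := hS
    have hfeq : Finset.univ.filter (fun u => Stmt9Aux2.θf f W₀ u = Stmt9Aux2.θf f W₀ v)
        = {v, -v - Stmt9Aux2.cb f W₀} := by
      ext u
      simp only [Finset.mem_filter, Finset.mem_univ, true_and, Finset.mem_insert,
        Finset.mem_singleton]
      rw [Stmt9Aux2.theta_eq]
      constructor
      · rintro (rfl | hh)
        · exact Or.inl rfl
        · exact Or.inr ((Stmt9Aux2.swap_eq _ _ _).1 hh)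
      · rintro (rfl | rfl)
        · exact Or.inl rfl
        · exact Or.inr (by abel)
    rw [hfeq]
    by_cases hv : v = u₀
    · subst hv
      rw [if_pos rfl, hfixu₀]
      simp
    · rw [if_neg (fun hcon => hv ((hθu₀ v).1 hcon)),
        Finset.card_pair (fun hcon => hv ((hfix v).1 hcon.symm))]
  have hQT : Fintype.card ((Fin l → F) ⧸ W₀) = 2 * T.card - 1 := by
    rw [← Finset.card_univ, hcount, Finset.sum_congr rfl hfilter,
      ← Finset.sum_erase_add T _ hmemT, if_pos rfl]
    have herase : ∑ S ∈ T.erase (Stmt9Aux2.θf f W₀ u₀),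
        (if S = Stmt9Aux2.θf f W₀ u₀ then 1 else 2) = 2 * (T.card - 1) := by
      rw [Finset.sum_congr rfl (fun S hS => if_neg (Finset.ne_of_mem_erase hS)),
        Finset.sum_const, Finset.card_erase_of_mem hmemT, smul_eq_mul, mul_comm]
    rw [herase]; omega
  have hkey2 : 2 * T.card = p ^ (e * l - d) + 1 := by
    rw [hcardQ] at hQT
    have hN1 : 1 ≤ p ^ (e * l - d) := Nat.one_le_pow _ _ hp.pos
    omega
  have hppos : 0 < p ^ (e + d) := pow_pos hp.pos _
  refine ⟨?_, ?_, ?_, ?_⟩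
  · rw [hcT, Set.ncard_coe_finset]; omega
  · have hset2 : {S ∈ comps | S.ncard = p ^ (e + d)} = {Stmt9Aux2.θf f W₀ u₀} := by
      ext S
      simp only [Set.mem_setOf_eq, Set.mem_singleton_iff]
      constructor
      · rintro ⟨hS, hc⟩
        rw [hcomps2] at hS
        obtain ⟨u, rfl⟩ := hS
        by_cases hu : u = u₀
        · rw [hu]
        · rw [hθcard u, if_neg hu] at hc; omega
      · rintro rfl
        refine ⟨by rw [hcomps2]; exact ⟨u₀, rfl⟩, ?_⟩
        rw [hθcard u₀, if_pos rfl]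
    rw [hset2, Set.ncard_singleton]
  · have hset3 : {S ∈ comps | S.ncard = 2 * p ^ (e + d)}
        = ↑(T.erase (Stmt9Aux2.θf f W₀ u₀)) := by
      ext S
      simp only [Set.mem_setOf_eq, Finset.coe_erase, Set.mem_diff, Finset.mem_coe,
        Set.mem_singleton_iff]
      constructor
      · rintro ⟨hS, hc⟩
        rw [hcomps2] at hS
        obtain ⟨u, rfl⟩ := hS
        have hu : u ≠ u₀ := by
          intro hu; rw [hθcard u, if_pos hu] at hc; omega
        refine ⟨?_, fun hcon => hu ((hθu₀ u).1 hcon)⟩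
        rw [hT]; exact Finset.mem_image_of_mem _ (Finset.mem_univ u)
      · rintro ⟨hS, hne⟩
        rw [hT, Finset.mem_image] at hS
        obtain ⟨u, -, rfl⟩ := hS
        have hu : u ≠ u₀ := fun hcon => hne (by rw [hcon])
        exact ⟨by rw [hcomps2]; exact ⟨u, rfl⟩, by rw [hθcard u, if_neg hu]⟩
    rw [hset3, Set.ncard_coe_finset, Finset.card_erase_of_mem hmemT]
    omega
  · intro S hS
    rw [hcomps2] at hS
    obtain ⟨u, rfl⟩ := hS
    rw [hθcard u]
    by_cases hu : u = u₀
    · rw [if_pos hu]; exact Or.inl rfl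
    · rw [if_neg hu]; exact Or.inr rfl
end

section
/- Let p be an odd prime, e ≥ 1, q = p^e, l ≥ 1, and f₀ : F_q^2 → F_q^l with f₀(0,0) = 0; let d = dim_{F_p} W₀. Then any two strong components of D(q;f₀) of order 2·p^{e+d} are isomorphic as digraphs: if (u₁,v₁) and (u₂,v₂) are vertices with v₁ ∉ g(u₁) + W₀ and v₂ ∉ g(u₂) + W₀, then the map sending (a, ±v₁ + h(a) ∓ g(u₁) + y) to (a, ±v₂ + h(a) ∓ g(u₂) + y) for a ∈ F_q and y ∈ W₀ is an isomorphism between the subdigraphs induced on the strong components containing (u₁,v₁) and (u₂,v₂). -/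
open Relation

set_option maxHeartbeats 2000000 in
/-- For odd `q = p^e`, `f₀` with `f₀(0,0) = 0`, and vertices `(u₁,v₁)`,
`(u₂,v₂)` with `v₁ ∉ g(u₁) + W₀` and `v₂ ∉ g(u₂) + W₀`, the map sending
`(a, ±v₁ + h(a) ∓ g(u₁) + y)` to `(a, ±v₂ + h(a) ∓ g(u₂) + y)` (for `a ∈ F_q`,
`y ∈ W₀`) is an isomorphism between the subdigraphs induced on the strong components
containing `(u₁,v₁)` and `(u₂,v₂)`. -/
theorem stmt_10 {p e l : ℕ} (hp : p.Prime) (hodd : Odd p) (he : 1 ≤ e) (hl : 1 ≤ l)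
    {F : Type*} [Field F] [Fintype F] [Algebra (ZMod p) F]
    (hF : Fintype.card F = p ^ e)
    (f₀ : F × F → Fin l → F) (hf₀ : f₀ (0, 0) = 0)
    (g h : F → Fin l → F) (hg : ∀ t, g t = f₀ (t, 0)) (hh : ∀ t, h t = f₀ (0, t))
    (W₀ : Submodule (ZMod p) (Fin l → F))
    (hW₀ : W₀ = Submodule.span (ZMod p)
      (Set.range fun xy : F × F => f₀ xy - g xy.2 - h xy.1))
    (u₁ u₂ : F) (v₁ v₂ : Fin l → F)
    (hv₁ : ¬ ∃ w ∈ W₀, v₁ = g u₁ + w) (hv₂ : ¬ ∃ w ∈ W₀, v₂ = g u₂ + w)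
    (C₁ C₂ : Set (F × (Fin l → F)))
    (hC₁ : C₁ = {z | ReflTransGen
        (fun z w : F × (Fin l → F) => z.2 + w.2 = f₀ (z.1, w.1)) (u₁, v₁) z ∧
      ReflTransGen (fun z w : F × (Fin l → F) => z.2 + w.2 = f₀ (z.1, w.1)) z (u₁, v₁)})
    (hC₂ : C₂ = {z | ReflTransGen
        (fun z w : F × (Fin l → F) => z.2 + w.2 = f₀ (z.1, w.1)) (u₂, v₂) z ∧
      ReflTransGen (fun z w : F × (Fin l → F) => z.2 + w.2 = f₀ (z.1, w.1)) z (u₂, v₂)}) :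
    ∃ ψ : C₁ ≃ C₂,
      (∀ (a : F) (y : Fin l → F), y ∈ W₀ →
        ∀ hmem : (a, v₁ + h a - g u₁ + y) ∈ C₁,
          (ψ ⟨(a, v₁ + h a - g u₁ + y), hmem⟩ : F × (Fin l → F))
            = (a, v₂ + h a - g u₂ + y)) ∧
      (∀ (a : F) (y : Fin l → F), y ∈ W₀ →
        ∀ hmem : (a, -v₁ + h a + g u₁ + y) ∈ C₁,
          (ψ ⟨(a, -v₁ + h a + g u₁ + y), hmem⟩ : F × (Fin l → F))
            = (a, -v₂ + h a + g u₂ + y)) ∧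
      (∀ z w : C₁,
        ((z : F × (Fin l → F)).2 + (w : F × (Fin l → F)).2
            = f₀ ((z : F × (Fin l → F)).1, (w : F × (Fin l → F)).1)) ↔
        ((ψ z : F × (Fin l → F)).2 + (ψ w : F × (Fin l → F)).2
            = f₀ ((ψ z : F × (Fin l → F)).1, (ψ w : F × (Fin l → F)).1))) := by
  classical
  haveI := Fact.mk hp
  subst hC₁ hC₂
  set Rel : (F × (Fin l → F)) → (F × (Fin l → F)) → Prop :=
    fun z w => z.2 + w.2 = f₀ (z.1, w.1) with hRel
  -- characteristic p facts
  have hcharF : CharP F p :=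
    charP_of_injective_ringHom (algebraMap (ZMod p) F).injective p
  have hpF : (p : F) = 0 := CharP.cast_eq_zero F p
  have hps : ∀ x : Fin l → F, p • x = 0 := by
    intro x; funext i
    simp [Pi.smul_apply, nsmul_eq_mul, hpF]
  -- basic W₀ membership facts
  have hrange : ∀ a b : F, f₀ (a, b) - g b - h a ∈ W₀ := by
    intro a b; rw [hW₀]; exact Submodule.subset_span ⟨(a, b), rfl⟩
  have hg0 : g 0 = 0 := by rw [hg]; exact hf₀
  have hgh : ∀ b : F, g b - h b ∈ W₀ := by
    intro b
    have h1 := hrange b 0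
    rw [hg0] at h1
    rw [hg b]
    simpa using h1
  have hkey : ∀ (a b : F) (w : Fin l → F), w ∈ W₀ → f₀ (a, b) - h a - h b - w ∈ W₀ := by
    intro a b w hw
    have heq : f₀ (a, b) - h a - h b - w
        = (f₀ (a, b) - g b - h a) + (g b - h b) - w := by abel
    rw [heq]
    exact Submodule.sub_mem _ (Submodule.add_mem _ (hrange a b) (hgh b)) hw
  -- single arc step
  have sstep : ∀ (a b : F) (x : Fin l → F), Rel (a, x) (b, f₀ (a, b) - x) := by
    intro a b x
    show x + (f₀ (a, b) - x) = f₀ (a, b)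
    abel
  have sstep' : ∀ (a b : F) (x y : Fin l → F), y = f₀ (a, b) - x → Rel (a, x) (b, y) := by
    intro a b x y hy; rw [hy]; exact sstep a b x
  -- loops: from (a,x) we can reach (a, x + w) for any w ∈ W₀
  have iter : ∀ (a : F) (δ : Fin l → F),
      (∀ x : Fin l → F, ReflTransGen Rel (a, x) (a, x + δ)) →
      ∀ (n : ℕ) (x : Fin l → F), ReflTransGen Rel (a, x) (a, x + n • δ) := by
    intro a δ hδ n
    induction n with
    | zero => intro x; simpa using ReflTransGen.refl
    | succ n ih =>
      intro x
      have h1 : ReflTransGen Rel (a, x) (a, x + δ) := hδ x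
      have h2 : ReflTransGen Rel (a, x + δ) (a, x + δ + n • δ) := ih (x + δ)
      have h3 : x + δ + n • δ = x + (n + 1) • δ := by
        rw [succ_nsmul]; abel
      rw [h3] at h2
      exact h1.trans h2
  have loop2 : ∀ (a : F) (x : Fin l → F),
      ReflTransGen Rel (a, x) (a, x + (h a - g a)) := by
    intro a x
    have s1 : Rel (a, x) (0, f₀ (a, 0) - x) := sstep a 0 x
    have s2 : Rel (0, f₀ (a, 0) - x) (a, x + (h a - g a)) := by
      apply sstep'
      rw [hg a, hh a]
      abel
    exact (ReflTransGen.single s1).tail s2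
  have loop6 : ∀ (a s t : F) (x : Fin l → F),
      ReflTransGen Rel (a, x) (a, x + (-(f₀ (s, t) - g t - h s) + (h a - g a))) := by
    intro a s t x
    have s1 : Rel (a, x) (0, f₀ (a, 0) - x) := sstep a 0 x
    have s2 : Rel (0, f₀ (a, 0) - x) (s, f₀ (0, s) - (f₀ (a, 0) - x)) := sstep 0 s _
    have s3 : Rel (s, f₀ (0, s) - (f₀ (a, 0) - x))
        (t, f₀ (s, t) - (f₀ (0, s) - (f₀ (a, 0) - x))) := sstep s t _
    have s4 : Rel (t, f₀ (s, t) - (f₀ (0, s) - (f₀ (a, 0) - x)))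
        (0, f₀ (t, 0) - (f₀ (s, t) - (f₀ (0, s) - (f₀ (a, 0) - x)))) := sstep t 0 _
    have s5 : Rel (0, f₀ (t, 0) - (f₀ (s, t) - (f₀ (0, s) - (f₀ (a, 0) - x))))
        (0, f₀ (0, 0) - (f₀ (t, 0) - (f₀ (s, t) - (f₀ (0, s) - (f₀ (a, 0) - x))))) :=
      sstep 0 0 _
    have s6 : Rel (0, f₀ (0, 0) - (f₀ (t, 0) - (f₀ (s, t) - (f₀ (0, s) - (f₀ (a, 0) - x)))))
        (a, x + (-(f₀ (s, t) - g t - h s) + (h a - g a))) := by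
      apply sstep'
      rw [hf₀, hg t, hh s, hg a, hh a]
      abel
    exact ((((((ReflTransGen.single s1).tail s2).tail s3).tail s4).tail s5).tail s6)
  have hloop : ∀ (a : F) (x w : Fin l → F), w ∈ W₀ →
      ReflTransGen Rel (a, x) (a, x + w) := by
    intro a x w hw
    rw [hW₀] at hw
    revert x
    induction hw using Submodule.span_induction with
    | mem w hwmem =>
      obtain ⟨⟨s, t⟩, rfl⟩ := hwmem
      intro x
      set δ : Fin l → F := -(f₀ (s, t) - g t - h s) + (h a - g a) with hδ
      have h1 : ReflTransGen Rel (a, x) (a, x + (p - 1) • δ) :=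
        iter a δ (loop6 a s t) (p - 1) x
      have h2 : ReflTransGen Rel (a, x + (p - 1) • δ)
          (a, x + (p - 1) • δ + (h a - g a)) := loop2 a _
      have hneg : (p - 1) • δ = -δ := by
        have hp1 : p - 1 + 1 = p := Nat.succ_pred_eq_of_pos hp.pos
        have hz : (p - 1) • δ + δ = 0 := by
          rw [← succ_nsmul, hp1]; exact hps δ
        exact eq_neg_of_add_eq_zero_left hz
      have h3 : x + (p - 1) • δ + (h a - g a)
          = x + (f₀ (s, t) - g t - h s) := by
        rw [hneg, hδ]; abel
      rw [h3] at h2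
      exact h1.trans h2
    | zero => intro x; simpa using ReflTransGen.refl
    | add w₁ w₂ hw₁ hw₂ ih₁ ih₂ =>
      intro x
      have h1 := ih₁ x
      have h2 := ih₂ (x + w₁)
      have h3 : x + w₁ + w₂ = x + (w₁ + w₂) := by abel
      rw [h3] at h2
      exact h1.trans h2
    | smul c w hw ih =>
      intro x
      have hc : c • w = c.val • w := by
        rw [← Nat.cast_smul_eq_nsmul (ZMod p) c.val w, ZMod.natCast_rightInverse c]
      rw [hc]
      exact iter a w ih c.val x
  -- arc transition lemmas: plus-side goes to minus-side and back
  have step : ∀ (u : F) (v : Fin l → F) (z w : F × (Fin l → F)), Rel z w →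
      ∀ y ∈ W₀,
        (z.2 = v + h z.1 - g u + y → ∃ y' ∈ W₀, w.2 = -v + h w.1 + g u + y') ∧
        (z.2 = -v + h z.1 + g u + y → ∃ y' ∈ W₀, w.2 = v + h w.1 - g u + y') := by
    intro u v z w hzw y hy
    have hw2 : w.2 = f₀ (z.1, w.1) - z.2 := by
      rw [← hzw]; abel
    constructor
    · intro hz
      exact ⟨f₀ (z.1, w.1) - h z.1 - h w.1 - y, hkey _ _ _ hy, by rw [hw2, hz]; abel⟩
    · intro hz
      exact ⟨f₀ (z.1, w.1) - h z.1 - h w.1 - y, hkey _ _ _ hy, by rw [hw2, hz]; abel⟩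
  have backstep : ∀ (u : F) (v : Fin l → F) (z w : F × (Fin l → F)), Rel z w →
      ∀ y ∈ W₀,
        (w.2 = v + h w.1 - g u + y → ∃ y' ∈ W₀, z.2 = -v + h z.1 + g u + y') ∧
        (w.2 = -v + h w.1 + g u + y → ∃ y' ∈ W₀, z.2 = v + h z.1 - g u + y') := by
    intro u v z w hzw y hy
    have hz2 : z.2 = f₀ (z.1, w.1) - w.2 := by
      rw [← hzw]; abel
    constructor
    · intro hw'
      exact ⟨f₀ (z.1, w.1) - h z.1 - h w.1 - y, hkey _ _ _ hy, by rw [hz2, hw']; abel⟩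
    · intro hw'
      exact ⟨f₀ (z.1, w.1) - h z.1 - h w.1 - y, hkey _ _ _ hy, by rw [hz2, hw']; abel⟩
  -- disjointness of the two sides
  have h2ne : (2 : ZMod p) ≠ 0 := by
    intro h20
    have h2 : ((2 : ℕ) : ZMod p) = 0 := by exact_mod_cast h20
    rw [ZMod.natCast_eq_zero_iff] at h2
    rcases (Nat.prime_two.eq_one_or_self_of_dvd p h2) with h1 | h1
    · exact hp.one_lt.ne' h1
    · rw [h1] at hodd; exact (Nat.not_odd_iff_even.mpr even_two) hodd
  have hdisj : ∀ (u : F) (v : Fin l → F), (¬ ∃ w ∈ W₀, v = g u + w) →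
      ∀ (a : F) (x : Fin l → F) (y y' : Fin l → F), y ∈ W₀ → y' ∈ W₀ →
      x = v + h a - g u + y → x = -v + h a + g u + y' → False := by
    intro u v hv a x y y' hy hy' h1 h2
    apply hv
    refine ⟨(2 : ZMod p)⁻¹ • (y' - y),
      Submodule.smul_mem _ _ (Submodule.sub_mem _ hy' hy), ?_⟩
    have h3 : v + h a - g u + y = -v + h a + g u + y' := h1.symm.trans h2
    have h4 : (2 : ZMod p) • (v - g u) = y' - y := by
      rw [two_smul]
      have : v - g u + (v - g u) = (v + h a - g u + y) + (-v + h a + g u + y')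
          - ((-v + h a + g u + y') + (-v + h a + g u + y')) + (y' - y) := by abel
      rw [this, ← h3]
      abel
    calc v = g u + (v - g u) := by abel
      _ = g u + (2 : ZMod p)⁻¹ • ((2 : ZMod p) • (v - g u)) := by
          rw [inv_smul_smul₀ h2ne]
      _ = g u + (2 : ZMod p)⁻¹ • (y' - y) := by rw [h4]
  -- component = explicit set, for a generic base point
  have hcomp : ∀ (u : F) (v : Fin l → F), (¬ ∃ w ∈ W₀, v = g u + w) →
      ∀ z : F × (Fin l → F),
      (ReflTransGen Rel (u, v) z ∧ ReflTransGen Rel z (u, v)) ↔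
      ((∃ y ∈ W₀, z.2 = v + h z.1 - g u + y) ∨
       (∃ y ∈ W₀, z.2 = -v + h z.1 + g u + y)) := by
    intro u v hv z
    constructor
    · rintro ⟨hfwd, -⟩
      -- by induction along the walk; base point is on the plus side
      clear hv
      induction hfwd with
      | refl =>
        exact Or.inl ⟨g u - h u, hgh u, by show v = v + h u - g u + (g u - h u); abel⟩
      | tail hzb hrel ih =>
        rcases ih with ⟨y, hy, hz⟩ | ⟨y, hy, hz⟩
        · exact Or.inr ((step u v _ _ hrel y hy).1 hz)
        · exact Or.inl ((step u v _ _ hrel y hy).2 hz)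
    · -- reachability both ways for every element of the explicit set
      intro hset
      obtain ⟨a, x⟩ := z
      rcases hset with ⟨y, hy, hx⟩ | ⟨y, hy, hx⟩
      · replace hx : x = v + h a - g u + y := hx
        constructor
        · -- (u,v) → (0, g u - v) → (a, v + h a - g u) →loop→ (a, x)
          have s1 : Rel (u, v) (0, f₀ (u, 0) - v) := sstep u 0 v
          have s2 : Rel (0, f₀ (u, 0) - v) (a, v + h a - g u) := by
            apply sstep'
            rw [hg u, hh a]
            abel
          have s3 : ReflTransGen Rel (a, v + h a - g u) (a, v + h a - g u + y) :=
            hloop a _ y hy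
          rw [show (a, x) = (a, v + h a - g u + y) by rw [hx]]
          exact ((ReflTransGen.single s1).tail s2).trans s3
        · -- (a,x) → (0, g a - x) → (u, v + w₀) →loop→ (u, v)
          have s1 : Rel (a, x) (0, f₀ (a, 0) - x) := sstep a 0 x
          have s2 : Rel (0, f₀ (a, 0) - x) (u, v + (h u - g u + h a - g a + y)) := by
            apply sstep'
            rw [hx, hg a, hh u]
            abel
          have hw₀ : h u - g u + h a - g a + y ∈ W₀ := by
            have m1 : h u - g u + h a - g a + y
                = -(g u - h u) + -(g a - h a) + y := by abel
            rw [m1]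
            exact Submodule.add_mem _
              (Submodule.add_mem _ (Submodule.neg_mem _ (hgh u))
                (Submodule.neg_mem _ (hgh a))) hy
          have s3 : ReflTransGen Rel (u, v + (h u - g u + h a - g a + y))
              (u, v + (h u - g u + h a - g a + y) + -(h u - g u + h a - g a + y)) :=
            hloop u _ _ (Submodule.neg_mem _ hw₀)
          rw [show v + (h u - g u + h a - g a + y) + -(h u - g u + h a - g a + y) = v
            by abel] at s3
          exact ((ReflTransGen.single s1).tail s2).trans s3
      · replace hx : x = -v + h a + g u + y := hx
        constructor
        · -- (u,v) → (a, f₀(u,a) - v) →loop→ (a, x)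
          have s1 : Rel (u, v) (a, f₀ (u, a) - v) := sstep u a v
          have hw₁ : f₀ (u, a) - h u - h a - (g u - h u) ∈ W₀ :=
            hkey u a _ (hgh u)
          have s3 : ReflTransGen Rel (a, f₀ (u, a) - v)
              (a, f₀ (u, a) - v + (y - (f₀ (u, a) - h u - h a - (g u - h u)))) :=
            hloop a _ _ (Submodule.sub_mem _ hy hw₁)
          rw [show f₀ (u, a) - v + (y - (f₀ (u, a) - h u - h a - (g u - h u)))
              = -v + h a + g u + y by abel] at s3
          rw [show (a, x) = (a, -v + h a + g u + y) by rw [hx]]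
          exact (ReflTransGen.single s1).trans s3
        · -- (a,x) → (u, v + w₂) →loop→ (u,v)
          have s1 : Rel (a, x) (u, v + (f₀ (a, u) - g u - h a - y)) := by
            apply sstep'
            rw [hx]
            abel
          have hw₂ : f₀ (a, u) - g u - h a - y ∈ W₀ :=
            Submodule.sub_mem _ (hrange a u) hy
          have s3 : ReflTransGen Rel (u, v + (f₀ (a, u) - g u - h a - y))
              (u, v + (f₀ (a, u) - g u - h a - y) + -(f₀ (a, u) - g u - h a - y)) :=
            hloop u _ _ (Submodule.neg_mem _ hw₂)
          rw [show v + (f₀ (a, u) - g u - h a - y) + -(f₀ (a, u) - g u - h a - y) = v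
            by abel] at s3
          exact (ReflTransGen.single s1).trans s3
  -- the shift constant and the maps
  set c : Fin l → F := v₂ - v₁ + g u₁ - g u₂ with hc
  set Φ : F × (Fin l → F) → F × (Fin l → F) :=
    fun z => if ∃ y ∈ W₀, z.2 = v₁ + h z.1 - g u₁ + y then (z.1, z.2 + c)
      else (z.1, z.2 - c) with hΦ
  set Φ' : F × (Fin l → F) → F × (Fin l → F) :=
    fun z => if ∃ y ∈ W₀, z.2 = v₂ + h z.1 - g u₂ + y then (z.1, z.2 - c)
      else (z.1, z.2 + c) with hΦ'
  have hC₁iff := hcomp u₁ v₁ hv₁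
  have hC₂iff := hcomp u₂ v₂ hv₂
  -- values of Φ on the two sides
  have hΦP : ∀ z : F × (Fin l → F), (∃ y ∈ W₀, z.2 = v₁ + h z.1 - g u₁ + y) →
      Φ z = (z.1, z.2 + c) := by
    intro z hz; rw [hΦ]; simp only [if_pos hz]
  have hΦM : ∀ z : F × (Fin l → F), (∃ y ∈ W₀, z.2 = -v₁ + h z.1 + g u₁ + y) →
      Φ z = (z.1, z.2 - c) := by
    intro z hz
    rw [hΦ]
    have : ¬ ∃ y ∈ W₀, z.2 = v₁ + h z.1 - g u₁ + y := by
      rintro ⟨y, hy, hzy⟩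
      obtain ⟨y', hy', hzy'⟩ := hz
      exact hdisj u₁ v₁ hv₁ z.1 z.2 y y' hy hy' hzy hzy'
    simp only [if_neg this]
  have hΦ'P : ∀ z : F × (Fin l → F), (∃ y ∈ W₀, z.2 = v₂ + h z.1 - g u₂ + y) →
      Φ' z = (z.1, z.2 - c) := by
    intro z hz; rw [hΦ']; simp only [if_pos hz]
  have hΦ'M : ∀ z : F × (Fin l → F), (∃ y ∈ W₀, z.2 = -v₂ + h z.1 + g u₂ + y) →
      Φ' z = (z.1, z.2 + c) := by
    intro z hz
    rw [hΦ']
    have : ¬ ∃ y ∈ W₀, z.2 = v₂ + h z.1 - g u₂ + y := by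
      rintro ⟨y, hy, hzy⟩
      obtain ⟨y', hy', hzy'⟩ := hz
      exact hdisj u₂ v₂ hv₂ z.1 z.2 y y' hy hy' hzy hzy'
    simp only [if_neg this]
  -- Φ maps side 1 to side 2 with the same witness
  have hPtoP : ∀ (a : F) (x y : Fin l → F), x = v₁ + h a - g u₁ + y →
      x + c = v₂ + h a - g u₂ + y := by
    intro a x y hx; rw [hx, hc]; abel
  have hMtoM : ∀ (a : F) (x y : Fin l → F), x = -v₁ + h a + g u₁ + y →
      x - c = -v₂ + h a + g u₂ + y := by
    intro a x y hx; rw [hx, hc]; abel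
  have hPtoP' : ∀ (a : F) (x y : Fin l → F), x = v₂ + h a - g u₂ + y →
      x - c = v₁ + h a - g u₁ + y := by
    intro a x y hx; rw [hx, hc]; abel
  have hMtoM' : ∀ (a : F) (x y : Fin l → F), x = -v₂ + h a + g u₂ + y →
      x + c = -v₁ + h a + g u₁ + y := by
    intro a x y hx; rw [hx, hc]; abel
  -- membership transport
  have hmem₁₂ : ∀ z : F × (Fin l → F),
      z ∈ {z | ReflTransGen Rel (u₁, v₁) z ∧ ReflTransGen Rel z (u₁, v₁)} →
      Φ z ∈ {z | ReflTransGen Rel (u₂, v₂) z ∧ ReflTransGen Rel z (u₂, v₂)} := by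
    intro z hz
    rcases (hC₁iff z).mp hz with ⟨y, hy, hzy⟩ | ⟨y, hy, hzy⟩
    · rw [hΦP z ⟨y, hy, hzy⟩]
      exact (hC₂iff _).mpr (Or.inl ⟨y, hy, hPtoP z.1 z.2 y hzy⟩)
    · rw [hΦM z ⟨y, hy, hzy⟩]
      exact (hC₂iff _).mpr (Or.inr ⟨y, hy, hMtoM z.1 z.2 y hzy⟩)
  have hmem₂₁ : ∀ z : F × (Fin l → F),
      z ∈ {z | ReflTransGen Rel (u₂, v₂) z ∧ ReflTransGen Rel z (u₂, v₂)} →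
      Φ' z ∈ {z | ReflTransGen Rel (u₁, v₁) z ∧ ReflTransGen Rel z (u₁, v₁)} := by
    intro z hz
    rcases (hC₂iff z).mp hz with ⟨y, hy, hzy⟩ | ⟨y, hy, hzy⟩
    · rw [hΦ'P z ⟨y, hy, hzy⟩]
      exact (hC₁iff _).mpr (Or.inl ⟨y, hy, hPtoP' z.1 z.2 y hzy⟩)
    · rw [hΦ'M z ⟨y, hy, hzy⟩]
      exact (hC₁iff _).mpr (Or.inr ⟨y, hy, hMtoM' z.1 z.2 y hzy⟩)
  -- Φ' ∘ Φ = id on C₁, Φ ∘ Φ' = id on C₂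
  have hli : ∀ z : F × (Fin l → F),
      z ∈ {z | ReflTransGen Rel (u₁, v₁) z ∧ ReflTransGen Rel z (u₁, v₁)} →
      Φ' (Φ z) = z := by
    intro z hz
    rcases (hC₁iff z).mp hz with ⟨y, hy, hzy⟩ | ⟨y, hy, hzy⟩
    · rw [hΦP z ⟨y, hy, hzy⟩, hΦ'P (z.1, z.2 + c) ⟨y, hy, hPtoP z.1 z.2 y hzy⟩]
      show (z.1, z.2 + c - c) = z
      rw [add_sub_cancel_right]
    · rw [hΦM z ⟨y, hy, hzy⟩, hΦ'M (z.1, z.2 - c) ⟨y, hy, hMtoM z.1 z.2 y hzy⟩]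
      show (z.1, z.2 - c + c) = z
      rw [sub_add_cancel]
  have hri : ∀ z : F × (Fin l → F),
      z ∈ {z | ReflTransGen Rel (u₂, v₂) z ∧ ReflTransGen Rel z (u₂, v₂)} →
      Φ (Φ' z) = z := by
    intro z hz
    rcases (hC₂iff z).mp hz with ⟨y, hy, hzy⟩ | ⟨y, hy, hzy⟩
    · rw [hΦ'P z ⟨y, hy, hzy⟩, hΦP (z.1, z.2 - c) ⟨y, hy, hPtoP' z.1 z.2 y hzy⟩]
      show (z.1, z.2 - c + c) = z
      rw [sub_add_cancel]
    · rw [hΦ'M z ⟨y, hy, hzy⟩, hΦM (z.1, z.2 + c) ⟨y, hy, hMtoM' z.1 z.2 y hzy⟩]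
      show (z.1, z.2 + c - c) = z
      rw [add_sub_cancel_right]
  refine ⟨⟨fun z => ⟨Φ z.1, hmem₁₂ z.1 z.2⟩, fun z => ⟨Φ' z.1, hmem₂₁ z.1 z.2⟩,
    fun z => Subtype.ext (hli z.1 z.2), fun z => Subtype.ext (hri z.1 z.2)⟩, ?_, ?_, ?_⟩
  · intro a y hy hmem
    show Φ (a, v₁ + h a - g u₁ + y) = (a, v₂ + h a - g u₂ + y)
    rw [hΦP (a, v₁ + h a - g u₁ + y) ⟨y, hy, rfl⟩]
    exact Prod.ext rfl (hPtoP a _ y rfl)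
  · intro a y hy hmem
    show Φ (a, -v₁ + h a + g u₁ + y) = (a, -v₂ + h a + g u₂ + y)
    rw [hΦM (a, -v₁ + h a + g u₁ + y) ⟨y, hy, rfl⟩]
    exact Prod.ext rfl (hMtoM a _ y rfl)
  · rintro ⟨z, hz⟩ ⟨w, hw⟩
    show Rel z w ↔ Rel (Φ z) (Φ w)
    rcases (hC₁iff z).mp hz with ⟨y, hy, hzy⟩ | ⟨y, hy, hzy⟩ <;>
      rcases (hC₁iff w).mp hw with ⟨y', hy', hwy⟩ | ⟨y', hy', hwy⟩
    · -- both plus: no arc on either side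
      constructor
      · intro hrel
        obtain ⟨y'', hy'', hwy''⟩ := (step u₁ v₁ z w hrel y hy).1 hzy
        exact (hdisj u₁ v₁ hv₁ w.1 w.2 y' y'' hy' hy'' hwy hwy'').elim
      · intro hrel
        rw [hΦP z ⟨y, hy, hzy⟩, hΦP w ⟨y', hy', hwy⟩] at hrel
        obtain ⟨y'', hy'', hwy''⟩ := (step u₂ v₂ (z.1, z.2 + c) (w.1, w.2 + c)
          hrel y hy).1 (hPtoP z.1 z.2 y hzy)
        exact (hdisj u₂ v₂ hv₂ w.1 (w.2 + c) y' y'' hy' hy''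
          (hPtoP w.1 w.2 y' hwy) hwy'').elim
    · -- plus to minus: arcs preserved
      rw [hΦP z ⟨y, hy, hzy⟩, hΦM w ⟨y', hy', hwy⟩]
      show z.2 + w.2 = f₀ (z.1, w.1) ↔ z.2 + c + (w.2 - c) = f₀ (z.1, w.1)
      constructor <;> intro hr
      · rw [← hr]; abel
      · rw [← hr]; abel
    · -- minus to plus: arcs preserved
      rw [hΦM z ⟨y, hy, hzy⟩, hΦP w ⟨y', hy', hwy⟩]
      show z.2 + w.2 = f₀ (z.1, w.1) ↔ z.2 - c + (w.2 + c) = f₀ (z.1, w.1)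
      constructor <;> intro hr
      · rw [← hr]; abel
      · rw [← hr]; abel
    · -- both minus: no arc on either side
      constructor
      · intro hrel
        obtain ⟨y'', hy'', hwy''⟩ := (step u₁ v₁ z w hrel y hy).2 hzy
        exact (hdisj u₁ v₁ hv₁ w.1 w.2 y'' y' hy'' hy' hwy'' hwy).elim
      · intro hrel
        rw [hΦM z ⟨y, hy, hzy⟩, hΦM w ⟨y', hy', hwy⟩] at hrel
        obtain ⟨y'', hy'', hwy''⟩ := (step u₂ v₂ (z.1, z.2 - c) (w.1, w.2 - c)
          hrel y hy).2 (hMtoM z.1 z.2 y hzy)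
        exact (hdisj u₂ v₂ hv₂ w.1 (w.2 - c) y'' y' hy'' hy'
          hwy'' (hMtoM w.1 w.2 y' hwy)).elim
end

section
/- Let p = 2, e ≥ 1, q = 2^e, l ≥ 1, and f : F_q^2 → F_q^l. Then for every vertex (u, v) of D(q;f), the vertex set of the strong component of D(q;f) containing (u, v) equals { (a, v + h(a) + g(u) + W₀) : a ∈ F_q } ∪ { (a, v + h(a) + g(u) + f(0,0) + W₀) : a ∈ F_q }, which equals { (a, v + h(a) + g(u) + W) : a ∈ F_q }, where W = W₀ + Span_{F_2}{f(0,0)}. -/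
/-!
In characteristic 2 an arc `(a, p) → (b, p + f(a, b))` changes the potential `p + f(0, a)` by
`f(a, b) + f(0, a) + f(0, b)`, which is `f(0, 0)` modulo the span `W₀` of the label sums
`f(0, x) + f(x, y) + f(y, 0) + f(0, 0)` of the closed walks `0 → x → y → 0 → 0`. Conversely,
walking `a → 0`, around such closed walks at `0`, and `0 → b` (with one extra loop `0 → 0` to
add `f(0, 0)`) realises every change of potential in `W = W₀ + ⟨f(0, 0)⟩`. So `(b, q)` is
reachable from `(a, p)` iff the two potentials differ by an element of `W`, a symmetric condition.
-/

open Relation Submodule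

namespace AlgebraicDigraph

section CharTwo

lemma eq_zero_or_eq_one_of_zmod_two (k : ZMod 2) : k = 0 ∨ k = 1 := by
  decide +revert

variable {V : Type*} [AddCommGroup V] [Module (ZMod 2) V]

lemma eq_of_add_add_self_eq {x y : V} (d : V) (h : x + (d + d) = y) : x = y := by
  rwa [ZModModule.add_self, add_zero] at h

lemma mem_sup_span_singleton_iff {W : Submodule (ZMod 2) V} {c x : V} :
    x ∈ W ⊔ span (ZMod 2) {c} ↔ x ∈ W ∨ x - c ∈ W := by
  constructor
  · intro hx
    obtain ⟨y, hy, _, hc, rfl⟩ := mem_sup.1 hx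
    obtain ⟨k, rfl⟩ := mem_span_singleton.1 hc
    rcases eq_zero_or_eq_one_of_zmod_two k with rfl | rfl
    · left; simpa using hy
    · right; simpa using hy
  · rintro (hx | hx)
    · exact mem_sup_left hx
    · rw [← sub_add_cancel x c]
      exact add_mem (mem_sup_left hx) (mem_sup_right (mem_span_singleton_self c))

end CharTwo

lemma exists_eq_add_mem_iff {α R M : Type*} [Ring R] [AddCommGroup M] [Module R M]
    (W : Submodule R M) (φ : α → M) (z : α × M) :
    (∃ a, ∃ w ∈ W, z = (a, φ a + w)) ↔ z.2 - φ z.1 ∈ W := by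
  constructor
  · rintro ⟨a, w, hw, rfl⟩
    simpa using hw
  · exact fun h => ⟨z.1, _, h, by simp⟩

lemma union_coset_eq {α V : Type*} [AddCommGroup V] [Module (ZMod 2) V]
    (φ : α → V) (W : Submodule (ZMod 2) V) (c : V) :
    {z : α × V | ∃ a, ∃ w ∈ W, z = (a, φ a + w)} ∪ {z | ∃ a, ∃ w ∈ W, z = (a, φ a + c + w)} =
      {z | ∃ a, ∃ w ∈ W ⊔ span (ZMod 2) {c}, z = (a, φ a + w)} := by
  ext z
  have hc := exists_eq_add_mem_iff W (fun a => φ a + c) z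
  rw [Set.mem_union, Set.mem_ofPred_eq, Set.mem_ofPred_eq, Set.mem_ofPred_eq,
    exists_eq_add_mem_iff, hc, exists_eq_add_mem_iff, mem_sup_span_singleton_iff,
    sub_add_eq_sub_sub]

section Arc

variable {α V : Type*} [AddCommGroup V] (f : α × α → V)

def Arc (z w : α × V) : Prop := z.2 + w.2 = f (z.1, w.1)

variable [Module (ZMod 2) V]

lemma arc_add (a b : α) (p : V) : Arc f (a, p) (b, p + f (a, b)) := by
  simp [Arc, ← add_assoc, ZModModule.add_self]

lemma reflTransGen_arc_add (a b : α) (p : V) :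
    ReflTransGen (Arc f) (a, p) (b, p + f (a, b)) :=
  .single (arc_add f a b p)

end Arc

variable {α V : Type*} [Zero α] [AddCommGroup V] (f : α × α → V)

/-- In characteristic 2 this is the paper's `f̃₀(x, y) = f(x, y) - g(y) - h(x) - f(0, 0)`. -/
def cycleSum (x y : α) : V := f (0, x) + f (x, y) + f (y, 0) + f (0, 0)

def potential (z : α × V) : V := z.2 + f (0, z.1)

variable [Module (ZMod 2) V]

def cycleSpan : Submodule (ZMod 2) V :=
  span (ZMod 2) (Set.range fun xy : α × α => cycleSum f xy.1 xy.2)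

lemma cycleSum_mem_cycleSpan (x y : α) : cycleSum f x y ∈ cycleSpan f :=
  subset_span ⟨(x, y), rfl⟩

lemma cycleSum_zero_left (y : α) : cycleSum f 0 y = f (0, y) + f (y, 0) :=
  (eq_of_add_add_self_eq (f (0, 0)) (by unfold cycleSum; abel)).symm

lemma reflTransGen_arc_zero_add {w : V} (hw : w ∈ cycleSpan f) (p : V) :
    ReflTransGen (Arc f) (0, p) (0, p + w) := by
  induction hw using span_induction generalizing p with
  | mem _ hx =>
    obtain ⟨⟨x, y⟩, rfl⟩ := hx
    simpa only [cycleSum, add_assoc] using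
      (((reflTransGen_arc_add f 0 x p).trans (reflTransGen_arc_add f x y _)).trans
        (reflTransGen_arc_add f y 0 _)).trans (reflTransGen_arc_add f 0 0 _)
  | zero => simpa using ReflTransGen.refl
  | add x y _ _ ihx ihy => simpa only [add_assoc] using (ihx p).trans (ihy (p + x))
  | smul k x _ ih =>
    rcases eq_zero_or_eq_one_of_zmod_two k with rfl | rfl
    · simpa using ReflTransGen.refl
    · simpa using ih p

lemma reflTransGen_arc_of_potential_add_mem {z w : α × V}
    (h : potential f z + potential f w ∈ cycleSpan f) : ReflTransGen (Arc f) z w := by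
  obtain ⟨a, p⟩ := z
  obtain ⟨b, q⟩ := w
  have hx : p + f (a, 0) + q + f (0, b) ∈ cycleSpan f := by
    have hx_eq : potential f (a, p) + potential f (b, q) + cycleSum f 0 a =
        p + f (a, 0) + q + f (0, b) := by
      rw [cycleSum_zero_left]
      exact (eq_of_add_add_self_eq (f (0, a)) (by unfold potential; abel)).symm
    exact hx_eq ▸ add_mem h (cycleSum_mem_cycleSpan f 0 a)
  have hq : p + f (a, 0) + (p + f (a, 0) + q + f (0, b)) + f (0, b) = q :=
    (eq_of_add_add_self_eq (p + f (a, 0) + f (0, b)) (by abel)).symm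
  have walk := ((reflTransGen_arc_add f a 0 p).trans
    (reflTransGen_arc_zero_add f hx _)).trans (reflTransGen_arc_add f 0 b _)
  rwa [hq] at walk

lemma potential_add_potential_sub_mem_of_arc {z w : α × V} (h : Arc f z w) :
    potential f z + potential f w - f (0, 0) ∈ cycleSpan f := by
  have key : cycleSum f z.1 w.1 + cycleSum f 0 w.1 = potential f z + potential f w - f (0, 0) := by
    rw [cycleSum_zero_left, ZModModule.sub_eq_add]
    refine (eq_of_add_add_self_eq (f (w.1, 0)) ?_).symm
    unfold potential cycleSum
    rw [← h]
    abel
  exact key ▸ add_mem (cycleSum_mem_cycleSpan f _ _) (cycleSum_mem_cycleSpan f _ _)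

theorem reflTransGen_arc_iff {z w : α × V} :
    ReflTransGen (Arc f) z w ↔
      potential f z + potential f w ∈ cycleSpan f ⊔ span (ZMod 2) {f (0, 0)} := by
  constructor
  · intro h
    induction h with
    | refl => simp [ZModModule.add_self]
    | @tail m w _ hmw ih =>
      have hstep : potential f m + potential f w ∈ cycleSpan f ⊔ span (ZMod 2) {f (0, 0)} := by
        rw [← sub_add_cancel (_ + potential f w)]
        exact add_mem (mem_sup_left (potential_add_potential_sub_mem_of_arc f hmw))
          (mem_sup_right (mem_span_singleton_self _))
      rw [← ZModModule.add_add_add_cancel _ (potential f m)]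
      exact add_mem ih hstep
  · rw [mem_sup_span_singleton_iff]
    rintro (h | h)
    · exact reflTransGen_arc_of_potential_add_mem f h
    · obtain ⟨a, p⟩ := z
      have hloop := potential_add_potential_sub_mem_of_arc f (arc_add f a a p)
      refine (reflTransGen_arc_add f a a p).trans (reflTransGen_arc_of_potential_add_mem f ?_)
      have key : potential f (a, p) + potential f w - f (0, 0) +
          (potential f (a, p) + potential f (a, p + f (a, a)) - f (0, 0)) =
          potential f (a, p + f (a, a)) + potential f w := by
        rw [ZModModule.sub_eq_add, ZModModule.sub_eq_add]
        exact (eq_of_add_add_self_eq (potential f (a, p) + f (0, 0)) (by abel)).symm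
      exact key ▸ add_mem h hloop

theorem strongComponent_eq (u : α) (v : V) :
    {z | ReflTransGen (Arc f) (u, v) z ∧ ReflTransGen (Arc f) z (u, v)} =
      {z | ∃ a, ∃ w ∈ cycleSpan f ⊔ span (ZMod 2) {f (0, 0)},
        z = (a, v + f (0, a) + f (u, 0) + w)} := by
  ext z
  refine Iff.trans ?_ (exists_eq_add_mem_iff _ (fun a => v + f (0, a) + f (u, 0)) z).symm
  rw [Set.mem_ofPred_eq, reflTransGen_arc_iff, reflTransGen_arc_iff, add_comm (potential f z),
    and_self]
  have key : potential f (u, v) + potential f z + cycleSum f 0 u =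
      z.2 - (v + f (0, z.1) + f (u, 0)) := by
    rw [cycleSum_zero_left, ZModModule.sub_eq_add]
    exact (eq_of_add_add_self_eq (f (0, u)) (by unfold potential; abel)).symm
  rw [← key, Submodule.add_mem_iff_left _ (mem_sup_left (cycleSum_mem_cycleSpan f 0 u))]

end AlgebraicDigraph

open Relation AlgebraicDigraph

theorem stmt_11_general {l : ℕ}
    {F : Type*} [Field F] [Algebra (ZMod 2) F]
    (f : F × F → Fin l → F)
    (f₀ : F × F → Fin l → F) (hf₀ : ∀ xy, f₀ xy = f xy - f (0, 0))
    (g h : F → Fin l → F) (hg : ∀ t, g t = f (t, 0) - f (0, 0))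
    (hh : ∀ t, h t = f (0, t) - f (0, 0))
    (W₀ : Submodule (ZMod 2) (Fin l → F))
    (hW₀ : W₀ = Submodule.span (ZMod 2)
      (Set.range fun xy : F × F => f₀ xy - g xy.2 - h xy.1))
    (W : Submodule (ZMod 2) (Fin l → F))
    (hW : W = W₀ ⊔ Submodule.span (ZMod 2) {f (0, 0)})
    (u : F) (v : Fin l → F) :
    {z : F × (Fin l → F) |
        ReflTransGen (fun z w : F × (Fin l → F) => z.2 + w.2 = f (z.1, w.1)) (u, v) z ∧
        ReflTransGen (fun z w : F × (Fin l → F) => z.2 + w.2 = f (z.1, w.1)) z (u, v)} =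
      {z : F × (Fin l → F) | ∃ a : F, ∃ w ∈ W₀, z = (a, v + h a + g u + w)} ∪
      {z : F × (Fin l → F) | ∃ a : F, ∃ w ∈ W₀, z = (a, v + h a + g u + f (0, 0) + w)} ∧
    {z : F × (Fin l → F) | ∃ a : F, ∃ w ∈ W₀, z = (a, v + h a + g u + w)} ∪
      {z : F × (Fin l → F) | ∃ a : F, ∃ w ∈ W₀, z = (a, v + h a + g u + f (0, 0) + w)} =
      {z : F × (Fin l → F) | ∃ a : F, ∃ w ∈ W, z = (a, v + h a + g u + w)} := by
  have hφ (a : F) : v + h a + g u = v + f (0, a) + f (u, 0) := by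
    rw [hh, hg, ZModModule.sub_eq_add, ZModModule.sub_eq_add]
    exact (eq_of_add_add_self_eq (f (0, 0)) (by abel)).symm
  have hW₀_eq : W₀ = cycleSpan f := by
    rw [hW₀, cycleSpan]
    congr
    funext ⟨x, y⟩
    rw [hf₀, hg, hh]
    simp only [ZModModule.sub_eq_add]
    exact (eq_of_add_add_self_eq (f (0, 0)) (by unfold cycleSum; abel)).symm
  subst hW₀_eq hW
  simp only [hφ]
  have hunion := union_coset_eq (fun a => v + f (0, a) + f (u, 0)) (cycleSpan f) (f (0, 0))
  exact ⟨(strongComponent_eq f u v).trans hunion.symm, hunion⟩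

/-- For `q = 2^e`, the vertex set of the strong component of `D(q;f)`
containing `(u,v)` equals
`{(a, v + h(a) + g(u) + W₀) : a} ∪ {(a, v + h(a) + g(u) + f(0,0) + W₀) : a}`,
which equals `{(a, v + h(a) + g(u) + W) : a}` with `W = W₀ + Span_{F_2}{f(0,0)}`. -/
theorem stmt_11 {e l : ℕ} (he : 1 ≤ e) (hl : 1 ≤ l)
    {F : Type*} [Field F] [Fintype F] [Algebra (ZMod 2) F]
    (hF : Fintype.card F = 2 ^ e)
    (f : F × F → Fin l → F)
    (f₀ : F × F → Fin l → F) (hf₀ : ∀ xy, f₀ xy = f xy - f (0, 0))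
    (g h : F → Fin l → F) (hg : ∀ t, g t = f (t, 0) - f (0, 0))
    (hh : ∀ t, h t = f (0, t) - f (0, 0))
    (W₀ : Submodule (ZMod 2) (Fin l → F))
    (hW₀ : W₀ = Submodule.span (ZMod 2)
      (Set.range fun xy : F × F => f₀ xy - g xy.2 - h xy.1))
    (W : Submodule (ZMod 2) (Fin l → F))
    (hW : W = W₀ ⊔ Submodule.span (ZMod 2) {f (0, 0)})
    (u : F) (v : Fin l → F) :
    {z : F × (Fin l → F) |
        ReflTransGen (fun z w : F × (Fin l → F) => z.2 + w.2 = f (z.1, w.1)) (u, v) z ∧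
        ReflTransGen (fun z w : F × (Fin l → F) => z.2 + w.2 = f (z.1, w.1)) z (u, v)} =
      {z : F × (Fin l → F) | ∃ a : F, ∃ w ∈ W₀, z = (a, v + h a + g u + w)} ∪
      {z : F × (Fin l → F) | ∃ a : F, ∃ w ∈ W₀, z = (a, v + h a + g u + f (0, 0) + w)} ∧
    {z : F × (Fin l → F) | ∃ a : F, ∃ w ∈ W₀, z = (a, v + h a + g u + w)} ∪
      {z : F × (Fin l → F) | ∃ a : F, ∃ w ∈ W₀, z = (a, v + h a + g u + f (0, 0) + w)} =
      {z : F × (Fin l → F) | ∃ a : F, ∃ w ∈ W, z = (a, v + h a + g u + w)} :=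
  stmt_11_general f f₀ hf₀ g h hg hh W₀ hW₀ W hW u v
end

section
/- Let p = 2, e ≥ 1, q = 2^e, l ≥ 1, and f : F_q^2 → F_q^l. If (u,v) = (x₀, w₀) → (x₁, w₁) → ⋯ → (x_k, w_k) = (x_k, v + y) is a directed walk in D(q;f) with k ≥ 1, then y = Σ_{i=0}^{k-1} f₀(x_i, x_{i+1}) + δ·f(0,0), where δ = 1 if k is odd and δ = 0 if k is even, and f₀(x,y) = f(x,y) - f(0,0). -/
/-- For `q = 2^e`, if `(u,v) = (x₀,w₀) → ⋯ → (x_k,w_k) = (x_k, v + y)`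
is a directed walk in `D(q;f)` with `k ≥ 1`, then
`y = Σ_{i=0}^{k-1} f₀(x_i, x_{i+1}) + δ·f(0,0)` with `δ = 1` for `k` odd and `δ = 0`
for `k` even, where `f₀(x,y) = f(x,y) - f(0,0)`. -/
theorem stmt_13 {e l : ℕ} (he : 1 ≤ e) (hl : 1 ≤ l)
    {F : Type*} [Field F] [Fintype F]
    (hF : Fintype.card F = 2 ^ e)
    (f : F × F → Fin l → F)
    (f₀ : F × F → Fin l → F) (hf₀ : ∀ xy, f₀ xy = f xy - f (0, 0))
    (k : ℕ) (hk1 : 1 ≤ k)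
    (c : ℕ → F × (Fin l → F)) (u : F) (v y : Fin l → F)
    (hc0 : c 0 = (u, v)) (hck : (c k).2 = v + y)
    (hstep : ∀ i < k, (c i).2 + (c (i + 1)).2 = f ((c i).1, (c (i + 1)).1)) :
    y = (∑ i ∈ Finset.range k, f₀ ((c i).1, (c (i + 1)).1)) +
      (if Odd k then f (0, 0) else 0) := by
  -- characteristic 2
  obtain ⟨p, hpc⟩ := CharP.exists F
  haveI := hpc
  have hprime : p.Prime := CharP.char_is_prime F p
  obtain ⟨n, hn, hcard⟩ := FiniteField.card F p
  have hp2 : p = 2 := by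
    have hdvd : p ∣ 2 ^ e := by
      rw [← hF, hcard]
      exact dvd_pow_self p (PNat.ne_zero n)
    have := hprime.dvd_of_dvd_pow hdvd
    exact (Nat.prime_dvd_prime_iff_eq hprime Nat.prime_two).mp this
  haveI hF2 : CharP F 2 := hp2 ▸ hpc
  have h2 : ∀ a : F, a + a = 0 := fun a => CharTwo.add_self_eq_zero a
  have hv : ∀ a : Fin l → F, a + a = 0 := fun a => funext fun i => by
    simp [h2]
  -- telescoping
  have key : ∀ m, m ≤ k → (c m).2 = v + ∑ i ∈ Finset.range m, f ((c i).1, (c (i + 1)).1) := by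
    intro m
    induction m with
    | zero => intro _; simp [hc0]
    | succ m ih =>
      intro hm
      have hmk : m < k := Nat.lt_of_succ_le hm
      have hstep' := hstep m hmk
      have ihm := ih (Nat.le_of_lt hmk)
      have : (c (m + 1)).2 = (c m).2 + f ((c m).1, (c (m + 1)).1) := by
        have := congrArg (fun z => (c m).2 + z) hstep'
        simpa [← add_assoc, hv] using this
      rw [this, ihm, Finset.sum_range_succ, add_assoc]
  have hS := key k le_rfl
  rw [hck] at hS
  have hy : y = ∑ i ∈ Finset.range k, f ((c i).1, (c (i + 1)).1) := add_left_cancel hS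
  have hfeq : ∀ i, f ((c i).1, (c (i + 1)).1) = f₀ ((c i).1, (c (i + 1)).1) + f (0, 0) := by
    intro i; rw [hf₀]; ring
  rw [hy]
  have : ∑ i ∈ Finset.range k, f ((c i).1, (c (i + 1)).1)
      = (∑ i ∈ Finset.range k, f₀ ((c i).1, (c (i + 1)).1)) + k • f (0, 0) := by
    simp only [hfeq]
    rw [Finset.sum_add_distrib, Finset.sum_const, Finset.card_range]
  rw [this]
  congr 1
  rcases Nat.even_or_odd k with ⟨m, hm⟩ | ⟨m, hm⟩
  · have : ¬ Odd k := by exact Nat.not_odd_iff_even.mpr ⟨m, hm⟩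
    rw [if_neg this, hm, add_nsmul]
    exact hv _
  · have : Odd k := ⟨m, hm⟩
    rw [if_pos this, hm, add_nsmul, one_nsmul, mul_comm, mul_nsmul, two_nsmul, hv, zero_add]
end

section
/- Let p be a prime, e ≥ 1, q = p^e, and k ≥ 1 an integer; set k̄ = gcd(q-1, k) and A_k = {x^k : x ∈ F_q, x ≠ 0}. For each positive divisor e_i of e let q_i = (q-1)/(p^{e_i}-1), and let q_s = (q-1)/(p^{e_s}-1) be the largest among the q_i that divides k̄. Then the subfield of F_q consisting of the elements fixed by the e_s-th power of the Frobenius (i.e., {x ∈ F_q : x^{p^{e_s}} = x}, the unique subfield of F_q with p^{e_s} elements) contains A_k, and every subfield of F_q containing A_k contains this subfield; moreover, the F_p-linear span of A_k in F_q equals this subfield. -/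
lemma aux_gcd_pow_sub_one (m a x y : ℕ) (ha : 0 < a)
    (h1 : m ∣ a ^ x - 1) (h2 : m ∣ a ^ y - 1) : m ∣ a ^ Nat.gcd x y - 1 := by
  have key : ∀ z : ℕ, (m ∣ a ^ z - 1) ↔ ((a : ZMod m) ^ z = 1) := by
    intro z
    rw [← Nat.modEq_iff_dvd' (Nat.one_le_pow _ _ ha), Nat.ModEq.comm,
      ← ZMod.natCast_eq_natCast_iff]
    push_cast
    rfl
  rw [key] at h1 h2 ⊢
  exact orderOf_dvd_iff_pow_eq_one.mp
    (Nat.dvd_gcd (orderOf_dvd_of_pow_eq_one h1) (orderOf_dvd_of_pow_eq_one h2))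

lemma aux_div_dvd_iff (n a b m : ℕ) (hn : 0 < n) (ha : a ∣ n) (hbm : b * m = n) :
    (n / a ∣ b ↔ m ∣ a) := by
  have ha0 : 0 < a := Nat.pos_of_dvd_of_pos ha hn
  have hna : n / a * a = n := Nat.div_mul_cancel ha
  have hna0 : 0 < n / a := Nat.div_pos (Nat.le_of_dvd hn ha) ha0
  have hm0 : 0 < m := by
    rcases Nat.eq_zero_or_pos m with rfl | h
    · omega
    · exact h
  constructor
  · rintro ⟨c, hc⟩
    refine ⟨c, ?_⟩
    have h : n / a * a = n / a * (c * m) := by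
      calc n / a * a = n := hna
        _ = b * m := hbm.symm
        _ = n / a * (c * m) := by rw [hc]; ring
    rw [Nat.eq_of_mul_eq_mul_left hna0 h, Nat.mul_comm]
  · rintro ⟨c, hc⟩
    refine ⟨c, ?_⟩
    have h : b * m = n / a * c * m := by
      rw [hbm]
      calc n = n / a * a := hna.symm
        _ = n / a * c * m := by rw [hc]; ring
    exact Nat.eq_of_mul_eq_mul_right hm0 h

/-- Let `q = p^e`, `k̄ = gcd(q-1,k)`, `A_k = {x^k : x ∈ F_q^*}`, and let
`q_s = (q-1)/(p^{e_s}-1)` be the largest among the numbers `q_i = (q-1)/(p^{e_i}-1)`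
(over positive divisors `e_i` of `e`) dividing `k̄`. Then the subfield
`{x : x^{p^{e_s}} = x}` of `F_q` contains `A_k`, every subfield of `F_q` containing
`A_k` contains it, and the `F_p`-span of `A_k` equals it. -/
theorem stmt_14 {p e : ℕ} (hp : p.Prime) (he : 1 ≤ e)
    {F : Type*} [Field F] [Fintype F] [Algebra (ZMod p) F]
    (hF : Fintype.card F = p ^ e)
    (k : ℕ) (hk : 1 ≤ k)
    (Ak : Set F) (hAk : Ak = {y : F | ∃ x : F, x ≠ 0 ∧ y = x ^ k})
    (es : ℕ) (hes1 : 1 ≤ es) (hesdvd : es ∣ e)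
    (hqs : (p ^ e - 1) / (p ^ es - 1) ∣ Nat.gcd (p ^ e - 1) k)
    (hmax : ∀ ei : ℕ, 1 ≤ ei → ei ∣ e →
      (p ^ e - 1) / (p ^ ei - 1) ∣ Nat.gcd (p ^ e - 1) k →
      (p ^ e - 1) / (p ^ ei - 1) ≤ (p ^ e - 1) / (p ^ es - 1)) :
    Ak ⊆ {x : F | x ^ p ^ es = x} ∧
    (∀ K : Subfield F, Ak ⊆ (K : Set F) → {x : F | x ^ p ^ es = x} ⊆ (K : Set F)) ∧
    (Submodule.span (ZMod p) Ak : Set F) = {x : F | x ^ p ^ es = x} := by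
  classical
  haveI := Fact.mk hp
  haveI : CharP F p := charP_of_injective_algebraMap (algebraMap (ZMod p) F).injective p
  haveI : ExpChar F p := ExpChar.prime hp
  have hp2 : 2 ≤ p := hp.two_le
  have hq1 : 1 < p ^ e := Nat.one_lt_pow (by omega) hp.one_lt
  set n : ℕ := p ^ e - 1 with hndef
  have hn : 0 < n := by omega
  set kb : ℕ := Nat.gcd n k with hkbdef
  have hkbn : kb ∣ n := Nat.gcd_dvd_left _ _
  have hkbk : kb ∣ k := Nat.gcd_dvd_right _ _
  set m : ℕ := n / kb with hmdef
  have hmn : kb * m = n := Nat.mul_div_cancel' hkbn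
  have hmpos : 0 < m := by
    rcases Nat.eq_zero_or_pos m with h | h
    · rw [h, mul_zero] at hmn; omega
    · exact h
  -- p^ei - 1 divides n for ei ∣ e
  have hdvd_sub : ∀ ei : ℕ, ei ∣ e → p ^ ei - 1 ∣ n := by
    rintro ei ⟨d, rfl⟩
    have h := Nat.sub_dvd_pow_sub_pow (p ^ ei) 1 d
    rw [one_pow, ← pow_mul] at h
    exact h
  have hiff : ∀ ei : ℕ, ei ∣ e → (n / (p ^ ei - 1) ∣ kb ↔ m ∣ p ^ ei - 1) := by
    intro ei hei
    exact aux_div_dvd_iff n (p ^ ei - 1) kb m hn (hdvd_sub ei hei) hmn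
  have hs_dvd : m ∣ p ^ es - 1 := (hiff es hesdvd).mp hqs
  have hpes1 : 1 ≤ p ^ es := Nat.one_le_pow _ _ hp.pos
  -- Part 1
  have part1 : Ak ⊆ {x : F | x ^ p ^ es = x} := by
    intro y hy
    rw [hAk] at hy
    obtain ⟨x, hx0, rfl⟩ := hy
    show (x ^ k) ^ p ^ es = x ^ k
    obtain ⟨t, ht⟩ : (n / (p ^ es - 1)) ∣ k := hqs.trans (Nat.gcd_dvd_right _ _)
    have hxp : (x ^ k) ^ (p ^ es - 1) = 1 := by
      rw [← pow_mul]
      have hkm : k * (p ^ es - 1) = n * t := by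
        rw [ht, mul_comm _ t, mul_assoc, Nat.div_mul_cancel (hdvd_sub es hesdvd), mul_comm]
      rw [hkm, pow_mul]
      have hx1 : x ^ n = 1 := by
        have := FiniteField.pow_card_sub_one_eq_one x hx0
        rwa [hF] at this
      rw [hx1, one_pow]
    calc (x ^ k) ^ p ^ es = (x ^ k) ^ (p ^ es - 1 + 1) := by rw [Nat.sub_add_cancel hpes1]
      _ = (x ^ k) ^ (p ^ es - 1) * x ^ k := by rw [pow_succ]
      _ = x ^ k := by rw [hxp, one_mul]
  -- Part 2
  have part2 : ∀ K : Subfield F, Ak ⊆ (K : Set F) → {x : F | x ^ p ^ es = x} ⊆ (K : Set F) := by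
    intro K hK
    haveI : Finite K := Subtype.finite
    haveI : Fintype K := Fintype.ofFinite K
    obtain ⟨g, hg⟩ := IsCyclic.exists_generator (α := Fˣ)
    have hcardU : Nat.card Fˣ = n := by
      rw [Nat.card_eq_fintype_card, Fintype.card_units, hF]
    have hog : orderOf g = n := by
      rw [orderOf_eq_card_of_forall_mem_zpowers hg, hcardU]
    have hoz : orderOf (g ^ k) = m := by
      rw [orderOf_pow, hog]
    have hzK : ((g : F) ^ k) ∈ K := by
      apply hK
      rw [hAk]
      exact ⟨(g : F), Units.ne_zero g, rfl⟩
    obtain ⟨nt, -, hcK⟩ := FiniteField.card K p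
    set t : ℕ := (nt : ℕ) with htdef
    have ht1 : 1 ≤ t := nt.one_le
    have htdvd : t ∣ e := by
      have hcard : Fintype.card F = Fintype.card K ^ Module.finrank K F :=
        Module.card_eq_pow_finrank
      rw [hF, hcK, ← pow_mul] at hcard
      exact ⟨Module.finrank K F, Nat.pow_right_injective hp2 hcard⟩
    -- m divides p^t - 1
    have hmK : m ∣ p ^ t - 1 := by
      have hz0 : (⟨(g : F) ^ k, hzK⟩ : K) ≠ 0 := by
        intro h
        have : (g : F) ^ k = 0 := congrArg Subtype.val h
        exact (pow_ne_zero k (Units.ne_zero g)) this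
      have hz1 : (⟨(g : F) ^ k, hzK⟩ : K) ^ (Fintype.card K - 1) = 1 :=
        FiniteField.pow_card_sub_one_eq_one _ hz0
      have hz1F : ((g : F) ^ k) ^ (Fintype.card K - 1) = 1 := by
        have := congrArg Subtype.val hz1
        push_cast at this
        exact this
      have hz1U : (g ^ k) ^ (Fintype.card K - 1) = 1 := by
        ext
        push_cast
        exact hz1F
      have := orderOf_dvd_of_pow_eq_one hz1U
      rwa [hoz, hcK] at this
    -- maximality forces es ∣ t
    have hest : es ∣ t := by
      have hqt : n / (p ^ t - 1) ∣ kb := (hiff t htdvd).mpr hmK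
      have hd := aux_gcd_pow_sub_one m p es t hp.pos hs_dvd hmK
      set d : ℕ := Nat.gcd es t with hddef
      have hdes : d ∣ es := Nat.gcd_dvd_left _ _
      have hd1 : 1 ≤ d := Nat.gcd_pos_of_pos_left t (by omega)
      have hdde : d ∣ e := hdes.trans hesdvd
      have hqd : n / (p ^ d - 1) ∣ kb := (hiff d hdde).mpr hd
      have hle : n / (p ^ d - 1) ≤ n / (p ^ es - 1) := hmax d hd1 hdde hqd
      have hge : n / (p ^ es - 1) ≤ n / (p ^ d - 1) := by
        apply Nat.div_le_div_left
        · exact Nat.sub_le_sub_right (Nat.pow_le_pow_right hp.pos (Nat.le_of_dvd (by omega) hdes)) 1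
        · have : 1 < p ^ d := Nat.one_lt_pow (by omega) hp.one_lt
          omega
      have heq : n / (p ^ d - 1) = n / (p ^ es - 1) := le_antisymm hle hge
      have h1 : n / (p ^ d - 1) * (p ^ d - 1) = n := Nat.div_mul_cancel (hdvd_sub d hdde)
      have h2 : n / (p ^ es - 1) * (p ^ es - 1) = n := Nat.div_mul_cancel (hdvd_sub es hesdvd)
      have hpos : 0 < n / (p ^ d - 1) := Nat.div_pos (Nat.le_of_dvd hn (hdvd_sub d hdde))
        (by have : 1 < p ^ d := Nat.one_lt_pow (by omega) hp.one_lt; omega)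
      have hsub : p ^ d - 1 = p ^ es - 1 := by
        apply Nat.eq_of_mul_eq_mul_left hpos
        calc n / (p ^ d - 1) * (p ^ d - 1) = n := h1
          _ = n / (p ^ es - 1) * (p ^ es - 1) := h2.symm
          _ = n / (p ^ d - 1) * (p ^ es - 1) := by rw [heq]
      have hpd : p ^ d = p ^ es := by
        have h3 : 1 ≤ p ^ d := Nat.one_le_pow _ _ hp.pos
        omega
      have : d = es := Nat.pow_right_injective hp2 hpd
      rw [← this]
      exact Nat.gcd_dvd_right _ _
    -- conclude via counting
    intro x hx
    have hx' : x ^ p ^ es = x := hx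
    obtain ⟨r, hr⟩ := hest
    have hxt : x ^ p ^ t = x := by
      have key : ∀ j : ℕ, x ^ p ^ (es * j) = x := by
        intro j
        induction j with
        | zero => simp
        | succ j ih =>
          rw [Nat.mul_succ, pow_add, pow_mul, ih, hx']
      rw [hr]; exact key r
    -- the set of solutions has at most p^t elements and contains K
    set P : Polynomial F := Polynomial.X ^ p ^ t - Polynomial.X with hPdef
    have hPne : P ≠ 0 := FiniteField.X_pow_card_pow_sub_X_ne_zero F (by omega) hp.one_lt
    set S : Set F := {x : F | x ^ p ^ t = x} with hSdef
    have hSsub : S ⊆ ↑P.roots.toFinset := by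
      intro z hz
      simp only [Finset.coe_sort_coe, Multiset.mem_toFinset, Finset.mem_coe]
      rw [Polynomial.mem_roots hPne]
      simp only [Polynomial.IsRoot.def, hPdef, Polynomial.eval_sub, Polynomial.eval_pow,
        Polynomial.eval_X, sub_eq_zero]
      exact hz
    have hScard : S.ncard ≤ p ^ t := by
      calc S.ncard ≤ (↑P.roots.toFinset : Set F).ncard :=
            Set.ncard_le_ncard hSsub (Set.toFinite _)
        _ = P.roots.toFinset.card := Set.ncard_coe_finset _
        _ ≤ Multiset.card P.roots := Multiset.toFinset_card_le _
        _ ≤ P.natDegree := P.card_roots'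
        _ = p ^ t := FiniteField.X_pow_card_pow_sub_X_natDegree_eq F (by omega) hp.one_lt
    have hKsub : (K : Set F) ⊆ S := by
      intro z hz
      show z ^ p ^ t = z
      have := FiniteField.pow_card (⟨z, hz⟩ : K)
      rw [hcK] at this
      have h := congrArg Subtype.val this
      push_cast at h
      exact h
    have hKcard : (K : Set F).ncard = p ^ t := by
      rw [← hcK]
      rw [Set.ncard_eq_toFinset_card']
      rw [Set.toFinset_card]
      exact Fintype.card_congr (Equiv.setCongr rfl)
    have : (K : Set F) = S :=
      Set.eq_of_subset_of_ncard_le hKsub (by rw [hKcard]; exact hScard) (Set.toFinite _)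
    rw [this]
    exact hxt
  -- Part 3
  refine ⟨part1, part2, ?_⟩
  -- the subfield {x | x ^ p ^ es = x}
  have hpes0 : p ^ es ≠ 0 := by positivity
  let Esf : Subfield F :=
    { carrier := {x : F | x ^ p ^ es = x}
      zero_mem' := by simp [zero_pow hpes0]
      one_mem' := one_pow _
      add_mem' := by
        intro a b ha hb
        show (a + b) ^ p ^ es = a + b
        rw [add_pow_char_pow (R := F) (p := p), ha, hb]
      neg_mem' := by
        intro a ha
        show (-a) ^ p ^ es = -a
        have ha' : a ^ p ^ es = a := ha
        have h := sub_pow_char_pow (R := F) (p := p) (x := (0 : F)) (y := a) (n := es)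
        simpa [zero_pow hpes0, ha'] using h
      mul_mem' := by
        intro a b ha hb
        show (a * b) ^ p ^ es = a * b
        rw [mul_pow, ha, hb]
      inv_mem' := by
        intro a ha
        show a⁻¹ ^ p ^ es = a⁻¹
        rw [inv_pow, ha] }
  -- as a subalgebra over ZMod p
  let EsA : Subalgebra (ZMod p) F :=
    { Esf.toSubring with
      algebraMap_mem' := by
        intro c
        have hc : algebraMap (ZMod p) F c = ((c.val : ℕ) : F) := by
          conv_lhs => rw [← ZMod.natCast_rightInverse c]
          rw [map_natCast]
        rw [hc]
        exact natCast_mem Esf.toSubring c.val }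
  -- span equals adjoin
  let M : Submonoid F :=
    { carrier := Ak
      one_mem' := by
        show (1 : F) ∈ Ak
        rw [hAk]; exact ⟨1, one_ne_zero, (one_pow k).symm⟩
      mul_mem' := by
        rintro a b ha hb
        show _ * _ ∈ Ak
        rw [hAk] at ha hb ⊢
        obtain ⟨x, hx0, rfl⟩ := ha
        obtain ⟨y, hy0, rfl⟩ := hb
        exact ⟨x * y, mul_ne_zero hx0 hy0, (mul_pow x y k).symm⟩ }
  have hMA : (M : Set F) = Ak := rfl
  have hclos : Submonoid.closure Ak = M := Submonoid.closure_eq M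
  have hspan_eq : Submodule.span (ZMod p) Ak
      = Subalgebra.toSubmodule (Algebra.adjoin (ZMod p) Ak) := by
    rw [Algebra.adjoin_eq_span, hclos, hMA]
  set R₀ : Subalgebra (ZMod p) F := Algebra.adjoin (ZMod p) Ak with hR₀
  haveI : Finite R₀ := Subtype.finite
  have hfield : IsField R₀ := Finite.isField_of_domain R₀
  let K₀ : Subfield F :=
    { R₀.toSubring with
      inv_mem' := by
        intro x hx
        rcases eq_or_ne x 0 with rfl | hx0
        · simpa using R₀.toSubring.zero_mem
        · have hxne : (⟨x, hx⟩ : R₀) ≠ 0 := by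
            intro h
            exact hx0 (congrArg Subtype.val h)
          obtain ⟨y, hy⟩ := hfield.mul_inv_cancel hxne
          have hxy : x * (y : F) = 1 := congrArg Subtype.val hy
          have : x⁻¹ = (y : F) := inv_eq_of_mul_eq_one_right hxy
          rw [this]
          exact y.2 }
  have hAkK₀ : Ak ⊆ (K₀ : Set F) := fun x hx => Algebra.subset_adjoin hx
  apply Set.Subset.antisymm
  · -- span ⊆ Es
    have hle : Submodule.span (ZMod p) Ak ≤ Subalgebra.toSubmodule EsA :=
      Submodule.span_le.mpr part1
    exact fun x hx => hle hx
  · -- Es ⊆ span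
    intro x hx
    have hxK₀ : x ∈ K₀ := part2 K₀ hAkK₀ hx
    have hxR : x ∈ R₀ := hxK₀
    rw [SetLike.mem_coe, hspan_eq]
    exact hxR
end

section
/- Let p be a prime, e ≥ 1, q = p^e, and 1 ≤ m, n ≤ q-1; let d = gcd(q-1, m, n), and let q_s = (q-1)/(p^{e_s}-1) be the largest among the numbers q_i = (q-1)/(p^{e_i}-1) (over positive divisors e_i of e) that divides d. Then for every vertex (u,v) of the monomial digraph D(q;m,n), the vertex set of the strong component containing (u,v) equals {(x, v + c) : x ∈ F_q, c ∈ K} ∪ {(x, -v + c) : x ∈ F_q, c ∈ K}, where K = {y ∈ F_q : y^{p^{e_s}} = y} is the subfield of F_q with p^{e_s} elements. In particular, D(q;m,n) is strongly connected if and only if q_s = 1 (equivalently, e_s = e). -/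
/-!
Moving the first coordinate is free: `z → (0, -z.2) → (x, z.2)`. An arc
`(x, s) → (y, x ^ m * y ^ n - s)` acts on the second coordinate by `s ↦ a - s` with `a` in the
monoid `S` of values `x ^ m * y ^ n`, and every arc can be reversed. Hence the strong component of
`(u, v)` is `{(x, ±v + c) : c ∈ A}`, where `A` is the additive group generated by `S`.

Since `S` is multiplicative, `A` is a subring, hence a subfield with `p ^ e'` elements, `e' ∣ e`.
It contains all `m`-th and `n`-th powers, which forces `(q - 1) / (p ^ e' - 1) ∣ d`, so
`p ^ e_s ≤ p ^ e'` by maximality of `q_s`. On the other hand `q_s ∣ d` puts `S`, hence `A`, inside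
the subfield with `p ^ e_s` elements, and counting gives equality.
-/

open Relation

lemma Nat.le_of_div_le_div {a b c : ℕ} (ha : a ≠ 0) (hb : b ∣ a) (hc : c ∣ a)
    (h : a / b ≤ a / c) : c ≤ b := by
  have hb0 : 0 < b := Nat.pos_of_dvd_of_pos hb (Nat.pos_of_ne_zero ha)
  calc c = a / (a / c) := (Nat.div_div_self hc ha).symm
    _ ≤ a / (a / b) := Nat.div_le_div_left h (Nat.div_pos (Nat.le_of_dvd (by omega) hb) hb0)
    _ = b := Nat.div_div_self hb ha

lemma Nat.pow_sub_one_div_pow_sub_one_eq_one_iff {p a b : ℕ} (hp : 1 < p) (ha : a ≠ 0)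
    (hab : a ∣ b) : (p ^ b - 1) / (p ^ a - 1) = 1 ↔ a = b := by
  have hpa : 1 < p ^ a := Nat.one_lt_pow ha hp
  have hpb : 1 ≤ p ^ b := Nat.one_le_pow b p (by omega)
  rw [Nat.div_eq_iff_eq_mul_left (by omega) (Nat.pow_sub_one_dvd_pow_sub_one p hab), one_mul]
  exact ⟨fun h => Nat.pow_right_injective hp (show p ^ a = p ^ b by omega), fun h => h ▸ rfl⟩

lemma pow_eq_self_iff_pow_sub_one_eq_one {M : Type*} [MonoidWithZero M] [IsRightCancelMulZero M]
    {y : M} (hy : y ≠ 0) {N : ℕ} (hN : N ≠ 0) : y ^ N = y ↔ y ^ (N - 1) = 1 := by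
  rw [← pow_sub_one_mul hN, mul_eq_right₀ hy]

section FiniteField

variable {F : Type*} [Field F] [Fintype F]

lemma forall_pow_pow_eq_pow_iff {k N : ℕ} (hN : 1 < N) (hNq : N - 1 ∣ Fintype.card F - 1) :
    (∀ x : F, (x ^ k) ^ N = x ^ k) ↔ (Fintype.card F - 1) / (N - 1) ∣ k := by
  rw [Nat.div_dvd_iff_dvd_mul hNq (by omega), mul_comm, ← FiniteField.forall_pow_eq_one_iff]
  refine ⟨fun h x => Units.ext ?_, fun h x => ?_⟩
  · rw [Units.val_pow_eq_pow_val, pow_mul, Units.val_one,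
      ← pow_eq_self_iff_pow_sub_one_eq_one (pow_ne_zero _ x.ne_zero) (by omega)]
    exact h x
  · rcases eq_or_ne x 0 with rfl | hx
    · rcases k with _ | k <;> simp [show N ≠ 0 by omega]
    · rw [pow_eq_self_iff_pow_sub_one_eq_one (pow_ne_zero _ hx) (by omega), ← pow_mul]
      simpa using congrArg Units.val (h (Units.mk0 x hx))

lemma ncard_setOf_pow_eq_self_le {N : ℕ} (hN : 1 < N) : {c : F | c ^ N = c}.ncard ≤ N := by
  classical
  open Polynomial in
  calc {c : F | c ^ N = c}.ncard = (Finset.univ.filter fun c : F => c ^ N = c).card := by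
        rw [Set.ncard_eq_toFinset_card']; simp
    _ ≤ (X ^ N - X : F[X]).natDegree := by
        refine card_le_degree_of_subset_roots fun c hc => ?_
        rw [mem_roots (FiniteField.X_pow_card_sub_X_ne_zero F hN)]
        simpa [sub_eq_zero] using hc
    _ = N := FiniteField.X_pow_card_sub_X_natDegree_eq F hN

lemma forall_pow_prime_pow_eq_self_iff {p e es : ℕ} (hp : 1 < p) (hF : Fintype.card F = p ^ e)
    (hes : es ≠ 0) (hesdvd : es ∣ e) : (∀ c : F, c ^ p ^ es = c) ↔ es = e := by
  have he : e ≠ 0 := by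
    rintro rfl
    simpa [hF] using Fintype.one_lt_card (α := F)
  refine ⟨fun h => le_antisymm (Nat.le_of_dvd (by omega) hesdvd) ?_, fun h => ?_⟩
  · have hcard := ncard_setOf_pow_eq_self_le (F := F) (Nat.one_lt_pow hes hp)
    simp only [h, Set.ofPred_true, Set.ncard_univ, Nat.card_eq_fintype_card, hF] at hcard
    exact (Nat.pow_le_pow_iff_right hp).1 hcard
  · intro c
    rw [h, ← hF, FiniteField.pow_card]

lemma Subring.exists_card_eq_pow {p e : ℕ} (hp : p.Prime) (hF : Fintype.card F = p ^ e)
    (R : Subring F) : ∃ e', e' ∣ e ∧ e' ≠ 0 ∧ Nat.card R = p ^ e' ∧ ∀ a ∈ R, a ^ p ^ e' = a := by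
  classical
  -- `F` is a vector space over the finite field `R`, so `|F|` is a power of `|R|`
  let _ : Field R := Fintype.fieldOfDomain R
  obtain ⟨e', -, hR⟩ := (Nat.dvd_prime_pow hp).1
    (hF ▸ Nat.card_eq_fintype_card (α := F) ▸ R.toAddSubgroup.card_addSubgroup_dvd_card)
  have hRcard : Fintype.card R = p ^ e' := by rw [← Nat.card_eq_fintype_card]; exact hR
  have hdim : p ^ e = p ^ (e' * Module.finrank R F) := by
    rw [← hF, Module.card_eq_pow_finrank (K := R), hRcard, pow_mul]
  refine ⟨e', ⟨_, Nat.pow_right_injective hp.two_le hdim⟩, ?_, hR, fun a ha => ?_⟩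
  · rintro rfl
    simpa [hRcard] using Fintype.one_lt_card (α := R)
  · simpa [hRcard] using congrArg Subtype.val (FiniteField.pow_card (⟨a, ha⟩ : R))

end FiniteField

namespace MonomialDigraph

def Arc {F : Type*} [Field F] (m n : ℕ) (z w : F × F) : Prop := z.2 + w.2 = z.1 ^ m * w.1 ^ n

def values (F : Type*) [Field F] (m n : ℕ) : Submonoid F where
  carrier := {a | ∃ x y : F, x ^ m * y ^ n = a}
  one_mem' := ⟨1, 1, by simp⟩
  mul_mem' := by
    rintro _ _ ⟨x, y, rfl⟩ ⟨x', y', rfl⟩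
    exact ⟨x * x', y * y', by ring⟩

def valueSpan (F : Type*) [Field F] (m n : ℕ) : AddSubgroup F :=
  AddSubgroup.closure (values F m n)

variable {F : Type*} [Field F] {m n : ℕ}

lemma mem_values (x y : F) : x ^ m * y ^ n ∈ values F m n := ⟨x, y, rfl⟩

lemma zero_mem_values (hm : m ≠ 0) : (0 : F) ∈ values F m n := ⟨0, 0, by simp [zero_pow hm]⟩

lemma reach_fst (hm : m ≠ 0) (hn : n ≠ 0) (z : F × F) (x : F) :
    ReflTransGen (Arc m n) z (x, z.2) :=
  .head (b := (0, -z.2)) (by simp [Arc, zero_pow hn]) (.single (by simp [Arc, zero_pow hm]))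

lemma reach_symm_of_arc (hm : m ≠ 0) (hn : n ≠ 0) {z w : F × F} (h : Arc m n z w) :
    ReflTransGen (Arc m n) w z := by
  have hswap : Arc m n (z.1, w.2) (w.1, z.2) := by simpa [Arc, add_comm] using h
  exact ((reach_fst hm hn w z.1).tail hswap).trans (reach_fst hm hn _ z.1)

lemma reach_symm (hm : m ≠ 0) (hn : n ≠ 0) {z w : F × F} (h : ReflTransGen (Arc m n) z w) :
    ReflTransGen (Arc m n) w z := by
  induction h with
  | refl => exact .refl
  | tail _ hbc ih => exact (reach_symm_of_arc hm hn hbc).trans ih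

lemma reach_sub_of_mem_values (hm : m ≠ 0) (hn : n ≠ 0) {a : F} (ha : a ∈ values F m n)
    (x y s : F) : ReflTransGen (Arc m n) (x, s) (y, a - s) := by
  obtain ⟨x', y', rfl⟩ := ha
  have harc : Arc m n (x', s) (y', x' ^ m * y' ^ n - s) := by simp [Arc]
  exact ((reach_fst hm hn (x, s) x').tail harc).trans (reach_fst hm hn _ y)

lemma reach_add_of_mem_valueSpan (hm : m ≠ 0) (hn : n ≠ 0) {c : F}
    (hc : c ∈ valueSpan F m n) (x y s : F) :
    ReflTransGen (Arc m n) (x, s) (y, s + c) := by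
  induction hc using AddSubgroup.closure_induction generalizing x y s with
  | mem a ha =>
    have hneg := reach_sub_of_mem_values hm hn (zero_mem_values hm) x x s
    simpa [add_comm] using hneg.trans (reach_sub_of_mem_values hm hn ha x y (0 - s))
  | zero => simpa using reach_fst hm hn (x, s) y
  | add a b _ _ iha ihb => simpa [add_assoc] using (iha x y s).trans (ihb y y (s + a))
  | neg a _ iha => exact reach_symm hm hn (by simpa using iha y x (s + -a))

lemma sub_mem_or_add_mem_of_reach {B : AddSubgroup F} (hB : valueSpan F m n ≤ B)
    {u v : F} {z : F × F} (h : ReflTransGen (Arc m n) (u, v) z) : z.2 - v ∈ B ∨ z.2 + v ∈ B := by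
  induction h with
  | refl => simp
  | @tail b c _ hbc ih =>
    have ha : b.1 ^ m * c.1 ^ n ∈ B := hB (AddSubgroup.subset_closure (mem_values _ _))
    have hc : c.2 = b.1 ^ m * c.1 ^ n - b.2 := eq_sub_of_add_eq' hbc
    rcases ih with ih | ih
    · exact .inr (by simpa [hc, sub_add] using B.sub_mem ha ih)
    · exact .inl (by simpa [hc, sub_sub] using B.sub_mem ha ih)

theorem strongComponent_eq (hm : m ≠ 0) (hn : n ≠ 0) (u v : F) :
    {z | ReflTransGen (Arc m n) (u, v) z ∧ ReflTransGen (Arc m n) z (u, v)} =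
      {z | ∃ x c, c ∈ valueSpan F m n ∧ z = (x, v + c)} ∪
      {z | ∃ x c, c ∈ valueSpan F m n ∧ z = (x, -v + c)} := by
  ext z
  constructor
  · rintro ⟨h, -⟩
    rcases sub_mem_or_add_mem_of_reach le_rfl h with h | h
    · exact .inl ⟨z.1, _, h, by simp⟩
    · exact .inr ⟨z.1, _, h, by simp⟩
  · have hflip := reach_sub_of_mem_values hm hn (zero_mem_values hm) u u v
    rintro (⟨x, c, hc, rfl⟩ | ⟨x, c, hc, rfl⟩)
    · have h := reach_add_of_mem_valueSpan hm hn hc u x v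
      exact ⟨h, reach_symm hm hn h⟩
    · have h := hflip.trans (reach_add_of_mem_valueSpan hm hn hc u x (0 - v))
      rw [zero_sub] at h
      exact ⟨h, reach_symm hm hn h⟩

theorem reach_all_iff_forall_mem_valueSpan (hm : m ≠ 0) (hn : n ≠ 0) :
    (∀ z w : F × F, ReflTransGen (Arc m n) z w) ↔
      ∀ c : F, c ∈ valueSpan F m n := by
  refine ⟨fun h c => ?_, fun h z w => ?_⟩
  · simpa using sub_mem_or_add_mem_of_reach le_rfl (h (0, 0) (0, c))
  · simpa using reach_add_of_mem_valueSpan hm hn (h (w.2 - z.2)) z.1 w.1 z.2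

lemma valueSpan_eq_subringClosure :
    (valueSpan F m n : Set F) = Subring.closure (values F m n : Set F) := by
  ext
  rw [SetLike.mem_coe, SetLike.mem_coe, Subring.mem_closure_iff, Submonoid.closure_eq]
  rfl

section FiniteField

variable [Fintype F]

lemma pow_eq_self_of_mem_valueSpan {p e es : ℕ} [ExpChar F p] (hp : 1 < p)
    (hF : Fintype.card F = p ^ e) (hes : es ≠ 0) (hesdvd : es ∣ e)
    (hqs : (p ^ e - 1) / (p ^ es - 1) ∣ Nat.gcd m n) {c : F} (hc : c ∈ valueSpan F m n) :
    c ^ p ^ es = c := by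
  let K := (iterateFrobenius F p es).eqLocusField (RingHom.id F)
  have hpow : ∀ k, (p ^ e - 1) / (p ^ es - 1) ∣ k → ∀ x : F, x ^ k ∈ K := fun k hk =>
    (forall_pow_pow_eq_pow_iff (Nat.one_lt_pow hes hp)
      (hF ▸ Nat.pow_sub_one_dvd_pow_sub_one p hesdvd)).2 (hF ▸ hk)
  refine (AddSubgroup.closure_le (K := K.toAddSubgroup)).2 ?_ hc
  rintro _ ⟨x, y, rfl⟩
  exact K.mul_mem (hpow m (hqs.trans (Nat.gcd_dvd_left _ _)) x)
    (hpow n (hqs.trans (Nat.gcd_dvd_right _ _)) y)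

lemma exists_ncard_valueSpan_eq {p e : ℕ} (hp : p.Prime) (hF : Fintype.card F = p ^ e) :
    ∃ e', e' ∣ e ∧ e' ≠ 0 ∧ (p ^ e - 1) / (p ^ e' - 1) ∣ Nat.gcd (p ^ e - 1) (Nat.gcd m n) ∧
      (valueSpan F m n : Set F).ncard = p ^ e' := by
  obtain ⟨e', he'e, he'0, hcard, hpow⟩ :=
    Subring.exists_card_eq_pow hp hF (Subring.closure (values F m n : Set F))
  have hq : p ^ e' - 1 ∣ p ^ e - 1 := Nat.pow_sub_one_dvd_pow_sub_one p he'e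
  have hdvd : ∀ k, (∀ x : F, x ^ k ∈ values F m n) → (p ^ e - 1) / (p ^ e' - 1) ∣ k := fun k hk =>
    hF ▸ (forall_pow_pow_eq_pow_iff (Nat.one_lt_pow he'0 hp.one_lt) (hF ▸ hq)).1
      fun x => hpow _ (Subring.subset_closure (hk x))
  refine ⟨e', he'e, he'0, Nat.dvd_gcd (Nat.div_dvd_of_dvd hq) (Nat.dvd_gcd ?_ ?_), ?_⟩
  · exact hdvd m fun x => by simpa using mem_values (F := F) (m := m) (n := n) x 1
  · exact hdvd n fun y => by simpa using mem_values (F := F) (m := m) (n := n) 1 y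
  · rw [valueSpan_eq_subringClosure, ← Nat.card_coe_set_eq]
    exact hcard

theorem mem_valueSpan_iff {p e es d : ℕ} [ExpChar F p] (hp : p.Prime)
    (hF : Fintype.card F = p ^ e) (hd : d = Nat.gcd (p ^ e - 1) (Nat.gcd m n))
    (hes1 : 1 ≤ es) (hesdvd : es ∣ e) (hqs : (p ^ e - 1) / (p ^ es - 1) ∣ d)
    (hmax : ∀ ei : ℕ, 1 ≤ ei → ei ∣ e → (p ^ e - 1) / (p ^ ei - 1) ∣ d →
      (p ^ e - 1) / (p ^ ei - 1) ≤ (p ^ e - 1) / (p ^ es - 1)) (c : F) :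
    c ∈ valueSpan F m n ↔ c ^ p ^ es = c := by
  subst hd
  have hsub : (valueSpan F m n : Set F) ⊆ {c | c ^ p ^ es = c} := fun c hc =>
    pow_eq_self_of_mem_valueSpan hp.one_lt hF (by omega) hesdvd
      (hqs.trans (Nat.gcd_dvd_right _ _)) hc
  obtain ⟨e', he'e, he'0, hdvd, hcard⟩ := exists_ncard_valueSpan_eq (m := m) (n := n) hp hF
  have hq : p ^ e - 1 ≠ 0 := by
    have := hF ▸ Fintype.one_lt_card (α := F)
    omega
  have hle : p ^ es - 1 ≤ p ^ e' - 1 := Nat.le_of_div_le_div hq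
    (Nat.pow_sub_one_dvd_pow_sub_one p he'e) (Nat.pow_sub_one_dvd_pow_sub_one p hesdvd)
    (hmax e' (by omega) he'e hdvd)
  have hfix := ncard_setOf_pow_eq_self_le (F := F) (Nat.one_lt_pow (by omega : es ≠ 0) hp.one_lt)
  have hcount : {c : F | c ^ p ^ es = c}.ncard ≤ (valueSpan F m n : Set F).ncard := by
    rw [hcard]
    exact hfix.trans ((Nat.sub_le_sub_iff_right (Nat.one_le_pow e' p hp.pos)).1 hle)
  exact Set.ext_iff.1 (Set.eq_of_subset_of_ncard_le hsub hcount) c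

end FiniteField

end MonomialDigraph

theorem stmt_17_general {p e : ℕ} (hp : p.Prime)
    {F : Type*} [Field F] [Fintype F]
    (hF : Fintype.card F = p ^ e)
    (m n : ℕ) (hm1 : 1 ≤ m) (hn1 : 1 ≤ n)
    (d : ℕ) (hd : d = Nat.gcd (p ^ e - 1) (Nat.gcd m n))
    (es : ℕ) (hes1 : 1 ≤ es) (hesdvd : es ∣ e)
    (hqs : (p ^ e - 1) / (p ^ es - 1) ∣ d)
    (hmax : ∀ ei : ℕ, 1 ≤ ei → ei ∣ e → (p ^ e - 1) / (p ^ ei - 1) ∣ d →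
      (p ^ e - 1) / (p ^ ei - 1) ≤ (p ^ e - 1) / (p ^ es - 1)) :
    (∀ u v : F,
      {z : F × F |
          ReflTransGen (fun z w : F × F => z.2 + w.2 = z.1 ^ m * w.1 ^ n) (u, v) z ∧
          ReflTransGen (fun z w : F × F => z.2 + w.2 = z.1 ^ m * w.1 ^ n) z (u, v)} =
        {z : F × F | ∃ x c : F, c ^ p ^ es = c ∧ z = (x, v + c)} ∪
        {z : F × F | ∃ x c : F, c ^ p ^ es = c ∧ z = (x, -v + c)}) ∧
    ((∀ z w : F × F,
        ReflTransGen (fun z w : F × F => z.2 + w.2 = z.1 ^ m * w.1 ^ n) z w) ↔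
      (p ^ e - 1) / (p ^ es - 1) = 1) ∧
    ((p ^ e - 1) / (p ^ es - 1) = 1 ↔ es = e) := by
  have : Fact p.Prime := ⟨hp⟩
  have : CharP F p := charP_of_card_eq_prime_pow hF
  have hm : m ≠ 0 := by omega
  have hn : n ≠ 0 := by omega
  have hspan : ∀ c : F, c ∈ MonomialDigraph.valueSpan F m n ↔ c ^ p ^ es = c :=
    MonomialDigraph.mem_valueSpan_iff hp hF hd hes1 hesdvd hqs hmax
  have hqs_one : (p ^ e - 1) / (p ^ es - 1) = 1 ↔ es = e :=
    Nat.pow_sub_one_div_pow_sub_one_eq_one_iff hp.one_lt (by omega) hesdvd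
  refine ⟨fun u v => ?_, ?_, hqs_one⟩
  · simp_rw [← hspan]
    exact MonomialDigraph.strongComponent_eq hm hn u v
  · exact (MonomialDigraph.reach_all_iff_forall_mem_valueSpan hm hn).trans <|
      (forall_congr' hspan).trans <|
        (forall_pow_prime_pow_eq_self_iff hp.one_lt hF (by omega) hesdvd).trans hqs_one.symm

/-- For the monomial digraph `D(q;m,n)` with `d = gcd(q-1,m,n)` and
`q_s = (q-1)/(p^{e_s}-1)` the largest `q_i` dividing `d`, the strong component of a
vertex `(u,v)` is `{(x, v + c) : x ∈ F_q, c ∈ K} ∪ {(x, -v + c) : x ∈ F_q, c ∈ K}`,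
where `K` is the subfield with `p^{e_s}` elements; in particular `D(q;m,n)` is strong
iff `q_s = 1`, equivalently `e_s = e`. -/
theorem stmt_17 {p e : ℕ} (hp : p.Prime) (he : 1 ≤ e)
    {F : Type*} [Field F] [Fintype F]
    (hF : Fintype.card F = p ^ e)
    (m n : ℕ) (hm1 : 1 ≤ m) (hm2 : m ≤ p ^ e - 1) (hn1 : 1 ≤ n) (hn2 : n ≤ p ^ e - 1)
    (d : ℕ) (hd : d = Nat.gcd (p ^ e - 1) (Nat.gcd m n))
    (es : ℕ) (hes1 : 1 ≤ es) (hesdvd : es ∣ e)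
    (hqs : (p ^ e - 1) / (p ^ es - 1) ∣ d)
    (hmax : ∀ ei : ℕ, 1 ≤ ei → ei ∣ e → (p ^ e - 1) / (p ^ ei - 1) ∣ d →
      (p ^ e - 1) / (p ^ ei - 1) ≤ (p ^ e - 1) / (p ^ es - 1)) :
    (∀ u v : F,
      {z : F × F |
          ReflTransGen (fun z w : F × F => z.2 + w.2 = z.1 ^ m * w.1 ^ n) (u, v) z ∧
          ReflTransGen (fun z w : F × F => z.2 + w.2 = z.1 ^ m * w.1 ^ n) z (u, v)} =
        {z : F × F | ∃ x c : F, c ^ p ^ es = c ∧ z = (x, v + c)} ∪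
        {z : F × F | ∃ x c : F, c ^ p ^ es = c ∧ z = (x, -v + c)}) ∧
    ((∀ z w : F × F,
        ReflTransGen (fun z w : F × F => z.2 + w.2 = z.1 ^ m * w.1 ^ n) z w) ↔
      (p ^ e - 1) / (p ^ es - 1) = 1) ∧
    ((p ^ e - 1) / (p ^ es - 1) = 1 ↔ es = e) :=
  stmt_17_general hp hF m n hm1 hn1 d hd es hes1 hesdvd hqs hmax
end

section
/- Let p = 2, e ≥ 1, q = 2^e, and 1 ≤ m, n ≤ q-1; let d = gcd(q-1, m, n), and let e_s be the positive divisor of e such that q_s = (q-1)/(2^{e_s}-1) is the largest among the numbers q_i = (q-1)/(2^{e_i}-1) (over positive divisors e_i of e) dividing d. Then the monomial digraph D(q;m,n) has exactly 2^{e-e_s} strong components, all pairwise isomorphic, each of order 2^{e+e_s}. -/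
open Relation

/-!
In characteristic 2 an arc `z → w` says `z.2 + w.2 = z.1 ^ m * w.1 ^ n`, and detours through
vertices with first coordinate `0` let a walk add any sum of values `x ^ m * y ^ n` to the second
coordinate. So `w` is reachable from `z` iff `z.2 + w.2` lies in the additive closure `A` of these
values, which is the subring they generate; the strong components are the sets `F × (c + A)`, and
translating the second coordinate maps one isomorphically onto another.

`A` is a subfield `𝔽_{2^k}` with `k ∣ e`. Since `q_s` divides `m` and `n`, every `x ^ m * y ^ n`
is fixed by `x ↦ x ^ 2 ^ e_s`, whence `k ≤ e_s`. Conversely `g ^ m, g ^ n ∈ A` for a generator `g`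
of `Fˣ` forces `q - 1 ∣ d (2 ^ k - 1)`, i.e. `(q - 1) / (2 ^ k - 1) ∣ d`, and maximality of `q_s`
gives `e_s ≤ k`.
-/

section MonomialDigraph

variable {R : Type*} [CommRing R]

def monomialArc (m n : ℕ) (z w : R × R) : Prop := z.2 + w.2 = z.1 ^ m * w.1 ^ n

def monomialValues (m n : ℕ) (M : Type*) [CommMonoid M] : Submonoid M where
  carrier := {z | ∃ x y : M, x ^ m * y ^ n = z}
  one_mem' := ⟨1, 1, by simp⟩
  mul_mem' := by
    rintro _ _ ⟨x, y, rfl⟩ ⟨x', y', rfl⟩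
    exact ⟨x * x', y * y', by rw [mul_pow, mul_pow, mul_mul_mul_comm]⟩

def monomialRing (m n : ℕ) (R : Type*) [CommRing R] : Subring R :=
  Subring.closure (monomialValues m n R)

variable {m n : ℕ}

lemma pow_mul_pow_mem_monomialRing (x y : R) : x ^ m * y ^ n ∈ monomialRing m n R :=
  Subring.subset_closure ⟨x, y, rfl⟩

def componentLabel (m n : ℕ) (z : R × R) : R ⧸ (monomialRing m n R).toAddSubgroup := z.2

lemma componentLabel_surjective : Function.Surjective (componentLabel (R := R) m n) :=
  QuotientAddGroup.mk_surjective.comp Prod.snd_surjective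

lemma preimage_singleton_componentLabel_injective :
    Function.Injective fun c => componentLabel (R := R) m n ⁻¹' {c} :=
  (Set.preimage_injective.mpr componentLabel_surjective).comp Set.singleton_injective

lemma card_preimage_componentLabel (c : R ⧸ (monomialRing m n R).toAddSubgroup) :
    Nat.card (componentLabel m n ⁻¹' {c}) = Nat.card R * Nat.card (monomialRing m n R) := by
  have hfiber : componentLabel m n ⁻¹' {c} = Set.univ ×ˢ (QuotientAddGroup.mk ⁻¹' {c}) := by
    rw [Set.univ_prod]; rfl
  rw [hfiber, Nat.card_congr (Equiv.Set.prod _ _), Nat.card_prod, Nat.card_univ,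
    Nat.card_congr (QuotientAddGroup.preimageMkEquivAddSubgroupProdSet _ _), Nat.card_prod,
    Nat.card_unique (α := ({c} : Set _)), mul_one]
  rfl

variable [CharP R 2]

lemma reflTransGen_monomialArc_of_snd_eq (hm : m ≠ 0) (hn : n ≠ 0) {z w : R × R}
    (h : z.2 = w.2) : ReflTransGen (monomialArc m n) z w := by
  have hz : monomialArc m n z (0, z.2) := by
    simp [monomialArc, zero_pow hn, CharTwo.add_self_eq_zero]
  have hw : monomialArc m n (0, z.2) w := by
    simp [monomialArc, zero_pow hm, h, CharTwo.add_self_eq_zero]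
  exact (ReflTransGen.single hz).tail hw

lemma reflTransGen_monomialArc_iff (hm : m ≠ 0) (hn : n ≠ 0) (z w : R × R) :
    ReflTransGen (monomialArc m n) z w ↔ z.2 + w.2 ∈ monomialRing m n R := by
  constructor
  · intro h
    induction h with
    | refl => simp [CharTwo.add_self_eq_zero]
    | @tail u v _ huv ih =>
      have hsplit : z.2 + v.2 = (z.2 + u.2) + (u.2 + v.2) := by
        linear_combination -(CharTwo.add_self_eq_zero u.2)
      rw [hsplit, huv]
      exact add_mem ih (pow_mul_pow_mem_monomialRing _ _)
  · intro h
    rw [monomialRing, Subring.mem_closure_iff, Submonoid.closure_eq] at h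
    suffices ∀ s ∈ AddSubgroup.closure (monomialValues m n R : Set R),
        ∀ z w : R × R, z.2 + w.2 = s → ReflTransGen (monomialArc m n) z w from this _ h z w rfl
    intro s hs
    induction hs using AddSubgroup.closure_induction with
    | mem s hs =>
      obtain ⟨x, y, rfl⟩ := hs
      intro z w hzw
      exact ((reflTransGen_monomialArc_of_snd_eq hm hn (z := z) (w := (x, z.2)) rfl).tail
        (show monomialArc m n (x, z.2) (y, w.2) from hzw)).trans
        (reflTransGen_monomialArc_of_snd_eq hm hn (z := (y, w.2)) (w := w) rfl)
    | zero =>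
      intro z w hzw
      exact reflTransGen_monomialArc_of_snd_eq hm hn
        (by linear_combination hzw - CharTwo.add_self_eq_zero w.2)
    | add s t _ _ ihs iht =>
      intro z w hzw
      exact (ihs z (0, z.2 + s) (by linear_combination CharTwo.add_self_eq_zero z.2)).trans
        (iht _ w (by linear_combination hzw + CharTwo.add_self_eq_zero s))
    | neg s _ ih =>
      simpa only [CharTwo.neg_eq] using ih

lemma setOf_mutually_reachable_eq (hm : m ≠ 0) (hn : n ≠ 0) (z : R × R) :
    {w | ReflTransGen (monomialArc m n) z w ∧ ReflTransGen (monomialArc m n) w z} =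
      componentLabel m n ⁻¹' {componentLabel m n z} := by
  ext w
  simp only [Set.mem_ofPred_eq, Set.mem_preimage, Set.mem_singleton_iff, componentLabel,
    reflTransGen_monomialArc_iff hm hn, QuotientAddGroup.eq, CharTwo.neg_eq, add_comm w.2,
    and_self, Subring.mem_toAddSubgroup]

lemma setOf_strongComponents_eq (hm : m ≠ 0) (hn : n ≠ 0) :
    {S | ∃ z : R × R, S =
      {w | ReflTransGen (monomialArc m n) z w ∧ ReflTransGen (monomialArc m n) w z}} =
      Set.range fun c => componentLabel m n ⁻¹' {c} := by
  ext S
  simp only [setOf_mutually_reachable_eq (R := R) hm hn, Set.mem_ofPred_eq, Set.mem_range,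
    eq_comm (a := S)]
  exact (componentLabel_surjective.exists (p := fun c => componentLabel m n ⁻¹' {c} = S)).symm

lemma monomialArc_add_snd (δ : R) (z w : R × R) :
    monomialArc m n (z + (0, δ)) (w + (0, δ)) ↔ monomialArc m n z w := by
  have h : z.2 + δ + (w.2 + δ) = z.2 + w.2 := by
    linear_combination CharTwo.add_self_eq_zero δ
  simp only [monomialArc, Prod.fst_add, Prod.snd_add, add_zero, h]

lemma exists_arc_equiv_preimage_componentLabel (c c' : R ⧸ (monomialRing m n R).toAddSubgroup) :
    ∃ ψ : componentLabel m n ⁻¹' {c} ≃ componentLabel m n ⁻¹' {c'},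
      ∀ z w : componentLabel m n ⁻¹' {c},
        monomialArc m n (z : R × R) w ↔ monomialArc m n (ψ z : R × R) (ψ w) := by
  obtain ⟨δ, hδ⟩ := QuotientAddGroup.mk_surjective (c' - c)
  refine ⟨(Equiv.addRight ((0, δ) : R × R)).subtypeEquiv fun z => ?_,
    fun z w => (monomialArc_add_snd δ z w).symm⟩
  change (z.2 : R ⧸ _) = c ↔ ((z.2 + δ : R) : R ⧸ _) = c'
  rw [QuotientAddGroup.mk_add, hδ, ← eq_sub_iff_add_eq, sub_sub_self]

end MonomialDigraph

section FiniteField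

variable {F : Type*} [Field F] [Fintype F]

lemma Subring.forall_pow_eq_one_iff (S : Subring F) (t : ℕ) :
    (∀ x ∈ S, x ≠ 0 → x ^ t = 1) ↔ Nat.card S - 1 ∣ t := by
  classical
  let _ : Field S := Fintype.fieldOfDomain S
  rw [Nat.card_eq_fintype_card, ← FiniteField.forall_pow_eq_one_iff]
  constructor
  · intro h u
    ext
    exact h _ (u : S).2 (by simp)
  · intro h x hx hx0
    have hu := congrArg Units.val (h (Units.mk0 ⟨x, hx⟩ (by simpa using hx0)))
    rw [Units.val_pow_eq_pow_val, Units.val_mk0, Units.val_one] at hu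
    exact congrArg Subtype.val hu

lemma Subring.exists_card_eq_pow_of_card_eq_pow {p e : ℕ} [Fact p.Prime] [CharP F p]
    (hF : Fintype.card F = p ^ e) (S : Subring F) :
    ∃ k, 0 < k ∧ k ∣ e ∧ Nat.card S = p ^ k := by
  classical
  let _ : Field S := Fintype.fieldOfDomain S
  obtain ⟨k, -, hk⟩ := FiniteField.card S p
  refine ⟨k, k.pos, ⟨Module.finrank S F, Nat.pow_right_injective (Fact.out : p.Prime).two_le ?_⟩,
    by rw [Nat.card_eq_fintype_card, hk]⟩
  simp only [pow_mul, ← hk, ← hF]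
  exact Module.card_eq_pow_finrank

lemma FiniteField.pow_pow_eq_self_of_dvd {m k : ℕ} (hk : k ≠ 0)
    (h : Fintype.card F - 1 ∣ m * (k - 1)) (x : F) : (x ^ m) ^ k = x ^ m := by
  rcases eq_or_ne x 0 with rfl | hx
  · rcases eq_or_ne m 0 with rfl | hm
    · simp
    · simp [zero_pow hm, zero_pow hk]
  · obtain ⟨t, ht⟩ := h
    rw [← pow_sub_one_mul hk, ← pow_mul, ht, pow_mul, FiniteField.pow_card_sub_one_eq_one x hx,
      one_pow, one_mul]

variable {m n : ℕ}

lemma pow_char_pow_eq_self_of_mem_monomialRing {p s : ℕ} [Fact p.Prime] [CharP F p]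
    (hm : Fintype.card F - 1 ∣ m * (p ^ s - 1)) (hn : Fintype.card F - 1 ∣ n * (p ^ s - 1))
    {x : F} (hx : x ∈ monomialRing m n F) : x ^ p ^ s = x := by
  have hps : p ^ s ≠ 0 := pow_ne_zero s (Fact.out : p.Prime).ne_zero
  have hle : monomialRing m n F ≤ (iterateFrobenius F p s).eqLocus (RingHom.id F) := by
    refine Subring.closure_le.mpr ?_
    rintro _ ⟨x, y, rfl⟩
    change iterateFrobenius F p s (x ^ m * y ^ n) = x ^ m * y ^ n
    rw [iterateFrobenius_def, mul_pow, FiniteField.pow_pow_eq_self_of_dvd hps hm,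
      FiniteField.pow_pow_eq_self_of_dvd hps hn]
  exact hle hx

lemma card_monomialRing_sub_one_dvd {p s : ℕ} [Fact p.Prime] [CharP F p]
    (hm : Fintype.card F - 1 ∣ m * (p ^ s - 1)) (hn : Fintype.card F - 1 ∣ n * (p ^ s - 1)) :
    Nat.card (monomialRing m n F) - 1 ∣ p ^ s - 1 := by
  rw [← Subring.forall_pow_eq_one_iff]
  intro x hx hx0
  have hfix := pow_char_pow_eq_self_of_mem_monomialRing hm hn hx
  rwa [← pow_sub_one_mul (pow_ne_zero s (Fact.out : p.Prime).ne_zero), mul_eq_right₀ hx0] at hfix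

lemma card_sub_one_dvd_gcd_mul_card_monomialRing_sub_one :
    Fintype.card F - 1 ∣
      Nat.gcd (Fintype.card F - 1) (Nat.gcd m n) * (Nat.card (monomialRing m n F) - 1) := by
  set t := Nat.card (monomialRing m n F) - 1
  have hpow : ∀ j, (∀ x : F, x ^ j ∈ monomialRing m n F) → Fintype.card F - 1 ∣ j * t := by
    intro j hj
    rw [← FiniteField.forall_pow_eq_one_iff]
    intro u
    ext
    push_cast
    rw [pow_mul]
    exact ((monomialRing m n F).forall_pow_eq_one_iff t).mpr dvd_rfl _ (hj u) (by simp)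
  rw [← Nat.gcd_mul_right, ← Nat.gcd_mul_right]
  refine Nat.dvd_gcd (dvd_mul_right _ _) (Nat.dvd_gcd (hpow m fun x => ?_) (hpow n fun x => ?_))
  · simpa using pow_mul_pow_mem_monomialRing (m := m) (n := n) x 1
  · simpa using pow_mul_pow_mem_monomialRing (m := m) (n := n) 1 x

theorem card_monomialRing_eq {p e es d : ℕ} [Fact p.Prime] [CharP F p]
    (hF : Fintype.card F = p ^ e) (hd : d = Nat.gcd (p ^ e - 1) (Nat.gcd m n))
    (hes1 : 1 ≤ es) (hesdvd : es ∣ e) (hqs : (p ^ e - 1) / (p ^ es - 1) ∣ d)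
    (hmax : ∀ ei : ℕ, 1 ≤ ei → ei ∣ e → (p ^ e - 1) / (p ^ ei - 1) ∣ d →
      (p ^ e - 1) / (p ^ ei - 1) ≤ (p ^ e - 1) / (p ^ es - 1)) :
    Nat.card (monomialRing m n F) = p ^ es := by
  have hp : 1 < p := (Fact.out : p.Prime).one_lt
  have hq : 0 < p ^ e - 1 := by have := Fintype.one_lt_card (α := F); omega
  have hpos : ∀ k, 0 < k → 0 < p ^ k - 1 := fun k hk => by
    have := Nat.one_lt_pow hk.ne' hp; omega
  have hpow_le : ∀ {a b}, p ^ a - 1 ≤ p ^ b - 1 → p ^ a ≤ p ^ b := fun {a b} h => by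
    have := Nat.one_le_pow a p (by omega); have := Nat.one_le_pow b p (by omega); omega
  obtain ⟨k, hk0, hke, hk⟩ := (monomialRing m n F).exists_card_eq_pow_of_card_eq_pow hF
  rw [hk]
  apply le_antisymm
  · have hqs_mul : p ^ e - 1 = (p ^ e - 1) / (p ^ es - 1) * (p ^ es - 1) :=
      (Nat.div_mul_cancel (Nat.pow_sub_one_dvd_pow_sub_one p hesdvd)).symm
    have hdm : d ∣ m := hd ▸ (Nat.gcd_dvd_right _ _).trans (Nat.gcd_dvd_left m n)
    have hdn : d ∣ n := hd ▸ (Nat.gcd_dvd_right _ _).trans (Nat.gcd_dvd_right m n)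
    have hdvd := card_monomialRing_sub_one_dvd (F := F) (m := m) (n := n) (p := p) (s := es)
      (by rw [hF, hqs_mul]; exact Nat.mul_dvd_mul_right (hqs.trans hdm) _)
      (by rw [hF, hqs_mul]; exact Nat.mul_dvd_mul_right (hqs.trans hdn) _)
    rw [hk] at hdvd
    exact hpow_le (Nat.le_of_dvd (hpos es hes1) hdvd)
  · have hke' : p ^ k - 1 ∣ p ^ e - 1 := Nat.pow_sub_one_dvd_pow_sub_one p hke
    have hdvd := card_sub_one_dvd_gcd_mul_card_monomialRing_sub_one (F := F) (m := m) (n := n)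
    rw [hk, hF, ← hd] at hdvd
    have hqk : (p ^ e - 1) / (p ^ k - 1) ∣ d :=
      (Nat.div_dvd_iff_dvd_mul hke' (hpos k hk0)).mpr (mul_comm d _ ▸ hdvd)
    have hqk_pos : 0 < (p ^ e - 1) / (p ^ k - 1) :=
      Nat.div_pos (Nat.le_of_dvd hq hke') (hpos k hk0)
    apply hpow_le
    calc p ^ es - 1 = (p ^ e - 1) / ((p ^ e - 1) / (p ^ es - 1)) :=
          (Nat.div_div_self (Nat.pow_sub_one_dvd_pow_sub_one p hesdvd) hq.ne').symm
      _ ≤ (p ^ e - 1) / ((p ^ e - 1) / (p ^ k - 1)) :=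
          Nat.div_le_div_left (hmax k hk0 hke hqk) hqk_pos
      _ = p ^ k - 1 := Nat.div_div_self hke' hq.ne'

end FiniteField

theorem stmt_19_general {e : ℕ} (he : 1 ≤ e)
    {F : Type*} [Field F] [Fintype F]
    (hF : Fintype.card F = 2 ^ e)
    (m n : ℕ) (hm1 : 1 ≤ m) (hn1 : 1 ≤ n)
    (d : ℕ) (hd : d = Nat.gcd (2 ^ e - 1) (Nat.gcd m n))
    (es : ℕ) (hes1 : 1 ≤ es) (hesdvd : es ∣ e)
    (hqs : (2 ^ e - 1) / (2 ^ es - 1) ∣ d)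
    (hmax : ∀ ei : ℕ, 1 ≤ ei → ei ∣ e → (2 ^ e - 1) / (2 ^ ei - 1) ∣ d →
      (2 ^ e - 1) / (2 ^ ei - 1) ≤ (2 ^ e - 1) / (2 ^ es - 1))
    (comps : Set (Set (F × F)))
    (hcomps : comps = {S | ∃ z : F × F,
      S = {w | ReflTransGen (fun z w : F × F => z.2 + w.2 = z.1 ^ m * w.1 ^ n) z w ∧
               ReflTransGen (fun z w : F × F => z.2 + w.2 = z.1 ^ m * w.1 ^ n) w z}}) :
    comps.ncard = 2 ^ (e - es) ∧
    (∀ S ∈ comps, S.ncard = 2 ^ (e + es)) ∧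
    ∀ S ∈ comps, ∀ T ∈ comps,
      ∃ ψ : S ≃ T, ∀ z w : S,
        ((z : F × F).2 + (w : F × F).2 = (z : F × F).1 ^ m * (w : F × F).1 ^ n) ↔
        ((ψ z : F × F).2 + (ψ w : F × F).2 = (ψ z : F × F).1 ^ m * (ψ w : F × F).1 ^ n) := by
  have : CharP F 2 := charP_of_card_eq_prime_pow hF
  have hring : Nat.card (monomialRing m n F) = 2 ^ es :=
    card_monomialRing_eq hF hd hes1 hesdvd hqs hmax
  obtain rfl : comps = Set.range fun c => componentLabel m n ⁻¹' {c} :=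
    hcomps.trans (setOf_strongComponents_eq (by omega) (by omega))
  refine ⟨?_, ?_, ?_⟩
  · have hsplit := AddSubgroup.card_eq_card_quotient_mul_card_addSubgroup
      (monomialRing m n F).toAddSubgroup
    rw [Nat.card_eq_fintype_card, hF] at hsplit
    rw [Set.ncard_range_of_injective preimage_singleton_componentLabel_injective,
      ← Nat.pow_div (Nat.le_of_dvd he hesdvd) two_pos, ← hring]
    exact (Nat.div_eq_of_eq_mul_left Nat.card_pos hsplit).symm
  · rintro _ ⟨c, rfl⟩
    rw [← Nat.card_coe_set_eq, card_preimage_componentLabel, Nat.card_eq_fintype_card, hF, hring,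
      pow_add]
  · rintro _ ⟨c, rfl⟩ _ ⟨c', rfl⟩
    exact exists_arc_equiv_preimage_componentLabel c c'

/-- For `q = 2^e`, the monomial digraph `D(q;m,n)` has exactly
`2^{e-e_s}` strong components, all pairwise isomorphic, each of order `2^{e+e_s}`. -/
theorem stmt_19 {e : ℕ} (he : 1 ≤ e)
    {F : Type*} [Field F] [Fintype F]
    (hF : Fintype.card F = 2 ^ e)
    (m n : ℕ) (hm1 : 1 ≤ m) (hm2 : m ≤ 2 ^ e - 1) (hn1 : 1 ≤ n) (hn2 : n ≤ 2 ^ e - 1)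
    (d : ℕ) (hd : d = Nat.gcd (2 ^ e - 1) (Nat.gcd m n))
    (es : ℕ) (hes1 : 1 ≤ es) (hesdvd : es ∣ e)
    (hqs : (2 ^ e - 1) / (2 ^ es - 1) ∣ d)
    (hmax : ∀ ei : ℕ, 1 ≤ ei → ei ∣ e → (2 ^ e - 1) / (2 ^ ei - 1) ∣ d →
      (2 ^ e - 1) / (2 ^ ei - 1) ≤ (2 ^ e - 1) / (2 ^ es - 1))
    (comps : Set (Set (F × F)))
    (hcomps : comps = {S | ∃ z : F × F,
      S = {w | ReflTransGen (fun z w : F × F => z.2 + w.2 = z.1 ^ m * w.1 ^ n) z w ∧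
               ReflTransGen (fun z w : F × F => z.2 + w.2 = z.1 ^ m * w.1 ^ n) w z}}) :
    comps.ncard = 2 ^ (e - es) ∧
    (∀ S ∈ comps, S.ncard = 2 ^ (e + es)) ∧
    ∀ S ∈ comps, ∀ T ∈ comps,
      ∃ ψ : S ≃ T, ∀ z w : S,
        ((z : F × F).2 + (w : F × F).2 = (z : F × F).1 ^ m * (w : F × F).1 ^ n) ↔
        ((ψ z : F × F).2 + (ψ w : F × F).2 = (ψ z : F × F).1 ^ m * (ψ w : F × F).1 ^ n) :=
  stmt_19_general he hF m n hm1 hn1 d hd es hes1 hesdvd hqs hmax comps hcomps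
end
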